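/- arXiv:2409.02637 — 10 statements merged into one kernel-verified Lean document; each statement's English description precedes it below -/
import Mathlib

section
/- Moment generating function gap (Lemma 1): for every k ∈ {1,…,K} and every λ ≥ 0, almost surely E[e^{λU^k} | σ(D^k)] ≤ e^{(k/(2ε))λ²} · E[e^{λV^k} | σ(D^k)]. -/
/-!
Conditionally on the whole demand trajectory `D⁰, …, D^K`, the sum `U^k` only counts the
Bernoulli variables `N_s^ℓ(p)` with `s ≤ D^ℓ` and `p = D^{ℓ-1}`: at most `kT` of them, independent
of the trajectory, and `V^k` is the sum of their means. Hoeffding's lemma bounds the moment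
generating function of each centred Bernoulli variable by `exp (λ²/8)`, so on every trajectory
atom `∫ exp (λ U^k) ≤ exp (kT λ²/8) ∫ exp (λ V^k)`. Summing atoms gives the same inequality on
every event of `σ(D^k)`, hence for the conditional expectations. Finally `Tε ≤ 1`, since the `T`
transition probabilities out of the almost sure state `D⁰` are all at least `ε`, so
`kT/8 ≤ k/(2ε)`.
-/

open MeasureTheory Finset

open ProbabilityTheory Real

section

variable {Ω ι β : Type*} {m mΩ : MeasurableSpace Ω} {μ : Measure Ω}

lemma one_add_mul_measureReal_le_exp [IsProbabilityMeasure μ] {E : Set Ω} (hE : MeasurableSet E)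
    (t : ℝ) : 1 + (exp t - 1) * μ.real E ≤ exp (t * μ.real E + t ^ 2 / 8) := by
  set X : Ω → ℝ := E.indicator 1
  have hX : ∀ ω, X ω ∈ Set.Icc (0 : ℝ) 1 := fun ω => by
    by_cases h : ω ∈ E <;> simp [X, h]
  have hXint : Integrable X μ := (integrable_const (1 : ℝ)).indicator hE
  have hmean : μ[X] = μ.real E := integral_indicator_one hE
  have hmgf : mgf X μ t = 1 + (exp t - 1) * μ.real E := by
    have : (fun ω => exp (t * X ω)) = fun ω => 1 + (exp t - 1) * X ω := by
      ext ω; by_cases h : ω ∈ E <;> simp [X, h]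
    rw [mgf, this, integral_add (integrable_const _) (hXint.const_mul _), integral_const_mul, hmean]
    simp
  have hoeffding := (hasSubgaussianMGF_of_mem_Icc hXint.aemeasurable (ae_of_all _ hX)).mgf_le t
  simp_rw [sub_eq_add_neg] at hoeffding
  rw [mgf_add_const, hmean, hmgf] at hoeffding
  have hc : (((‖(1 : ℝ) + -0‖₊ / 2) ^ 2 : NNReal) : ℝ) = 1 / 4 := by norm_num
  rw [hc, mul_neg, exp_neg, ← div_eq_mul_inv, div_le_iff₀ (exp_pos _), ← exp_add] at hoeffding
  exact hoeffding.trans_eq (congrArg exp (by ring))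

lemma setIntegral_prod_one_add_mul_indicator [IsFiniteMeasure μ] {A : Set Ω}
    {S : Finset ι} {E : ι → Set Ω} (hE : ∀ i, MeasurableSet (E i))
    (hind : ∀ R ⊆ S, μ (A ∩ ⋂ i ∈ R, E i) = μ A * ∏ i ∈ R, μ (E i)) (c : ℝ) :
    ∫ ω in A, ∏ i ∈ S, (1 + c * (E i).indicator 1 ω) ∂μ
      = μ.real A * ∏ i ∈ S, (1 + c * μ.real (E i)) := by
  have hterm : ∀ R : Finset ι, ∀ ω, ∏ i ∈ R, c * (E i).indicator 1 ω
      = c ^ #R * (⋂ i ∈ R, E i).indicator 1 ω := fun R ω => by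
    rw [prod_mul_distrib, prod_const, prod_indicator_const_apply, one_pow]
  have hmeas : ∀ R : Finset ι, MeasurableSet (⋂ i ∈ R, E i) := fun R =>
    .biInter R.countable_toSet fun i _ => hE i
  have hint : ∀ R : Finset ι, Integrable ((⋂ i ∈ R, E i).indicator (1 : Ω → ℝ)) μ := fun R =>
    (integrable_const (1 : ℝ)).indicator (hmeas R)
  simp_rw [prod_one_add, hterm]
  rw [integral_finsetSum _ fun R _ => ((hint R).const_mul _).integrableOn, mul_sum]
  refine sum_congr rfl fun R hR => ?_
  rw [integral_const_mul, integral_indicator_one (hmeas R), measureReal_restrict_apply (hmeas R),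
    Set.inter_comm, measureReal_def, hind R (mem_powerset.1 hR), ENNReal.toReal_mul,
    ENNReal.toReal_prod, prod_mul_distrib, prod_const]
  simp only [measureReal_def]
  ring

lemma setIntegral_exp_mul_sum_indicator_le [IsProbabilityMeasure μ] {A : Set Ω} {S : Finset ι}
    {E : ι → Set Ω} (hE : ∀ i, MeasurableSet (E i))
    (hind : ∀ R ⊆ S, μ (A ∩ ⋂ i ∈ R, E i) = μ A * ∏ i ∈ R, μ (E i)) (t : ℝ) :
    ∫ ω in A, exp (t * ∑ i ∈ S, (E i).indicator 1 ω) ∂μ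
      ≤ μ.real A * exp (t * ∑ i ∈ S, μ.real (E i) + #S * t ^ 2 / 8) := by
  have hbernoulli : ∀ ω, exp (t * ∑ i ∈ S, (E i).indicator 1 ω)
      = ∏ i ∈ S, (1 + (exp t - 1) * (E i).indicator 1 ω) := fun ω => by
    rw [mul_sum, exp_sum]
    refine prod_congr rfl fun i _ => ?_
    by_cases h : ω ∈ E i <;> simp [h]
  simp_rw [hbernoulli]
  rw [setIntegral_prod_one_add_mul_indicator hE hind]
  refine mul_le_mul_of_nonneg_left ?_ measureReal_nonneg
  calc ∏ i ∈ S, (1 + (exp t - 1) * μ.real (E i))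
      ≤ ∏ i ∈ S, exp (t * μ.real (E i) + t ^ 2 / 8) := by
        refine prod_le_prod (fun i _ => ?_) fun i _ => one_add_mul_measureReal_le_exp (hE i) t
        have := exp_pos t
        nlinarith [measureReal_nonneg (μ := μ) (s := E i), measureReal_le_one (μ := μ) (s := E i)]
    _ = exp (t * ∑ i ∈ S, μ.real (E i) + #S * t ^ 2 / 8) := by
        rw [← exp_sum, sum_add_distrib, mul_sum, sum_const, nsmul_eq_mul, mul_div_assoc]

lemma setIntegral_preimage_le_of_forall_fiber [MeasurableSpace β] [Countable β]
    [MeasurableSingletonClass β] {Y : Ω → β} (hY : Measurable Y) {f g : Ω → ℝ}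
    (hf : Integrable f μ) (hg : Integrable g μ)
    (h : ∀ b, ∫ ω in Y ⁻¹' {b}, f ω ∂μ ≤ ∫ ω in Y ⁻¹' {b}, g ω ∂μ) (B : Set β) :
    ∫ ω in Y ⁻¹' B, f ω ∂μ ≤ ∫ ω in Y ⁻¹' B, g ω ∂μ := by
  have hB : Y ⁻¹' B = ⋃ b : B, Y ⁻¹' {(b : β)} := by ext; simp
  have hmeas : ∀ b : B, MeasurableSet (Y ⁻¹' {(b : β)}) := fun b => hY (measurableSet_singleton _)
  have hdisj : Pairwise fun b b' : B => Disjoint (Y ⁻¹' {(b : β)}) (Y ⁻¹' {(b' : β)}) :=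
    fun b b' hbb' => (Set.disjoint_singleton.2 (Subtype.coe_injective.ne hbb')).preimage Y
  rw [hB]
  exact hasSum_le (fun b : B => h b) (hasSum_integral_iUnion hmeas hdisj hf.integrableOn)
    (hasSum_integral_iUnion hmeas hdisj hg.integrableOn)

lemma condExp_le_condExp_of_forall_setIntegral_le [IsFiniteMeasure μ]
    (hm : m ≤ mΩ) {f g : Ω → ℝ} (hf : Integrable f μ) (hg : Integrable g μ)
    (h : ∀ s, MeasurableSet[m] s → ∫ ω in s, f ω ∂μ ≤ ∫ ω in s, g ω ∂μ) :
    μ[f | m] ≤ᵐ[μ] μ[g | m] := by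
  refine ae_le_of_ae_le_trim (hm := hm) <| ae_le_of_forall_setIntegral_le
    (integrable_condExp.trim hm stronglyMeasurable_condExp)
    (integrable_condExp.trim hm stronglyMeasurable_condExp) fun s hs _ => ?_
  rw [← setIntegral_trim hm stronglyMeasurable_condExp hs,
    ← setIntegral_trim hm stronglyMeasurable_condExp hs, setIntegral_condExp hm hf hs,
    setIntegral_condExp hm hg hs]
  exact h s hs

lemma condExp_le_condExp_of_forall_fiber [IsFiniteMeasure μ]
    [mβ : MeasurableSpace β] [Countable β] [MeasurableSingletonClass β] {Y : Ω → β}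
    (hY : Measurable Y) (hm : m ≤ mβ.comap Y) {f g : Ω → ℝ}
    (hf : Integrable f μ) (hg : Integrable g μ)
    (h : ∀ b, ∫ ω in Y ⁻¹' {b}, f ω ∂μ ≤ ∫ ω in Y ⁻¹' {b}, g ω ∂μ) :
    μ[f | m] ≤ᵐ[μ] μ[g | m] := by
  refine condExp_le_condExp_of_forall_setIntegral_le (hm.trans hY.comap_le) hf hg fun s hs => ?_
  obtain ⟨B, -, rfl⟩ := hm s hs
  exact setIntegral_preimage_le_of_forall_fiber hY hf hg h B

lemma setIntegral_fiber_exp_mul_sum_indicator_le [IsProbabilityMeasure μ] [MeasurableSpace β]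
    [MeasurableSingletonClass β] {Y : Ω → β} (hY : Measurable Y) {S : β → Finset ι} {M : ℝ}
    (hS : ∀ b, #(S b) ≤ M) {E : ι → Set Ω} (hE : ∀ i, MeasurableSet (E i))
    (hind : ∀ b, ∀ R ⊆ S b, μ (Y ⁻¹' {b} ∩ ⋂ i ∈ R, E i) = μ (Y ⁻¹' {b}) * ∏ i ∈ R, μ (E i))
    (t : ℝ) (b : β) :
    ∫ ω in Y ⁻¹' {b}, exp (t * ∑ i ∈ S (Y ω), (E i).indicator 1 ω) ∂μ
      ≤ ∫ ω in Y ⁻¹' {b}, exp (M * t ^ 2 / 8) * exp (t * ∑ i ∈ S (Y ω), μ.real (E i)) ∂μ := by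
  have hb : MeasurableSet (Y ⁻¹' {b}) := hY (measurableSet_singleton b)
  calc ∫ ω in Y ⁻¹' {b}, exp (t * ∑ i ∈ S (Y ω), (E i).indicator 1 ω) ∂μ
      = ∫ ω in Y ⁻¹' {b}, exp (t * ∑ i ∈ S b, (E i).indicator 1 ω) ∂μ :=
        setIntegral_congr_fun hb fun ω (hω : Y ω = b) => by rw [hω]
    _ ≤ μ.real (Y ⁻¹' {b}) * exp (t * ∑ i ∈ S b, μ.real (E i) + #(S b) * t ^ 2 / 8) :=
        setIntegral_exp_mul_sum_indicator_le hE (hind b) t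
    _ ≤ μ.real (Y ⁻¹' {b}) * (exp (M * t ^ 2 / 8) * exp (t * ∑ i ∈ S b, μ.real (E i))) := by
        rw [← exp_add, add_comm (M * _ / 8)]
        gcongr
        exact hS b
    _ = ∫ ω in Y ⁻¹' {b}, exp (M * t ^ 2 / 8) * exp (t * ∑ i ∈ S (Y ω), μ.real (E i)) ∂μ := by
        rw [setIntegral_congr_fun hb (g := fun _ => exp (M * t ^ 2 / 8) *
          exp (t * ∑ i ∈ S b, μ.real (E i))) fun ω (hω : Y ω = b) => by rw [hω],
          setIntegral_const, smul_eq_mul]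

theorem condExp_exp_mul_sum_indicator_le [IsProbabilityMeasure μ] [mβ : MeasurableSpace β]
    [Countable β] [MeasurableSingletonClass β] {Y : Ω → β} (hY : Measurable Y)
    (hm : m ≤ mβ.comap Y) {S : β → Finset ι} {M : ℝ} (hS : ∀ b, #(S b) ≤ M)
    {E : ι → Set Ω} (hE : ∀ i, MeasurableSet (E i))
    (hind : ∀ b, ∀ R ⊆ S b, μ (Y ⁻¹' {b} ∩ ⋂ i ∈ R, E i) = μ (Y ⁻¹' {b}) * ∏ i ∈ R, μ (E i))
    (t : ℝ) :
    μ[fun ω => exp (t * ∑ i ∈ S (Y ω), (E i).indicator 1 ω) | m]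
      ≤ᵐ[μ] fun ω =>
        exp (M * t ^ 2 / 8) * μ[fun ω => exp (t * ∑ i ∈ S (Y ω), μ.real (E i)) | m] ω := by
  set X : Ω → ℝ := fun ω => ∑ i ∈ S (Y ω), (E i).indicator 1 ω
  set Z : Ω → ℝ := fun ω => ∑ i ∈ S (Y ω), μ.real (E i)
  have hX : ∀ ω, X ω ∈ Set.Icc 0 M := fun ω =>
    ⟨sum_nonneg fun i _ => Set.indicator_nonneg (fun _ _ => zero_le_one) ω,
      (sum_le_card_nsmul _ _ 1 fun i _ => Set.indicator_le_self' (fun _ _ => zero_le_one) ω).trans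
        (by simpa using hS (Y ω))⟩
  have hZ : ∀ ω, Z ω ∈ Set.Icc 0 M := fun ω =>
    ⟨sum_nonneg fun i _ => measureReal_nonneg,
      (sum_le_card_nsmul _ _ 1 fun i _ => measureReal_le_one).trans (by simpa using hS (Y ω))⟩
  -- `X` is measurable because it is measurable on each of the countably many fibres of `Y`.
  have hXmeas : Measurable X :=
    (measurable_from_prod_countable_left (f := fun p : Ω × β => ∑ i ∈ S p.2, (E i).indicator 1 p.1)
      fun b => Finset.measurable_sum (S b) fun i _ => measurable_one.indicator (hE i)).comp
      (measurable_id.prodMk hY)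
  have hZmeas : Measurable Z := (measurable_of_countable fun b => ∑ i ∈ S b, μ.real (E i)).comp hY
  filter_upwards [condExp_le_condExp_of_forall_fiber hY hm
    (integrable_exp_mul_of_mem_Icc hXmeas.aemeasurable (ae_of_all _ hX))
    ((integrable_exp_mul_of_mem_Icc hZmeas.aemeasurable (ae_of_all _ hZ)).const_mul _)
    (setIntegral_fiber_exp_mul_sum_indicator_le hY hS hE hind t),
    condExp_smul (μ := μ) (exp (M * t ^ 2 / 8)) (fun ω => exp (t * Z ω)) m] with ω hle hsmul
  exact hle.trans_eq hsmul

lemma natCast_eq_indicator_one {X : Ω → ℕ} (hX : ∀ ω, X ω ≤ 1) (ω : Ω) :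
    (X ω : ℝ) = {ω | X ω = 1}.indicator 1 ω := by
  rcases Nat.le_one_iff_eq_zero_or_eq_one.1 (hX ω) with h | h <;> simp [h]

lemma integral_natCast_eq_measureReal {X : Ω → ℕ} (hXm : Measurable X) (hX : ∀ ω, X ω ≤ 1) :
    ∫ ω, (X ω : ℝ) ∂μ = μ.real {ω | X ω = 1} := by
  rw [integral_congr_ae (ae_of_all _ (natCast_eq_indicator_one hX))]
  exact integral_indicator_one (hXm (measurableSet_singleton 1))

lemma card_mul_le_one_of_le_measureReal [IsProbabilityMeasure μ] {s : Finset ι} {A : ι → Set Ω}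
    (hA : ∀ i ∈ s, MeasurableSet (A i)) (hd : (s : Set ι).PairwiseDisjoint A) {ε : ℝ}
    (h : ∀ i ∈ s, ε ≤ μ.real (A i)) : #s * ε ≤ 1 :=
  calc #s * ε = ∑ _i ∈ s, ε := by simp
    _ ≤ ∑ i ∈ s, μ.real (A i) := sum_le_sum h
    _ = μ.real (⋃ i ∈ s, A i) := (measureReal_biUnion_finset hd hA).symm
    _ ≤ 1 := measureReal_le_one

lemma card_mul_le_one_of_le_transition [IsProbabilityMeasure μ] {X Y : Ω → ℕ}
    (hX : Measurable X) (hY : Measurable Y) {q : ℕ} (hq : ∀ᵐ ω ∂μ, X ω = q) {s : Finset ℕ}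
    {ε : ℝ} (h : ∀ p ∈ s, 0 < μ {ω | X ω = q} →
      ε ≤ (μ {ω | Y ω = p ∧ X ω = q}).toReal / (μ {ω | X ω = q}).toReal) :
    #s * ε ≤ 1 := by
  have hq1 : μ {ω | X ω = q} = 1 :=
    (mem_ae_iff_prob_eq_one (hX (measurableSet_singleton q))).1 hq
  refine card_mul_le_one_of_le_measureReal (μ := μ) (A := fun p => {ω | Y ω = p ∧ X ω = q})
    (fun p _ => (hY (measurableSet_singleton p)).inter (hX (measurableSet_singleton q)))
    (fun p _ p' _ hpp' => Set.disjoint_left.2 fun ω h1 h2 => hpp' (h1.1.symm.trans h2.1))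
    fun p hp => ?_
  simpa [hq1, measureReal_def] using h p hp (by simp [hq1])

end

section DemandTrajectory

variable {Ω : Type*}

-- The indices `(ℓ, s, p)`, `ℓ ≤ k`, with `Ψ_s^ℓ(p) = 1` along the demand path `d`.
def activeIndices (T k : ℕ) (d : ℕ → ℕ) : Finset (ℕ × ℕ × ℕ) :=
  {x ∈ Icc 1 k ×ˢ Icc 1 T ×ˢ Icc 1 T | x.2.1 ≤ d x.1 ∧ d (x.1 - 1) = x.2.2}

lemma activeIndices_subset (T k : ℕ) (d : ℕ → ℕ) :
    activeIndices T k d ⊆ Icc 1 k ×ˢ Icc 1 T ×ˢ Icc 1 T :=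
  filter_subset _ _

lemma mem_Icc_of_mem_activeIndices {T k K : ℕ} (hkK : k ≤ K) {d : ℕ → ℕ} {x : ℕ × ℕ × ℕ}
    (hx : x ∈ activeIndices T k d) : x.1 ∈ Icc 1 K ∧ x.2.1 ∈ Icc 1 T ∧ x.2.2 ∈ Icc 1 T := by
  have := activeIndices_subset T k d hx
  simp only [mem_product, mem_Icc] at this ⊢
  omega

lemma sum_ite_mul_eq_sum_activeIndices (T k : ℕ) (d : ℕ → ℕ) (w : ℕ → ℕ → ℕ → ℝ) :
    ∑ l ∈ Icc 1 k, ∑ s ∈ Icc 1 T, ∑ p ∈ Icc 1 T,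
      (if s ≤ d l ∧ d (l - 1) = p then (1 : ℝ) else 0) * w l s p
      = ∑ x ∈ activeIndices T k d, w x.1 x.2.1 x.2.2 := by
  simp only [activeIndices, sum_filter, sum_product, ite_mul, one_mul, zero_mul]

lemma activeIndices_congr {T k : ℕ} {d d' : ℕ → ℕ} (h : ∀ j ≤ k, d j = d' j) :
    activeIndices T k d = activeIndices T k d' := by
  refine filter_congr fun x hx => ?_
  have hx1 : x.1 ≤ k := (mem_Icc.1 (mem_product.1 hx).1).2
  rw [h x.1 hx1, h (x.1 - 1) (by omega)]

-- At most one active `p` for each `(ℓ, s)`, namely `p = d (ℓ - 1)`.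
lemma card_activeIndices_le (T k : ℕ) (d : ℕ → ℕ) : #(activeIndices T k d) ≤ k * T := by
  refine le_of_le_of_eq (b := #(Icc 1 k ×ˢ Icc 1 T)) ?_ (by simp)
  refine card_le_card_of_injOn (fun x => (x.1, x.2.1)) (fun x hx => ?_) fun x hx y hy hxy => ?_
  · obtain ⟨h1, h2⟩ := mem_product.1 (activeIndices_subset T k d hx)
    exact mem_product.2 ⟨h1, (mem_product.1 h2).1⟩
  · simp only [activeIndices, mem_coe, mem_filter] at hx hy
    simp only [Prod.mk.injEq] at hxy
    ext <;> simp only [hxy, ← hx.2.2, ← hy.2.2]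

def trajectory (D : ℕ → Ω → ℕ) (K : ℕ) (ω : Ω) : Fin (K + 1) → ℕ := fun i => D i ω

lemma measurable_trajectory [MeasurableSpace Ω] {D : ℕ → Ω → ℕ} (hD : ∀ k, Measurable (D k))
    (K : ℕ) : Measurable (trajectory D K) :=
  measurable_pi_lambda _ fun i => hD i

lemma trajectory_ofNat (D : ℕ → Ω → ℕ) {K j : ℕ} (hj : j ≤ K) (ω : Ω) :
    trajectory D K ω (Fin.ofNat (K + 1) j) = D j ω := by
  simp [trajectory, Fin.ofNat, Nat.mod_eq_of_lt (Nat.lt_succ_of_le hj)]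

lemma trajectory_preimage_singleton (D : ℕ → Ω → ℕ) (K : ℕ) (y : Fin (K + 1) → ℕ) :
    trajectory D K ⁻¹' {y} = {ω | ∀ j ≤ K, D j ω = y (Fin.ofNat (K + 1) j)} := by
  ext ω
  simp only [Set.mem_preimage, Set.mem_singleton_iff, Set.mem_ofPred_eq]
  refine ⟨fun h j hj => h ▸ (trajectory_ofNat D hj ω).symm, fun h => funext fun i => ?_⟩
  have hi := h i (Nat.lt_succ_iff.1 i.2)
  rwa [show Fin.ofNat (K + 1) i = i from Fin.ext (Nat.mod_eq_of_lt i.2)] at hi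

end DemandTrajectory

theorem mgf_gap_general
    {Ω : Type*} [MeasurableSpace Ω] (Pr : Measure Ω) [IsProbabilityMeasure Pr]
    (K T : ℕ) (hK : 1 ≤ K)
    (ε : ℝ) (hε : 0 < ε)
    (D0 : ℕ) (hD0 : D0 ∈ Finset.Icc 1 T)
    (D : ℕ → Ω → ℕ) (hDmeas : ∀ k, Measurable (D k))
    (hD0as : ∀ᵐ ω ∂Pr, D 0 ω = D0)
    (hLB : ∀ k < K, ∀ p ∈ Finset.Icc 1 T, ∀ q ∈ Finset.Icc 1 T,
      0 < Pr {ω | D k ω = q} →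
      ε ≤ (Pr {ω | D (k + 1) ω = p ∧ D k ω = q}).toReal / (Pr {ω | D k ω = q}).toReal)
    (N : ℕ → ℕ → ℕ → Ω → ℕ) (hNmeas : ∀ l s p, Measurable (N l s p))
    (hN01 : ∀ l s p ω, N l s p ω ≤ 1)
    (hNindep : ∀ S : Finset (ℕ × ℕ × ℕ),
      (∀ x ∈ S, x.1 ∈ Finset.Icc 1 K ∧ x.2.1 ∈ Finset.Icc 1 T ∧ x.2.2 ∈ Finset.Icc 1 T) →
      ∀ v : ℕ × ℕ × ℕ → ℕ, ∀ d : ℕ → ℕ,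
      Pr ({ω | ∀ k ≤ K, D k ω = d k} ∩ ⋂ x ∈ S, {ω | N x.1 x.2.1 x.2.2 ω = v x}) =
        Pr {ω | ∀ k ≤ K, D k ω = d k} * ∏ x ∈ S, Pr {ω | N x.1 x.2.1 x.2.2 ω = v x})
    (n : ℕ → ℕ → ℕ → ℝ) (hn : ∀ l s p, n l s p = ∫ ω, (N l s p ω : ℝ) ∂Pr)
    (U V : ℕ → Ω → ℝ)
    (hU : ∀ k ω, U k ω = ∑ l ∈ Finset.Icc 1 k, ∑ s ∈ Finset.Icc 1 T, ∑ p ∈ Finset.Icc 1 T,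
      (if s ≤ D l ω ∧ D (l - 1) ω = p then (1 : ℝ) else 0) * (N l s p ω : ℝ))
    (hV : ∀ k ω, V k ω = ∑ l ∈ Finset.Icc 1 k, ∑ s ∈ Finset.Icc 1 T, ∑ p ∈ Finset.Icc 1 T,
      (if s ≤ D l ω ∧ D (l - 1) ω = p then (1 : ℝ) else 0) * n l s p) :
    ∀ k ∈ Finset.Icc 1 K, ∀ lam : ℝ, 0 ≤ lam →
      ∀ᵐ ω ∂Pr,
        (MeasureTheory.condExp (MeasurableSpace.comap (D k) inferInstance) Pr
            (fun ω' => Real.exp (lam * U k ω'))) ω ≤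
          Real.exp ((k : ℝ) / (2 * ε) * lam ^ 2) *
            (MeasureTheory.condExp (MeasurableSpace.comap (D k) inferInstance) Pr
              (fun ω' => Real.exp (lam * V k ω'))) ω := by
  intro k hk lam hlam
  have hkK : k ≤ K := (mem_Icc.1 hk).2
  have hεT : (T : ℝ) * ε ≤ 1 := by
    simpa using card_mul_le_one_of_le_transition (hDmeas 0) (hDmeas 1) hD0as
      fun p hp => hLB 0 hK p hp D0 hD0
  set E : ℕ × ℕ × ℕ → Set Ω := fun x => {ω | N x.1 x.2.1 x.2.2 ω = 1}
  set S : (Fin (K + 1) → ℕ) → Finset (ℕ × ℕ × ℕ) :=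
    fun y => activeIndices T k fun j => y (Fin.ofNat (K + 1) j)
  have hS : ∀ ω, activeIndices T k (fun j => D j ω) = S (trajectory D K ω) := fun ω =>
    activeIndices_congr fun j hj => (trajectory_ofNat D (hj.trans hkK) ω).symm
  have hU' : U k = fun ω => ∑ x ∈ S (trajectory D K ω), (E x).indicator 1 ω := funext fun ω => by
    rw [hU, sum_ite_mul_eq_sum_activeIndices, hS]
    exact sum_congr rfl fun x _ => natCast_eq_indicator_one (hN01 _ _ _) ω
  have hV' : V k = fun ω => ∑ x ∈ S (trajectory D K ω), Pr.real (E x) := funext fun ω => by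
    simp only [hV, sum_ite_mul_eq_sum_activeIndices, hS, hn,
      integral_natCast_eq_measureReal (hNmeas _ _ _) (hN01 _ _ _), E]
  have hind : ∀ y, ∀ R ⊆ S y, Pr (trajectory D K ⁻¹' {y} ∩ ⋂ x ∈ R, E x)
      = Pr (trajectory D K ⁻¹' {y}) * ∏ x ∈ R, Pr (E x) := fun y R hR => by
    rw [trajectory_preimage_singleton]
    exact hNindep R (fun x hx => mem_Icc_of_mem_activeIndices hkK (hR hx)) (fun _ => 1) _
  have hcard : ∀ y, (#(S y) : ℝ) ≤ 4 * k / ε := fun y => by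
    have : (#(S y) : ℝ) ≤ k * T := by exact_mod_cast card_activeIndices_le T k _
    rw [le_div_iff₀ hε]
    nlinarith
  have hDk : Measurable[MeasurableSpace.comap (trajectory D K) inferInstance] (D k) :=
    (measurable_pi_apply (⟨k, by omega⟩ : Fin (K + 1))).comp (comap_measurable (trajectory D K))
  simp only [hU', hV', show (k : ℝ) / (2 * ε) * lam ^ 2 = 4 * k / ε * lam ^ 2 / 8 by ring]
  exact condExp_exp_mul_sum_indicator_le (measurable_trajectory hDmeas K) hDk.comap_le hcard
    (fun x => hNmeas _ _ _ (measurableSet_singleton 1)) hind lam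

/-- Moment generating function gap: with `U^k` the random capacity consumption and `V^k` its
demand-conditional mean counterpart, for every `k ∈ {1,…,K}` and every `λ ≥ 0`, almost surely
`E[exp (λ U^k) | σ(D^k)] ≤ exp ((k/(2ε)) λ²) E[exp (λ V^k) | σ(D^k)]`. -/
theorem mgf_gap
    {Ω : Type*} [MeasurableSpace Ω] (Pr : Measure Ω) [IsProbabilityMeasure Pr]
    (K T : ℕ) (hK : 1 ≤ K) (hT : 1 ≤ T)
    (ε : ℝ) (hε : 0 < ε)
    (D0 : ℕ) (hD0 : D0 ∈ Finset.Icc 1 T)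
    (D : ℕ → Ω → ℕ) (hDmeas : ∀ k, Measurable (D k))
    (hD0as : ∀ᵐ ω ∂Pr, D 0 ω = D0)
    (hDrange : ∀ k ∈ Finset.Icc 1 K, ∀ᵐ ω ∂Pr, D k ω ∈ Finset.Icc 1 T)
    (hMarkov : ∀ d : ℕ → ℕ, d 0 = D0 → (∀ k ∈ Finset.Icc 1 K, d k ∈ Finset.Icc 1 T) →
      (Pr {ω | ∀ k ∈ Finset.Icc 1 K, D k ω = d k}).toReal =
        ∏ k ∈ Finset.Icc 1 K,
          (Pr {ω | D k ω = d k ∧ D (k - 1) ω = d (k - 1)}).toReal /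
            (Pr {ω | D (k - 1) ω = d (k - 1)}).toReal)
    (hLB : ∀ k < K, ∀ p ∈ Finset.Icc 1 T, ∀ q ∈ Finset.Icc 1 T,
      0 < Pr {ω | D k ω = q} →
      ε ≤ (Pr {ω | D (k + 1) ω = p ∧ D k ω = q}).toReal / (Pr {ω | D k ω = q}).toReal)
    (N : ℕ → ℕ → ℕ → Ω → ℕ) (hNmeas : ∀ l s p, Measurable (N l s p))
    (hN01 : ∀ l s p ω, N l s p ω ≤ 1)
    (hNindep : ∀ S : Finset (ℕ × ℕ × ℕ),
      (∀ x ∈ S, x.1 ∈ Finset.Icc 1 K ∧ x.2.1 ∈ Finset.Icc 1 T ∧ x.2.2 ∈ Finset.Icc 1 T) →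
      ∀ v : ℕ × ℕ × ℕ → ℕ, ∀ d : ℕ → ℕ,
      Pr ({ω | ∀ k ≤ K, D k ω = d k} ∩ ⋂ x ∈ S, {ω | N x.1 x.2.1 x.2.2 ω = v x}) =
        Pr {ω | ∀ k ≤ K, D k ω = d k} * ∏ x ∈ S, Pr {ω | N x.1 x.2.1 x.2.2 ω = v x})
    (n : ℕ → ℕ → ℕ → ℝ) (hn : ∀ l s p, n l s p = ∫ ω, (N l s p ω : ℝ) ∂Pr)
    (U V : ℕ → Ω → ℝ)
    (hU : ∀ k ω, U k ω = ∑ l ∈ Finset.Icc 1 k, ∑ s ∈ Finset.Icc 1 T, ∑ p ∈ Finset.Icc 1 T,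
      (if s ≤ D l ω ∧ D (l - 1) ω = p then (1 : ℝ) else 0) * (N l s p ω : ℝ))
    (hV : ∀ k ω, V k ω = ∑ l ∈ Finset.Icc 1 k, ∑ s ∈ Finset.Icc 1 T, ∑ p ∈ Finset.Icc 1 T,
      (if s ≤ D l ω ∧ D (l - 1) ω = p then (1 : ℝ) else 0) * n l s p) :
    ∀ k ∈ Finset.Icc 1 K, ∀ lam : ℝ, 0 ≤ lam →
      ∀ᵐ ω ∂Pr,
        (MeasureTheory.condExp (MeasurableSpace.comap (D k) inferInstance) Pr
            (fun ω' => Real.exp (lam * U k ω'))) ω ≤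
          Real.exp ((k : ℝ) / (2 * ε) * lam ^ 2) *
            (MeasureTheory.condExp (MeasurableSpace.comap (D k) inferInstance) Pr
              (fun ω' => Real.exp (lam * V k ω'))) ω :=
  mgf_gap_general Pr K T hK ε hε D0 hD0 D hDmeas hD0as hLB N hNmeas hN01 hNindep n hn U V hU hV
end

section
/- Mixing identity for the auxiliary chain (Lemma EC.3): for all 0 ≤ k < ℓ ≤ K and all p,q ∈ {1,…,T}, (P^{k+1}⋯P^ℓ)(p,q) − V^ℓ(q) = (1−ε)^{ℓ−k} · [ (Q^{k+1}⋯Q^ℓ)(p,q) − V^ℓ(q) ]. (In probabilistic terms: P(D^ℓ=q | D^k=p) − P(D^ℓ=q) = (1−ε)^{ℓ−k}[P(Y^ℓ=q | Y^k=p) − P(D^ℓ=q)], where Y is the auxiliary Markov chain with transition matrices Q^k.) -/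
/-!
Write `𝟙v` for `vecMulVec 1 v`, the matrix all of whose rows are `v`; then
`P^i = (1-ε) Q^i + ε 𝟙V^i`. Both `P^{i+1}` and `Q^{i+1}` carry `V^i` to `V^{i+1}`, so the
deviations `D_ℓ = P^{k+1}⋯P^ℓ - 𝟙V^ℓ` and `E_ℓ = Q^{k+1}⋯Q^ℓ - 𝟙V^ℓ` satisfy
`D_{ℓ+1} = D_ℓ P^{ℓ+1}` and `E_{ℓ+1} = E_ℓ Q^{ℓ+1}`. The rows of `D_ℓ` sum to zero, so `D_ℓ` kills
the rank-one part `ε 𝟙V^{ℓ+1}`, whence `D_{ℓ+1} = (1-ε) D_ℓ Q^{ℓ+1}` and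
`D_ℓ = (1-ε)^{ℓ-k} E_ℓ` by induction.
-/

open Matrix

namespace Matrix

variable {ι R : Type*} [Fintype ι] [CommRing R]

lemma prod_map_range'_succ [DecidableEq ι] (P : ℕ → Matrix ι ι R) (s N : ℕ) :
    ((List.range' s (N + 1)).map P).prod = ((List.range' s N).map P).prod * P (s + N) := by
  simp [List.range'_concat]

lemma dotProduct_one_of_vecMul_eq {P : ℕ → Matrix ι ι R} {v : ℕ → ι → R} {K : ℕ}
    (h0 : v 0 ⬝ᵥ 1 = 1) (hP : ∀ i < K, P (i + 1) *ᵥ 1 = 1)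
    (hvP : ∀ i, v i ᵥ* P (i + 1) = v (i + 1)) : ∀ i ≤ K, v i ⬝ᵥ 1 = 1
  | 0, _ => h0
  | i + 1, hi => by
    rw [← hvP, ← dotProduct_mulVec, hP i (by omega)]
    exact dotProduct_one_of_vecMul_eq h0 hP hvP i (by omega)

lemma vecMul_eq_of_eq_smul_add_vecMulVec [IsDomain R] {P Q : Matrix ι ι R} {v v' : ι → R}
    {ε : R} (hε : 1 - ε ≠ 0) (hPQ : P = (1 - ε) • Q + vecMulVec 1 (ε • v'))
    (hv : v ⬝ᵥ 1 = 1) (hvP : v ᵥ* P = v') : v ᵥ* Q = v' := by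
  rw [hPQ, vecMul_add, vecMul_smul, vecMul_vecMulVec, hv, one_smul] at hvP
  exact smul_right_injective _ hε (by linear_combination (norm := module) hvP)

lemma mul_sub_vecMulVec_of_vecMul_eq (A M : Matrix ι ι R) {v v' : ι → R} (h : v ᵥ* M = v') :
    A * M - vecMulVec 1 v' = (A - vecMulVec 1 v) * M := by
  rw [sub_mul, vecMulVec_mul, h]

lemma mul_smul_add_vecMulVec_of_mulVec_eq_zero {D : Matrix ι ι R} (hD : D *ᵥ 1 = 0) (c : R)
    (Q : Matrix ι ι R) (w : ι → R) : D * (c • Q + vecMulVec 1 w) = c • (D * Q) := by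
  rw [mul_add, mul_vecMulVec, hD, zero_vecMulVec, add_zero, Matrix.mul_smul]

section Chain

variable [DecidableEq ι] {P Q : ℕ → Matrix ι ι R} {v w : ℕ → ι → R} {c : R} {k N : ℕ}

lemma prod_sub_vecMulVec_mulVec_one_eq_zero (hv : v k ⬝ᵥ 1 = 1)
    (hP : ∀ i, k ≤ i → i < k + N → P (i + 1) *ᵥ 1 = 1)
    (hvP : ∀ i, k ≤ i → i < k + N → v i ᵥ* P (i + 1) = v (i + 1)) :
    (((List.range' (k + 1) N).map P).prod - vecMulVec 1 (v (k + N))) *ᵥ 1 = 0 := by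
  induction N with
  | zero =>
    rw [List.range'_zero, List.map_nil, List.prod_nil, add_zero, sub_mulVec, one_mulVec,
      vecMulVec_mulVec, hv, MulOpposite.op_one, one_smul, sub_self]
  | succ N ih =>
    rw [prod_map_range'_succ, show k + 1 + N = k + N + 1 by omega,
      ← add_assoc, mul_sub_vecMulVec_of_vecMul_eq _ _ (hvP (k + N) (by omega) (by omega)),
      ← mulVec_mulVec, hP (k + N) (by omega) (by omega)]
    exact ih (fun i h₁ h₂ => hP i h₁ (by omega)) (fun i h₁ h₂ => hvP i h₁ (by omega))

theorem prod_sub_vecMulVec_eq_pow_smul (hv : v k ⬝ᵥ 1 = 1)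
    (hP : ∀ i, k ≤ i → i < k + N → P (i + 1) *ᵥ 1 = 1)
    (hvP : ∀ i, k ≤ i → i < k + N → v i ᵥ* P (i + 1) = v (i + 1))
    (hvQ : ∀ i, k ≤ i → i < k + N → v i ᵥ* Q (i + 1) = v (i + 1))
    (hPQ : ∀ i, k ≤ i → i < k + N → P (i + 1) = c • Q (i + 1) + vecMulVec 1 (w (i + 1))) :
    ((List.range' (k + 1) N).map P).prod - vecMulVec 1 (v (k + N)) =
      c ^ N • (((List.range' (k + 1) N).map Q).prod - vecMulVec 1 (v (k + N))) := by
  induction N with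
  | zero => simp
  | succ N ih =>
    have hD := prod_sub_vecMulVec_mulVec_one_eq_zero (N := N) hv
      (fun i h₁ h₂ => hP i h₁ (by omega)) (fun i h₁ h₂ => hvP i h₁ (by omega))
    rw [prod_map_range'_succ, prod_map_range'_succ, show k + 1 + N = k + N + 1 by omega,
      ← add_assoc, mul_sub_vecMulVec_of_vecMul_eq _ _ (hvP (k + N) (by omega) (by omega)),
      mul_sub_vecMulVec_of_vecMul_eq _ _ (hvQ (k + N) (by omega) (by omega)),
      hPQ (k + N) (by omega) (by omega), mul_smul_add_vecMulVec_of_mulVec_eq_zero hD,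
      ih (fun i h₁ h₂ => hP i h₁ (by omega)) (fun i h₁ h₂ => hvP i h₁ (by omega))
        (fun i h₁ h₂ => hvQ i h₁ (by omega)) (fun i h₁ h₂ => hPQ i h₁ (by omega)),
      Matrix.smul_mul, smul_smul, pow_succ']

end Chain

end Matrix

theorem auxiliary_chain_mixing_identity_general
    (T K : ℕ)
    (ε : ℝ) (hε1 : ε < 1)
    (P : ℕ → Matrix (Fin T) (Fin T) ℝ)
    (hProw : ∀ k ∈ Finset.Icc 1 K, ∀ p : Fin T, ∑ q, P k p q = 1)
    (μ : Fin T → ℝ) (hμ1 : ∑ q, μ q = 1)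
    (V : ℕ → Fin T → ℝ)
    (hV : ∀ k, V k = Matrix.vecMul μ (((List.range' 1 k).map P).prod))
    (Q : ℕ → Matrix (Fin T) (Fin T) ℝ)
    (hQ : ∀ k p q, Q k p q = (P k p q - ε * V k q) / (1 - ε)) :
    ∀ k l : ℕ, k < l → l ≤ K → ∀ p q : Fin T,
      (((List.range' (k + 1) (l - k)).map P).prod p q - V l q) =
        (1 - ε) ^ (l - k) *
          (((List.range' (k + 1) (l - k)).map Q).prod p q - V l q) := by
  intro k l hkl hlK p q
  have hε : 1 - ε ≠ 0 := sub_ne_zero.2 hε1.ne'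
  have hP : ∀ i < K, P (i + 1) *ᵥ 1 = 1 := fun i hi => by
    ext r
    simpa [mulVec, dotProduct] using hProw (i + 1) (Finset.mem_Icc.2 ⟨by omega, hi⟩) r
  have hVP : ∀ i, V i ᵥ* P (i + 1) = V (i + 1) := fun i => by
    rw [hV, hV, vecMul_vecMul, prod_map_range'_succ, Nat.add_comm 1 i]
  have hV1 : ∀ i ≤ K, V i ⬝ᵥ 1 = 1 :=
    dotProduct_one_of_vecMul_eq (by simp [hV, dotProduct, hμ1]) hP hVP
  have hPQ : ∀ i, P i = (1 - ε) • Q i + vecMulVec 1 (ε • V i) := fun i => by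
    ext r s
    simp only [hQ, Matrix.add_apply, Matrix.smul_apply, vecMulVec_apply, Pi.smul_apply,
      smul_eq_mul, Pi.one_apply]
    field_simp
    ring
  have hVQ : ∀ i < K, V i ᵥ* Q (i + 1) = V (i + 1) := fun i hi =>
    vecMul_eq_of_eq_smul_add_vecMulVec hε (hPQ _) (hV1 i hi.le) (hVP i)
  have key := prod_sub_vecMulVec_eq_pow_smul (N := l - k) (w := fun i => ε • V i)
    (hV1 k (by omega)) (fun i _ _ => hP i (by omega)) (fun i _ _ => hVP i)
    (fun i _ _ => hVQ i (by omega)) (fun i _ _ => hPQ (i + 1))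
  simpa [Nat.add_sub_cancel' hkl.le, vecMulVec_apply] using congrFun (congrFun key p) q

/-- Mixing identity for the auxiliary chain: with row-stochastic matrices `P¹,…,P^K` whose
entries are all at least `ε`, marginals `V^k = μ P¹⋯P^k` and the auxiliary transition matrices
`Q^k(p,q) = (P^k(p,q) − ε V^k(q))/(1−ε)`, for all `0 ≤ k < ℓ ≤ K` and all states `p, q`,
`(P^{k+1}⋯P^ℓ)(p,q) − V^ℓ(q) = (1−ε)^{ℓ−k} ((Q^{k+1}⋯Q^ℓ)(p,q) − V^ℓ(q))`. -/
theorem auxiliary_chain_mixing_identity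
    (T K : ℕ) (hT : 1 ≤ T) (hK : 1 ≤ K)
    (ε : ℝ) (hε0 : 0 < ε) (hε1 : ε < 1)
    (P : ℕ → Matrix (Fin T) (Fin T) ℝ)
    (hPnn : ∀ k ∈ Finset.Icc 1 K, ∀ p q : Fin T, 0 ≤ P k p q)
    (hProw : ∀ k ∈ Finset.Icc 1 K, ∀ p : Fin T, ∑ q, P k p q = 1)
    (hPent : ∀ k ∈ Finset.Icc 1 K, ∀ p q : Fin T, ε ≤ P k p q)
    (μ : Fin T → ℝ) (hμ0 : ∀ q, 0 ≤ μ q) (hμ1 : ∑ q, μ q = 1)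
    (V : ℕ → Fin T → ℝ)
    (hV : ∀ k, V k = Matrix.vecMul μ (((List.range' 1 k).map P).prod))
    (Q : ℕ → Matrix (Fin T) (Fin T) ℝ)
    (hQ : ∀ k p q, Q k p q = (P k p q - ε * V k q) / (1 - ε)) :
    ∀ k l : ℕ, k < l → l ≤ K → ∀ p q : Fin T,
      (((List.range' (k + 1) (l - k)).map P).prod p q - V l q) =
        (1 - ε) ^ (l - k) *
          (((List.range' (k + 1) (l - k)).map Q).prod p q - V l q) :=
  auxiliary_chain_mixing_identity_general T K ε hε1 P hProw μ hμ1 V hV Q hQ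
end

section
/- Characterization of the feasible weights (Lemma on the set W): if the real family w = (w_t^k(q) : t,q ∈ {1,…,T}, k ∈ {1,…,K}) satisfies (i) w₁¹(q) = 1(D̂⁰ = q) for all q ∈ {1,…,T}; (ii) w_t^k(q) = θ_{t−1}^k(q)·w_{t−1}^k(q) for all t ∈ {2,…,T}, q ∈ {1,…,T}, k ∈ {1,…,K}; and (iii) w₁^k(q) = Σ_{p=1}^T (1 − θ_q^{k−1}(p))·w_q^{k−1}(p) for all q ∈ {1,…,T} and k ∈ {2,…,K}; then w_t^k(q) = P(D^k ≥ t, D^{k−1} = q) for all t,q ∈ {1,…,T} and k ∈ {1,…,K}. -/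
open MeasureTheory Finset

/-!
Write `P k t q = P(D^k ≥ t, D^{k-1} = q)`. Since `{D^k ≥ t+1} ⊆ {D^k ≥ t}`, the survival rate
satisfies `θ_t^k(q) P k t q = P k (t+1) q` even when `P k t q = 0`, so `P` obeys recursion (ii),
and `(1 - θ_t^k(q)) P k t q = P(D^k = t, D^{k-1} = q)`. Summing the latter over the values of
`D^{k-1}` gives `P(D^k = q) = P(D^{k+1} ≥ 1, D^k = q) = P (k+1) 1 q`, which is recursion (iii);
and `P 1 1 q = 1(D̂⁰ = q)`. So `P` satisfies (i)–(iii), which determine `w` uniquely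
(induction on `k`, then on `t`).
-/

theorem eq_on_Icc_of_recurrence {a b c : ℕ → ℝ} {T : ℕ} (h1 : a 1 = b 1)
    (ha : ∀ t ∈ Icc 2 T, a t = c (t - 1) * a (t - 1))
    (hb : ∀ t ∈ Ico 1 T, b (t + 1) = c t * b t) :
    ∀ t ∈ Icc 1 T, a t = b t := by
  intro t ht
  obtain ⟨ht1, htT⟩ := mem_Icc.1 ht
  clear ht
  induction t, ht1 using Nat.le_induction with
  | base => exact h1
  | succ t ht1 ih =>
    rw [ha (t + 1) (mem_Icc.2 ⟨by omega, htT⟩), Nat.add_sub_cancel, ih (by omega),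
      hb t (mem_Ico.2 ⟨ht1, by omega⟩)]

section

variable {Ω : Type*} [MeasurableSpace Ω] {μ : Measure Ω} {X Y : Ω → ℕ}

theorem measureReal_div_mul_cancel_of_subset [IsFiniteMeasure μ] {s t : Set Ω} (h : s ⊆ t) :
    μ.real s / μ.real t * μ.real t = μ.real s := by
  rcases eq_or_ne (μ.real t) 0 with ht | ht
  · rw [ht, mul_zero, eq_comm]
    exact le_antisymm (ht ▸ measureReal_mono h) measureReal_nonneg
  · exact div_mul_cancel₀ _ ht

theorem measureReal_le_and_eq_eq_add [IsFiniteMeasure μ] (hX : Measurable X) (hY : Measurable Y)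
    (t q : ℕ) :
    μ.real {ω | t ≤ X ω ∧ Y ω = q} =
      μ.real {ω | X ω = t ∧ Y ω = q} + μ.real {ω | t + 1 ≤ X ω ∧ Y ω = q} := by
  have hsplit : {ω | t ≤ X ω ∧ Y ω = q} =
      {ω | X ω = t ∧ Y ω = q} ∪ {ω | t + 1 ≤ X ω ∧ Y ω = q} := by
    ext ω
    simp only [Set.mem_ofPred_eq, Set.mem_union]
    omega
  have hmeas : MeasurableSet {ω | t + 1 ≤ X ω ∧ Y ω = q} :=
    (hX measurableSet_Ici).inter (hY (measurableSet_singleton q))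
  have hdisj : Disjoint {ω | X ω = t ∧ Y ω = q} {ω | t + 1 ≤ X ω ∧ Y ω = q} :=
    Set.disjoint_left.2 fun _ h1 h2 => Nat.not_succ_le_self t (h1.1 ▸ h2.1)
  rw [hsplit, measureReal_union hdisj hmeas]

theorem measureReal_succ_le_and_div_mul [IsFiniteMeasure μ] (t q : ℕ) :
    μ.real {ω | t + 1 ≤ X ω ∧ Y ω = q} / μ.real {ω | t ≤ X ω ∧ Y ω = q} *
      μ.real {ω | t ≤ X ω ∧ Y ω = q} = μ.real {ω | t + 1 ≤ X ω ∧ Y ω = q} :=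
  measureReal_div_mul_cancel_of_subset fun _ h => ⟨(Nat.le_succ t).trans h.1, h.2⟩

theorem one_sub_div_mul_measureReal_le_and_eq [IsFiniteMeasure μ] (hX : Measurable X)
    (hY : Measurable Y) (t q : ℕ) :
    (1 - μ.real {ω | t + 1 ≤ X ω ∧ Y ω = q} / μ.real {ω | t ≤ X ω ∧ Y ω = q}) *
      μ.real {ω | t ≤ X ω ∧ Y ω = q} = μ.real {ω | X ω = t ∧ Y ω = q} := by
  rw [sub_mul, one_mul, measureReal_succ_le_and_div_mul,
    measureReal_le_and_eq_eq_add hX hY t q, add_sub_cancel_right]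

theorem sum_measureReal_eq_and_eq [IsFiniteMeasure μ] (hX : Measurable X) (hY : Measurable Y)
    {S : Finset ℕ} (hS : ∀ᵐ ω ∂μ, Y ω ∈ S) (q : ℕ) :
    ∑ p ∈ S, μ.real {ω | X ω = q ∧ Y ω = p} = μ.real {ω | X ω = q} := by
  have hunion : {ω | X ω = q} =ᵐ[μ] ⋃ p ∈ S, {ω | X ω = q ∧ Y ω = p} := by
    rw [Filter.eventuallyEq_set]
    filter_upwards [hS] with ω hω
    simp only [Set.mem_iUnion, exists_prop]
    exact ⟨fun h => ⟨Y ω, hω, h, rfl⟩, fun ⟨_, _, h, _⟩ => h⟩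
  have hmeas (p : ℕ) : MeasurableSet {ω | X ω = q ∧ Y ω = p} :=
    (hX (measurableSet_singleton q)).inter (hY (measurableSet_singleton p))
  rw [measureReal_congr hunion, measureReal_biUnion_finset _ fun p _ => hmeas p]
  intro p _ p' _ hne
  simp only [Function.onFun, Set.disjoint_left]
  rintro ω ⟨-, rfl⟩ ⟨-, rfl⟩
  exact hne rfl

theorem measureReal_one_le_and_eq_of_ae_one_le (hX : ∀ᵐ ω ∂μ, 1 ≤ X ω) (q : ℕ) :
    μ.real {ω | 1 ≤ X ω ∧ Y ω = q} = μ.real {ω | Y ω = q} := by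
  refine measureReal_congr (Filter.eventuallyEq_set.2 ?_)
  filter_upwards [hX] with ω hω
  simp [hω]

theorem measureReal_eq_of_ae_eq_const [IsProbabilityMeasure μ] {c : ℕ}
    (hY : ∀ᵐ ω ∂μ, Y ω = c) (q : ℕ) :
    μ.real {ω | Y ω = q} = if c = q then 1 else 0 := by
  split_ifs with hc
  · rw [← probReal_univ (μ := μ)]
    refine measureReal_congr (Filter.eventuallyEq_set.2 ?_)
    filter_upwards [hY] with ω hω
    simp [hω, hc]
  · rw [← measureReal_empty (μ := μ)]
    refine measureReal_congr (Filter.eventuallyEq_set.2 ?_)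
    filter_upwards [hY] with ω hω
    simp [hω, hc]

end

theorem feasible_weights_characterization_general
    {Ω : Type*} [MeasurableSpace Ω] (Pr : Measure Ω) [IsProbabilityMeasure Pr]
    (K T : ℕ)
    (D0 : ℕ) (hD0 : D0 ∈ Finset.Icc 1 T)
    (D : ℕ → Ω → ℕ) (hDmeas : ∀ k, Measurable (D k))
    (hD0as : ∀ᵐ ω ∂Pr, D 0 ω = D0)
    (hDrange : ∀ k ∈ Finset.Icc 1 K, ∀ᵐ ω ∂Pr, D k ω ∈ Finset.Icc 1 T)
    (θ : ℕ → ℕ → ℕ → ℝ)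
    (hθ : ∀ k ∈ Finset.Icc 1 K, ∀ t ∈ Finset.Icc 1 T, ∀ q ∈ Finset.Icc 1 T,
      θ k t q = (Pr {ω | t + 1 ≤ D k ω ∧ D (k - 1) ω = q}).toReal /
        (Pr {ω | t ≤ D k ω ∧ D (k - 1) ω = q}).toReal)
    (w : ℕ → ℕ → ℕ → ℝ)
    (hw1 : ∀ q ∈ Finset.Icc 1 T, w 1 1 q = if D0 = q then (1 : ℝ) else 0)
    (hw2 : ∀ k ∈ Finset.Icc 1 K, ∀ t ∈ Finset.Icc 2 T, ∀ q ∈ Finset.Icc 1 T,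
      w k t q = θ k (t - 1) q * w k (t - 1) q)
    (hw3 : ∀ k ∈ Finset.Icc 2 K, ∀ q ∈ Finset.Icc 1 T,
      w k 1 q = ∑ p ∈ Finset.Icc 1 T, (1 - θ (k - 1) q p) * w (k - 1) q p) :
    ∀ k ∈ Finset.Icc 1 K, ∀ t ∈ Finset.Icc 1 T, ∀ q ∈ Finset.Icc 1 T,
      w k t q = (Pr {ω | t ≤ D k ω ∧ D (k - 1) ω = q}).toReal := by
  simp only [← measureReal_def] at hθ ⊢
  have hrange : ∀ j ≤ K, ∀ᵐ ω ∂Pr, D j ω ∈ Icc 1 T := fun j hj =>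
    j.eq_zero_or_pos.elim (fun h => h ▸ hD0as.mono fun ω hω => hω ▸ hD0)
      fun h => hDrange j (mem_Icc.2 ⟨h, hj⟩)
  have hpos : ∀ j ≤ K, ∀ᵐ ω ∂Pr, 1 ≤ D j ω := fun j hj =>
    (hrange j hj).mono fun _ h => (mem_Icc.1 h).1
  have hcolumn : ∀ k ∈ Icc 1 K,
      (∀ q ∈ Icc 1 T, w k 1 q = Pr.real {ω | 1 ≤ D k ω ∧ D (k - 1) ω = q}) →
      ∀ t ∈ Icc 1 T, ∀ q ∈ Icc 1 T, w k t q = Pr.real {ω | t ≤ D k ω ∧ D (k - 1) ω = q} :=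
    fun k hk h1 t ht q hq =>
      eq_on_Icc_of_recurrence (a := (w k · q)) (c := (θ k · q))
        (b := (Pr.real {ω | · ≤ D k ω ∧ D (k - 1) ω = q})) (h1 q hq)
        (fun t ht => hw2 k hk t ht q hq)
        (fun t ht => by rw [hθ k hk t (Ico_subset_Icc_self ht) q hq,
          measureReal_succ_le_and_div_mul]) t ht
  intro k hk
  obtain ⟨hk1, hkK⟩ := mem_Icc.1 hk
  induction k, hk1 using Nat.le_induction with
  | base =>
    refine hcolumn 1 hk fun q hq => ?_
    rw [hw1 q hq, measureReal_one_le_and_eq_of_ae_one_le (hpos 1 hkK)]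
    exact (measureReal_eq_of_ae_eq_const hD0as q).symm
  | succ k hk1 ih =>
    refine hcolumn (k + 1) hk fun q hq => ?_
    rw [hw3 (k + 1) (mem_Icc.2 ⟨by omega, hkK⟩) q hq, Nat.add_sub_cancel,
      measureReal_one_le_and_eq_of_ae_one_le (hpos (k + 1) hkK),
      ← sum_measureReal_eq_and_eq (hDmeas k) (hDmeas (k - 1)) (hrange (k - 1) (by omega))]
    have hk : k ∈ Icc 1 K := mem_Icc.2 ⟨hk1, by omega⟩
    refine sum_congr rfl fun p hp => ?_
    rw [ih hk (by omega) q hq p hp, hθ k hk q hq p hp,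
      one_sub_div_mul_measureReal_le_and_eq (hDmeas k) (hDmeas (k - 1))]

/-- Characterization of the feasible weights: any family `w` satisfying the defining
constraints of the set `W` (built from the survival rates `θ`) coincides with the joint
probabilities `w_t^k(q) = P(D^k ≥ t, D^{k−1} = q)`. -/
theorem feasible_weights_characterization
    {Ω : Type*} [MeasurableSpace Ω] (Pr : Measure Ω) [IsProbabilityMeasure Pr]
    (K T : ℕ) (hK : 1 ≤ K) (hT : 1 ≤ T)
    (ε : ℝ) (hε : 0 < ε)
    (D0 : ℕ) (hD0 : D0 ∈ Finset.Icc 1 T)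
    (D : ℕ → Ω → ℕ) (hDmeas : ∀ k, Measurable (D k))
    (hD0as : ∀ᵐ ω ∂Pr, D 0 ω = D0)
    (hDrange : ∀ k ∈ Finset.Icc 1 K, ∀ᵐ ω ∂Pr, D k ω ∈ Finset.Icc 1 T)
    (hMarkov : ∀ d : ℕ → ℕ, d 0 = D0 → (∀ k ∈ Finset.Icc 1 K, d k ∈ Finset.Icc 1 T) →
      (Pr {ω | ∀ k ∈ Finset.Icc 1 K, D k ω = d k}).toReal =
        ∏ k ∈ Finset.Icc 1 K,
          (Pr {ω | D k ω = d k ∧ D (k - 1) ω = d (k - 1)}).toReal /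
            (Pr {ω | D (k - 1) ω = d (k - 1)}).toReal)
    (hLB : ∀ k < K, ∀ p ∈ Finset.Icc 1 T, ∀ q ∈ Finset.Icc 1 T,
      0 < Pr {ω | D k ω = q} →
      ε ≤ (Pr {ω | D (k + 1) ω = p ∧ D k ω = q}).toReal / (Pr {ω | D k ω = q}).toReal)
    (θ : ℕ → ℕ → ℕ → ℝ)
    (hθ : ∀ k ∈ Finset.Icc 1 K, ∀ t ∈ Finset.Icc 1 T, ∀ q ∈ Finset.Icc 1 T,
      θ k t q = (Pr {ω | t + 1 ≤ D k ω ∧ D (k - 1) ω = q}).toReal /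
        (Pr {ω | t ≤ D k ω ∧ D (k - 1) ω = q}).toReal)
    (w : ℕ → ℕ → ℕ → ℝ)
    (hw1 : ∀ q ∈ Finset.Icc 1 T, w 1 1 q = if D0 = q then (1 : ℝ) else 0)
    (hw2 : ∀ k ∈ Finset.Icc 1 K, ∀ t ∈ Finset.Icc 2 T, ∀ q ∈ Finset.Icc 1 T,
      w k t q = θ k (t - 1) q * w k (t - 1) q)
    (hw3 : ∀ k ∈ Finset.Icc 2 K, ∀ q ∈ Finset.Icc 1 T,
      w k 1 q = ∑ p ∈ Finset.Icc 1 T, (1 - θ (k - 1) q p) * w (k - 1) q p) :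
    ∀ k ∈ Finset.Icc 1 K, ∀ t ∈ Finset.Icc 1 T, ∀ q ∈ Finset.Icc 1 T,
      w k t q = (Pr {ω | t ≤ D k ω ∧ D (k - 1) ω = q}).toReal :=
  feasible_weights_characterization_general Pr K T D0 hD0 D hDmeas hD0as hDrange θ hθ w hw1 hw2 hw3
end

section
/- Slack identity for feasible LP solutions (Lemma EC on the dual LP): if nonnegative reals y = (y_{it}^k(q)), u = (u_{jt}^k(q)) and reals w = (w_t^k(q)) satisfy constraints (i)–(v) below, then for all i ∈ L, t,q ∈ {1,…,T} and k ∈ {1,…,K}: P(D^k ≥ t, D^{k−1}=q)·c_i − Σ_{ℓ=1}^{k−1} Σ_{s=1}^T Σ_{p=1}^T Σ_{j∈J} a_{ij}·P(D^k ≥ t, D^{k−1}=q | D^ℓ ≥ s, D^{ℓ−1}=p)·u_{js}^ℓ(p) − Σ_{s=1}^t Σ_{j∈J} a_{ij}·P(D^k ≥ t | D^k ≥ s, D^{k−1}=q)·u_{js}^k(q) = y_{it}^k(q), where any conditional probability given a null event is interpreted as 0 (the corresponding u-term then vanishes by (v) and (i)). -/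
/-!
Write `S k t q = P(D^k ≥ t, D^{k-1} = q)`. Both `y` and the left-hand side of the identity, as
functions of `(k, t, q)`, solve the balance recursions (ii)–(iv), and these recursions determine
their solution. Passing from period `t` to `t + 1` multiplies every probability in the left-hand
side by the survival rate `θ_t^k(q)`: for the terms of earlier stages this is the Markov property,
obtained from the product formula by splicing demand paths at stage `k - 1`. Passing from stage
`k` to `k + 1` splits `{D^{k+1} ≥ 1, D^k = q}`, which is `{D^k = q}` up to a null set, according
to the value of `D^{k-1}`. The same uniqueness shows `w = S`, so by (v) the variables `u` vanish
exactly where the conditional probabilities are undefined.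
-/

open MeasureTheory Finset

/-- `(x, y) ↦ (σ x y, σ y x)` is an involution exchanging the index sets of the two products. -/
theorem sum_filter_and_mul_sum_eq_of_splice {β R : Type*} [CommSemiring R]
    (S : Finset β) (σ : β → β → β) (hσS : ∀ x ∈ S, ∀ y ∈ S, σ x y ∈ S)
    (hσσ : ∀ x y, σ (σ x y) (σ y x) = x) (f g : β → R) (φ ψ : β → Prop)
    [DecidablePred φ] [DecidablePred ψ]
    (hf : ∀ x ∈ S, ∀ y ∈ S, f (σ x y) = f x) (hφ : ∀ x ∈ S, ∀ y ∈ S, φ (σ x y) ↔ φ x)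
    (hg : ∀ x ∈ S, ∀ y ∈ S, g (σ x y) = g y) (hψ : ∀ x ∈ S, ∀ y ∈ S, ψ (σ x y) ↔ ψ y) :
    (∑ x ∈ S with φ x ∧ ψ x, f x * g x) * ∑ x ∈ S, f x * g x =
      (∑ x ∈ S with φ x, f x * g x) * ∑ x ∈ S with ψ x, f x * g x := by
  rw [sum_mul_sum, sum_mul_sum, ← sum_product', ← sum_product']
  refine sum_nbij' (fun z => (σ z.1 z.2, σ z.2 z.1)) (fun z => (σ z.1 z.2, σ z.2 z.1))
    ?_ ?_ (fun z _ => by simp [hσσ]) (fun z _ => by simp [hσσ]) ?_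
  · rintro ⟨x, y⟩ h
    simp only [mem_product, mem_filter] at h ⊢
    obtain ⟨⟨hx, hφx, hψx⟩, hy⟩ := h
    exact ⟨⟨hσS x hx y hy, (hφ x hx y hy).2 hφx⟩, hσS y hy x hx, (hψ y hy x hx).2 hψx⟩
  · rintro ⟨x, y⟩ h
    simp only [mem_product, mem_filter] at h ⊢
    obtain ⟨⟨hx, hφx⟩, hy, hψy⟩ := h
    exact ⟨⟨hσS x hx y hy, (hφ x hx y hy).2 hφx, (hψ x hx y hy).2 hψy⟩, hσS y hy x hx⟩
  · rintro ⟨x, y⟩ h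
    simp only [mem_product, mem_filter] at h
    obtain ⟨⟨hx, -⟩, hy⟩ := h
    simp only [hf x hx y hy, hg x hx y hy, hf y hy x hx, hg y hy x hx]
    ring

theorem div_self_mul_of_imp {G₀ : Type*} [GroupWithZero G₀] {a x : G₀} (h : a = 0 → x = 0) :
    a / a * x = x := by
  by_cases ha : a = 0
  · rw [h ha, mul_zero]
  · rw [div_self ha, one_mul]

section Balance

variable {K T : ℕ} {θ : ℕ → ℕ → ℕ → ℝ} {b : ℕ → ℝ} {U : ℕ → ℕ → ℕ → ℝ}

/-- Constraints (ii)–(iv) of the dual LP for `f = y_i` and `U k t q = ∑ j, a i j * u j k t q`;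
constraint (i) is the case `U = 0`. -/
structure IsBalanced (K T : ℕ) (θ : ℕ → ℕ → ℕ → ℝ) (b : ℕ → ℝ) (U f : ℕ → ℕ → ℕ → ℝ) :
    Prop where
  first : ∀ q ∈ Icc 1 T, f 1 1 q + U 1 1 q = b q
  succ_period : ∀ k ∈ Icc 1 K, ∀ t ∈ Icc 2 T, ∀ q ∈ Icc 1 T,
    f k t q + U k t q = θ k (t - 1) q * f k (t - 1) q
  succ_stage : ∀ k ∈ Icc 2 K, ∀ q ∈ Icc 1 T,
    f k 1 q + U k 1 q = ∑ p ∈ Icc 1 T, (1 - θ (k - 1) q p) * f (k - 1) q p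

theorem IsBalanced.unique {f g : ℕ → ℕ → ℕ → ℝ} (hf : IsBalanced K T θ b U f)
    (hg : IsBalanced K T θ b U g) :
    ∀ k ∈ Icc 1 K, ∀ t ∈ Icc 1 T, ∀ q ∈ Icc 1 T, f k t q = g k t q := by
  have along_stage : ∀ k ∈ Icc 1 K, (∀ q ∈ Icc 1 T, f k 1 q = g k 1 q) →
      ∀ t ∈ Icc 1 T, ∀ q ∈ Icc 1 T, f k t q = g k t q := by
    intro k hk h1 t ht
    obtain ⟨ht1, htT⟩ := mem_Icc.1 ht
    clear ht
    induction t, ht1 using Nat.le_induction with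
    | base => exact h1
    | succ t ht1 ih =>
      intro q hq
      have hft := hf.succ_period k hk (t + 1) (mem_Icc.2 ⟨by omega, htT⟩) q hq
      have hgt := hg.succ_period k hk (t + 1) (mem_Icc.2 ⟨by omega, htT⟩) q hq
      rw [Nat.add_sub_cancel, ih (by omega) q hq] at hft
      rw [Nat.add_sub_cancel] at hgt
      linarith
  intro k hk
  obtain ⟨hk1, hkK⟩ := mem_Icc.1 hk
  clear hk
  induction k, hk1 using Nat.le_induction with
  | base =>
    refine along_stage 1 (mem_Icc.2 ⟨le_rfl, hkK⟩) fun q hq => ?_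
    linarith [hf.first q hq, hg.first q hq]
  | succ k hk1 ih =>
    refine along_stage (k + 1) (mem_Icc.2 ⟨by omega, hkK⟩) fun q hq => ?_
    have hfk := hf.succ_stage (k + 1) (mem_Icc.2 ⟨by omega, hkK⟩) q hq
    have hgk := hg.succ_stage (k + 1) (mem_Icc.2 ⟨by omega, hkK⟩) q hq
    rw [Nat.add_sub_cancel, sum_congr rfl fun p hp =>
      by rw [ih (by omega) q hq p hp]] at hfk
    rw [Nat.add_sub_cancel] at hgk
    linarith

end Balance

section Paths

def spliceAt (m : ℕ) (x y : ℕ → ℕ) (n : ℕ) : ℕ := if n < m then x n else y n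

theorem spliceAt_of_lt {m n : ℕ} (x y : ℕ → ℕ) (h : n < m) : spliceAt m x y n = x n :=
  if_pos h

theorem spliceAt_of_le {m n : ℕ} (x y : ℕ → ℕ) (h : m ≤ n) : spliceAt m x y n = y n :=
  if_neg (Nat.not_lt.2 h)

theorem spliceAt_spliceAt (m : ℕ) (x y : ℕ → ℕ) :
    spliceAt m (spliceAt m x y) (spliceAt m y x) = x :=
  funext fun n => by by_cases hn : n < m <;> simp [spliceAt, hn]

def extendByZero (K : ℕ) : (Fin (K + 1) → ℕ) ↪ (ℕ → ℕ) where
  toFun x n := if h : n < K + 1 then x ⟨n, h⟩ else 0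
  inj' x y h := funext fun i => by simpa [i.isLt] using congrFun h i

theorem extendByZero_apply (K : ℕ) (x : Fin (K + 1) → ℕ) (n : ℕ) :
    extendByZero K x n = if h : n < K + 1 then x ⟨n, h⟩ else 0 := rfl

/-- Demand paths, extended by `0` after stage `K` so that they form a finite set. -/
def demandPaths (K T D0 : ℕ) : Finset (ℕ → ℕ) :=
  (Fintype.piFinset fun n : Fin (K + 1) => if (n : ℕ) = 0 then {D0} else Icc 1 T).map
    (extendByZero K)

theorem mem_demandPaths {K T D0 : ℕ} {d : ℕ → ℕ} :
    d ∈ demandPaths K T D0 ↔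
      d 0 = D0 ∧ (∀ k ∈ Icc 1 K, d k ∈ Icc 1 T) ∧ ∀ n, K < n → d n = 0 := by
  simp only [demandPaths, mem_map, Fintype.mem_piFinset]
  constructor
  · rintro ⟨x, hx, rfl⟩
    refine ⟨by simpa [extendByZero_apply] using hx 0, fun k hk => ?_, fun n hn => ?_⟩
    · obtain ⟨hk1, hkK⟩ := mem_Icc.1 hk
      have := hx ⟨k, by omega⟩
      rw [if_neg (by simp; omega)] at this
      simpa [extendByZero_apply, show k < K + 1 by omega] using this
    · simp [extendByZero_apply]; omega
  · rintro ⟨h0, hmem, hzero⟩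
    refine ⟨fun n => d n, fun n => ?_, funext fun n => ?_⟩
    · split_ifs with hn
      · simpa [hn] using h0
      · exact hmem n (mem_Icc.2 ⟨by omega, by omega⟩)
    · rw [extendByZero_apply]
      split_ifs with hn
      · rfl
      · exact (hzero n (by omega)).symm

theorem spliceAt_mem_demandPaths {K T D0 m : ℕ} {x y : ℕ → ℕ} (hx : x ∈ demandPaths K T D0)
    (hy : y ∈ demandPaths K T D0) : spliceAt m x y ∈ demandPaths K T D0 := by
  obtain ⟨hx0, hxmem, hxzero⟩ := mem_demandPaths.1 hx
  obtain ⟨hy0, hymem, hyzero⟩ := mem_demandPaths.1 hy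
  refine mem_demandPaths.2 ⟨?_, fun k hk => ?_, fun n hn => ?_⟩ <;> unfold spliceAt <;> split_ifs
  exacts [hx0, hy0, hxmem k hk, hymem k hk, hxzero n hn, hyzero n hn]

end Paths

def survivalEvent {Ω : Type*} (D : ℕ → Ω → ℕ) (k t q : ℕ) : Set Ω :=
  {ω | t ≤ D k ω ∧ D (k - 1) ω = q}

theorem survivalEvent_anti {Ω : Type*} {D : ℕ → Ω → ℕ} {k s t q : ℕ} (h : s ≤ t) :
    survivalEvent D k t q ⊆ survivalEvent D k s q :=
  fun _ hω => ⟨h.trans hω.1, hω.2⟩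

def truncatedPath {Ω : Type*} (D : ℕ → Ω → ℕ) (K : ℕ) (ω : Ω) (n : ℕ) : ℕ :=
  if n ≤ K then D n ω else 0

theorem truncatedPath_of_le {Ω : Type*} {D : ℕ → Ω → ℕ} {K n : ℕ} (ω : Ω) (hn : n ≤ K) :
    truncatedPath D K ω n = D n ω :=
  if_pos hn

noncomputable section MarkovDemand

variable {Ω : Type*} [MeasurableSpace Ω]

def transitionRatio (Pr : Measure Ω) (D : ℕ → Ω → ℕ) (k : ℕ) (d : ℕ → ℕ) : ℝ :=
  Pr.real {ω | D k ω = d k ∧ D (k - 1) ω = d (k - 1)} / Pr.real {ω | D (k - 1) ω = d (k - 1)}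

theorem transitionRatio_congr {Pr : Measure Ω} {D : ℕ → Ω → ℕ} {k : ℕ} {d d' : ℕ → ℕ}
    (h : d k = d' k) (h' : d (k - 1) = d' (k - 1)) :
    transitionRatio Pr D k d = transitionRatio Pr D k d' := by
  rw [transitionRatio, transitionRatio, h, h']

def pathWeight (Pr : Measure Ω) (D : ℕ → Ω → ℕ) (K : ℕ) (d : ℕ → ℕ) : ℝ :=
  ∏ k ∈ Icc 1 K, transitionRatio Pr D k d

structure IsMarkovDemand (Pr : Measure Ω) (D : ℕ → Ω → ℕ) (K T D0 : ℕ) : Prop where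
  measurable : ∀ k, Measurable (D k)
  initial_mem : D0 ∈ Icc 1 T
  ae_initial : ∀ᵐ ω ∂Pr, D 0 ω = D0
  ae_mem : ∀ k ∈ Icc 1 K, ∀ᵐ ω ∂Pr, D k ω ∈ Icc 1 T
  measureReal_path : ∀ d : ℕ → ℕ, d 0 = D0 → (∀ k ∈ Icc 1 K, d k ∈ Icc 1 T) →
    Pr.real {ω | ∀ k ∈ Icc 1 K, D k ω = d k} = pathWeight Pr D K d

def survivalRate (Pr : Measure Ω) (D : ℕ → Ω → ℕ) (k t q : ℕ) : ℝ :=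
  Pr.real (survivalEvent D k (t + 1) q) / Pr.real (survivalEvent D k t q)

/-- The left-hand side of the slack identity, with `U l s p` in place of
`∑ j, a i j * u j l s p`; the conditional probability `P(D^k ≥ t | D^k ≥ s, D^{k-1} = q)` of the
current stage is `S k t q / S k s q` for `s ≤ t`. -/
def remainingCapacity (Pr : Measure Ω) (D : ℕ → Ω → ℕ) (T : ℕ) (c : ℝ)
    (U : ℕ → ℕ → ℕ → ℝ) (k t q : ℕ) : ℝ :=
  Pr.real (survivalEvent D k t q) * c
    - ∑ l ∈ Icc 1 (k - 1), ∑ s ∈ Icc 1 T, ∑ p ∈ Icc 1 T,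
        Pr.real (survivalEvent D k t q ∩ survivalEvent D l s p) /
          Pr.real (survivalEvent D l s p) * U l s p
    - ∑ s ∈ Icc 1 t, Pr.real (survivalEvent D k t q) / Pr.real (survivalEvent D k s q) * U k s q

variable {Pr : Measure Ω} {D : ℕ → Ω → ℕ} {K T D0 : ℕ}

theorem sum_pathWeight_markov {m : ℕ} (hm : m ≤ K) (q : ℕ) (φ ψ : (ℕ → ℕ) → Prop)
    [DecidablePred φ] [DecidablePred ψ] (hφ : DependsOn φ (Set.Icc m K))
    (hψ : DependsOn ψ (Set.Iic m)) :
    (∑ d ∈ demandPaths K T D0 with (φ d ∧ d m = q) ∧ ψ d, pathWeight Pr D K d) *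
        ∑ d ∈ demandPaths K T D0 with d m = q, pathWeight Pr D K d =
      (∑ d ∈ demandPaths K T D0 with φ d ∧ d m = q, pathWeight Pr D K d) *
        ∑ d ∈ demandPaths K T D0 with d m = q ∧ ψ d, pathWeight Pr D K d := by
  let S := (demandPaths K T D0).filter (· m = q)
  -- the weight of a path factors into the transitions up to stage `m` and after it
  let P : (ℕ → ℕ) → ℝ := fun d => ∏ k ∈ Ioc 0 m, transitionRatio Pr D k d
  let F : (ℕ → ℕ) → ℝ := fun d => ∏ k ∈ Ioc m K, transitionRatio Pr D k d
  have hW : pathWeight Pr D K = fun d => P d * F d :=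
    funext fun d => (prod_Ioc_consecutive _ (Nat.zero_le m) hm).symm
  have hpast : ∀ x ∈ S, ∀ y ∈ S, ∀ n ∈ Set.Iic m, spliceAt m x y n = x n := by
    intro x hx y hy n hn
    rcases (Set.mem_Iic.1 hn).lt_or_eq with hn | rfl
    · exact spliceAt_of_lt x y hn
    · rw [spliceAt_of_le x y le_rfl, (mem_filter.1 hx).2, (mem_filter.1 hy).2]
  have hfuture : ∀ x y, ∀ n ∈ Set.Ici m, spliceAt m x y n = y n :=
    fun x y n hn => spliceAt_of_le x y hn
  have key := sum_filter_and_mul_sum_eq_of_splice S (spliceAt m)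
    (fun x hx y hy => mem_filter.2 ⟨spliceAt_mem_demandPaths (mem_filter.1 hx).1
      (mem_filter.1 hy).1, (spliceAt_of_le x y le_rfl).trans (mem_filter.1 hy).2⟩)
    (spliceAt_spliceAt m) P F ψ φ
    (fun x hx y hy => prod_congr rfl fun k hk => by
      have hk := mem_Ioc.1 hk
      exact transitionRatio_congr (hpast x hx y hy k (Set.mem_Iic.2 hk.2))
        (hpast x hx y hy (k - 1) (Set.mem_Iic.2 (by omega))))
    (fun x hx y hy => (hψ (hpast x hx y hy)).to_iff)
    (fun x _ y _ => prod_congr rfl fun k hk => by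
      have hk := mem_Ioc.1 hk
      exact transitionRatio_congr (hfuture x y k (Set.mem_Ici.2 hk.1.le))
        (hfuture x y (k - 1) (Set.mem_Ici.2 (by omega))))
    (fun x _ y _ => (hφ fun n hn => hfuture x y n (Set.mem_Ici.2 hn.1)).to_iff)
  simp only [S, filter_filter] at key
  rw [hW]
  convert key.trans (mul_comm _ _) using 2 <;>
    exact sum_congr (filter_congr fun d _ => by tauto) fun _ _ => rfl

theorem measurable_truncatedPath (hD : ∀ k, Measurable (D k)) :
    Measurable (truncatedPath D K) :=
  measurable_pi_lambda _ fun n => by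
    by_cases hn : n ≤ K
    · simpa [truncatedPath, hn] using hD n
    · simp [truncatedPath, hn]

theorem measurableSet_survivalEvent (hD : ∀ k, Measurable (D k)) (k t q : ℕ) :
    MeasurableSet (survivalEvent D k t q) :=
  (hD k .of_discrete).inter (hD (k - 1) (.of_discrete (s := {q})))

theorem IsMarkovDemand.ae_mem_Icc (hD : IsMarkovDemand Pr D K T D0) {k : ℕ} (hk : k ≤ K) :
    ∀ᵐ ω ∂Pr, D k ω ∈ Icc 1 T := by
  rcases Nat.eq_zero_or_pos k with rfl | hk0
  · filter_upwards [hD.ae_initial] with ω h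
    exact h ▸ hD.initial_mem
  · exact hD.ae_mem k (mem_Icc.2 ⟨hk0, hk⟩)

theorem IsMarkovDemand.ae_truncatedPath_mem (hD : IsMarkovDemand Pr D K T D0) :
    ∀ᵐ ω ∂Pr, truncatedPath D K ω ∈ demandPaths K T D0 := by
  filter_upwards [hD.ae_initial, (Finset.eventually_all _).2 hD.ae_mem] with ω h0 hmem
  refine mem_demandPaths.2 ⟨?_, fun k hk => ?_, fun n hn => if_neg (Nat.not_le.2 hn)⟩
  · rwa [truncatedPath_of_le ω K.zero_le]
  · rw [truncatedPath_of_le ω (mem_Icc.1 hk).2]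
    exact hmem k hk

theorem IsMarkovDemand.measureReal_truncatedPath_preimage (hD : IsMarkovDemand Pr D K T D0)
    {d : ℕ → ℕ} (hd : d ∈ demandPaths K T D0) :
    Pr.real (truncatedPath D K ⁻¹' {d}) = pathWeight Pr D K d := by
  obtain ⟨h0, hmem, hzero⟩ := mem_demandPaths.1 hd
  rw [← hD.measureReal_path d h0 hmem]
  refine measureReal_congr (Filter.eventuallyEq_set.2 ?_)
  filter_upwards [hD.ae_initial] with ω hω
  refine ⟨fun h k hk => ?_, fun h => funext fun n => ?_⟩
  · rw [← truncatedPath_of_le (D := D) ω (mem_Icc.1 hk).2]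
    exact congrFun h k
  · rcases Nat.eq_zero_or_pos n with rfl | hn
    · rw [truncatedPath_of_le ω K.zero_le, hω, h0]
    by_cases hnK : n ≤ K
    · rw [truncatedPath_of_le ω hnK]
      exact h n (mem_Icc.2 ⟨hn, hnK⟩)
    · rw [truncatedPath, if_neg hnK, hzero n (by omega)]

theorem IsMarkovDemand.measureReal_survivalEvent_one_one [IsProbabilityMeasure Pr]
    (hD : IsMarkovDemand Pr D K T D0) (hK : 1 ≤ K) (q : ℕ) :
    Pr.real (survivalEvent D 1 1 q) = if D0 = q then 1 else 0 := by
  have hae : survivalEvent D 1 1 q =ᵐ[Pr] {_ω | D0 = q} := by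
    refine Filter.eventuallyEq_set.2 ?_
    filter_upwards [hD.ae_initial, hD.ae_mem 1 (mem_Icc.2 ⟨le_rfl, hK⟩)] with ω h0 h1
    simp [survivalEvent, h0, (mem_Icc.1 h1).1]
  rw [measureReal_congr hae]
  split_ifs with h <;> simp [h]

theorem remainingCapacity_sum_mul {J : Type*} [Fintype J] (c : ℝ) (a : J → ℝ)
    (u : J → ℕ → ℕ → ℕ → ℝ) (k t q : ℕ) :
    remainingCapacity Pr D T c (fun l s p => ∑ j, a j * u j l s p) k t q =
      Pr.real {ω | t ≤ D k ω ∧ D (k - 1) ω = q} * c -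
        ∑ l ∈ Icc 1 (k - 1), ∑ s ∈ Icc 1 T, ∑ p ∈ Icc 1 T, ∑ j, a j *
          (Pr.real {ω | (t ≤ D k ω ∧ D (k - 1) ω = q) ∧ s ≤ D l ω ∧ D (l - 1) ω = p} /
            Pr.real {ω | s ≤ D l ω ∧ D (l - 1) ω = p}) * u j l s p -
        ∑ s ∈ Icc 1 t, ∑ j, a j *
          (Pr.real {ω | t ≤ D k ω ∧ s ≤ D k ω ∧ D (k - 1) ω = q} /
            Pr.real {ω | s ≤ D k ω ∧ D (k - 1) ω = q}) * u j k s q := by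
  have hS : ∀ k t q, {ω | t ≤ D k ω ∧ D (k - 1) ω = q} = survivalEvent D k t q :=
    fun _ _ _ => rfl
  have hcross : ∀ l s p, {ω | (t ≤ D k ω ∧ D (k - 1) ω = q) ∧ s ≤ D l ω ∧ D (l - 1) ω = p} =
      survivalEvent D k t q ∩ survivalEvent D l s p := fun _ _ _ => rfl
  have hown : ∀ s ∈ Icc 1 t, {ω | t ≤ D k ω ∧ s ≤ D k ω ∧ D (k - 1) ω = q} =
      survivalEvent D k t q := fun s hs =>
    Set.ext fun ω => ⟨fun h => ⟨h.1, h.2.2⟩, fun h => ⟨h.1, (mem_Icc.1 hs).2.trans h.1, h.2⟩⟩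
  simp only [hcross, hS, remainingCapacity, mul_sum]
  congr 1
  · congr 1
    exact sum_congr rfl fun l _ => sum_congr rfl fun s _ => sum_congr rfl fun p _ =>
      sum_congr rfl fun j _ => by ring
  · refine sum_congr rfl fun s hs => ?_
    rw [hown s hs]
    exact sum_congr rfl fun j _ => by ring

section FiniteMeasure

variable [IsFiniteMeasure Pr]

theorem IsMarkovDemand.measureReal_eq_sum_pathWeight (hD : IsMarkovDemand Pr D K T D0)
    (χ : (ℕ → ℕ) → Prop) [DecidablePred χ] (hχ : DependsOn χ (Set.Iic K)) :
    Pr.real {ω | χ (D · ω)} = ∑ d ∈ demandPaths K T D0 with χ d, pathWeight Pr D K d := by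
  have hmeas := measurable_truncatedPath (K := K) hD.measurable
  calc Pr.real {ω | χ (D · ω)}
      = Pr.real (truncatedPath D K ⁻¹' ↑(demandPaths K T D0 |>.filter χ)) := by
        refine measureReal_congr (Filter.eventuallyEq_set.2 ?_)
        filter_upwards [hD.ae_truncatedPath_mem] with ω hω
        simp only [Set.mem_preimage, coe_filter, Set.mem_ofPred_eq, and_iff_right hω]
        rw [hχ fun n hn => (truncatedPath_of_le ω hn).symm]
    _ = ∑ d ∈ demandPaths K T D0 with χ d, Pr.real (truncatedPath D K ⁻¹' {d}) :=
        (sum_measureReal_preimage_singleton _ fun d _ => hmeas (measurableSet_singleton d)).symm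
    _ = ∑ d ∈ demandPaths K T D0 with χ d, pathWeight Pr D K d :=
        sum_congr rfl fun d hd => hD.measureReal_truncatedPath_preimage (mem_filter.1 hd).1

/-- The Markov property: past and future are independent given `D m = q`. -/
theorem IsMarkovDemand.measureReal_inter_mul (hD : IsMarkovDemand Pr D K T D0) {m : ℕ}
    (hm : m ≤ K) (q : ℕ) (φ ψ : (ℕ → ℕ) → Prop) [DecidablePred φ] [DecidablePred ψ]
    (hφ : DependsOn φ (Set.Icc m K)) (hψ : DependsOn ψ (Set.Iic m)) :
    Pr.real ({ω | φ (D · ω) ∧ D m ω = q} ∩ {ω | ψ (D · ω)}) * Pr.real {ω | D m ω = q} =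
      Pr.real {ω | φ (D · ω) ∧ D m ω = q} * Pr.real ({ω | D m ω = q} ∩ {ω | ψ (D · ω)}) := by
  have hφK : DependsOn φ (Set.Iic K) := hφ.mono fun n hn => hn.2
  have hψK : DependsOn ψ (Set.Iic K) := hψ.mono fun n hn => le_trans hn hm
  have hqK : DependsOn (fun d : ℕ → ℕ => d m = q) (Set.Iic K) := fun x y h => by
    simp only [h m hm]
  rw [← Set.ofPred_and, ← Set.ofPred_and,
    hD.measureReal_eq_sum_pathWeight (fun d => (φ d ∧ d m = q) ∧ ψ d)
      (fun x y h => by simp only [hφK h, hqK h, hψK h]),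
    hD.measureReal_eq_sum_pathWeight (fun d => d m = q) hqK,
    hD.measureReal_eq_sum_pathWeight (fun d => φ d ∧ d m = q)
      (fun x y h => by simp only [hφK h, hqK h]),
    hD.measureReal_eq_sum_pathWeight (fun d => d m = q ∧ ψ d)
      (fun x y h => by simp only [hψK h, hqK h])]
  exact sum_pathWeight_markov hm q φ ψ hφ hψ

theorem measureReal_survivalEvent_succ (k t q : ℕ) :
    Pr.real (survivalEvent D k (t + 1) q) =
      survivalRate Pr D k t q * Pr.real (survivalEvent D k t q) :=
  (div_mul_cancel_of_imp fun h => measureReal_mono_null (survivalEvent_anti t.le_succ) h).symm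

theorem IsMarkovDemand.measureReal_survivalEvent_succ_inter (hD : IsMarkovDemand Pr D K T D0)
    {k l : ℕ} (hk : k ≤ K) (hl : l ≤ k - 1) (t q s p : ℕ) :
    Pr.real (survivalEvent D k (t + 1) q ∩ survivalEvent D l s p) =
      survivalRate Pr D k t q * Pr.real (survivalEvent D k t q ∩ survivalEvent D l s p) := by
  have markov : ∀ t, Pr.real (survivalEvent D k t q ∩ survivalEvent D l s p) *
      Pr.real {ω | D (k - 1) ω = q} = Pr.real (survivalEvent D k t q) *
        Pr.real ({ω | D (k - 1) ω = q} ∩ survivalEvent D l s p) := fun t =>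
    hD.measureReal_inter_mul (by omega) q (fun d => t ≤ d k) (fun d => s ≤ d l ∧ d (l - 1) = p)
      (fun x y h => by simp only [h k ⟨by omega, hk⟩])
      (fun x y h => by simp only [h l hl, h (l - 1) (by simp; omega)])
  by_cases hq : Pr.real {ω | D (k - 1) ω = q} = 0
  · have hnull : ∀ t, Pr.real (survivalEvent D k t q ∩ survivalEvent D l s p) = 0 := fun t =>
      measureReal_mono_null (fun ω hω => hω.1.2) hq
    rw [hnull, hnull, mul_zero]
  · apply mul_right_cancel₀ hq
    rw [markov, mul_assoc, markov, measureReal_survivalEvent_succ, mul_assoc]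

theorem IsMarkovDemand.measureReal_survivalEvent_one_inter (hD : IsMarkovDemand Pr D K T D0)
    {k : ℕ} (hk : k + 1 ≤ K) (q : ℕ) {B : Set Ω} (hB : MeasurableSet B) :
    Pr.real (survivalEvent D (k + 1) 1 q ∩ B) = ∑ p ∈ Icc 1 T,
      (Pr.real (survivalEvent D k q p ∩ B) - Pr.real (survivalEvent D k (q + 1) p ∩ B)) := by
  have hmeas p := (measurableSet_survivalEvent hD.measurable k (q + 1) p).inter hB
  calc Pr.real (survivalEvent D (k + 1) 1 q ∩ B)
      = Pr.real (⋃ p ∈ Icc 1 T,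
          (survivalEvent D k q p ∩ B) \ (survivalEvent D k (q + 1) p ∩ B)) := by
        refine measureReal_congr (Filter.eventuallyEq_set.2 ?_)
        filter_upwards [hD.ae_mem (k + 1) (mem_Icc.2 ⟨by omega, hk⟩),
          hD.ae_mem_Icc (k := k - 1) (by omega)] with ω hω hω'
        simp only [mem_Icc] at hω hω'
        simp only [survivalEvent, Set.mem_iUnion, Set.mem_sdiff, Set.mem_inter_iff,
          Set.mem_ofPred_eq, mem_Icc, exists_prop, Nat.add_sub_cancel]
        constructor
        · rintro ⟨⟨-, rfl⟩, hωB⟩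
          exact ⟨D (k - 1) ω, hω', ⟨⟨le_rfl, rfl⟩, hωB⟩, fun h => by omega⟩
        · rintro ⟨p, -, ⟨⟨h1, rfl⟩, hωB⟩, h2⟩
          exact ⟨⟨hω.1, by by_contra h; exact h2 ⟨⟨by omega, rfl⟩, hωB⟩⟩, hωB⟩
    _ = ∑ p ∈ Icc 1 T,
          Pr.real ((survivalEvent D k q p ∩ B) \ (survivalEvent D k (q + 1) p ∩ B)) :=
        measureReal_biUnion_finset
          (fun p _ p' _ hpp' => Set.disjoint_left.2 fun ω hω hω' =>
            hpp' (hω.1.1.2.symm.trans hω'.1.1.2))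
          (fun p _ => ((measurableSet_survivalEvent hD.measurable k q p).inter hB).diff (hmeas p))
    _ = _ := sum_congr rfl fun p _ => measureReal_sdiff
        (Set.inter_subset_inter_left _ (survivalEvent_anti q.le_succ)) (hmeas p)

theorem IsMarkovDemand.measureReal_survivalEvent_one (hD : IsMarkovDemand Pr D K T D0)
    {k : ℕ} (hk : k + 1 ≤ K) (q : ℕ) :
    Pr.real (survivalEvent D (k + 1) 1 q) =
      ∑ p ∈ Icc 1 T, (1 - survivalRate Pr D k q p) * Pr.real (survivalEvent D k q p) := by
  simpa only [Set.inter_univ, measureReal_survivalEvent_succ, ← one_sub_mul] using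
    hD.measureReal_survivalEvent_one_inter hk q MeasurableSet.univ

theorem IsMarkovDemand.measureReal_survivalEvent_one_inter_past
    (hD : IsMarkovDemand Pr D K T D0) {k l : ℕ} (hk : k + 1 ≤ K) (hl : l ≤ k - 1) (q s p : ℕ) :
    Pr.real (survivalEvent D (k + 1) 1 q ∩ survivalEvent D l s p) =
      ∑ p' ∈ Icc 1 T, (1 - survivalRate Pr D k q p') *
        Pr.real (survivalEvent D k q p' ∩ survivalEvent D l s p) := by
  simp only [hD.measureReal_survivalEvent_one_inter hk q
    (measurableSet_survivalEvent hD.measurable l s p),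
    hD.measureReal_survivalEvent_succ_inter (by omega : k ≤ K) hl, ← one_sub_mul]

theorem IsMarkovDemand.measureReal_survivalEvent_one_inter_self
    (hD : IsMarkovDemand Pr D K T D0) {k : ℕ} (hk : k + 1 ≤ K) (q s : ℕ) {p : ℕ}
    (hp : p ∈ Icc 1 T) :
    Pr.real (survivalEvent D (k + 1) 1 q ∩ survivalEvent D k s p) =
      if s ≤ q then (1 - survivalRate Pr D k q p) * Pr.real (survivalEvent D k q p) else 0 := by
  rw [hD.measureReal_survivalEvent_one_inter hk q
    (measurableSet_survivalEvent hD.measurable k s p), sum_eq_single p _ (absurd hp)]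
  · split_ifs with hsq
    · rw [Set.inter_eq_left.2 (survivalEvent_anti hsq),
        Set.inter_eq_left.2 (survivalEvent_anti (hsq.trans q.le_succ)),
        measureReal_survivalEvent_succ]
      ring
    · rw [Set.inter_eq_right.2 (survivalEvent_anti (by omega)),
        Set.inter_eq_right.2 (survivalEvent_anti (by omega)), sub_self]
  · intro p' _ hp'
    have hdisj : ∀ t, survivalEvent D k t p' ∩ survivalEvent D k s p = ∅ := fun t =>
      Set.disjoint_iff_inter_eq_empty.1 <|
        Set.disjoint_left.2 fun ω hω hω' => hp' (hω.2.symm.trans hω'.2)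
    rw [hdisj, hdisj, measureReal_empty, sub_zero]

variable {c : ℝ} {U : ℕ → ℕ → ℕ → ℝ}

theorem IsMarkovDemand.remainingCapacity_succ_period (hD : IsMarkovDemand Pr D K T D0)
    {k : ℕ} (hk : k ≤ K) (t q : ℕ)
    (hU : Pr.real (survivalEvent D k (t + 1) q) = 0 → U k (t + 1) q = 0) :
    remainingCapacity Pr D T c U k (t + 1) q + U k (t + 1) q =
      survivalRate Pr D k t q * remainingCapacity Pr D T c U k t q := by
  have past : ∑ l ∈ Icc 1 (k - 1), ∑ s ∈ Icc 1 T, ∑ p ∈ Icc 1 T,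
      Pr.real (survivalEvent D k (t + 1) q ∩ survivalEvent D l s p) /
        Pr.real (survivalEvent D l s p) * U l s p =
      survivalRate Pr D k t q * ∑ l ∈ Icc 1 (k - 1), ∑ s ∈ Icc 1 T, ∑ p ∈ Icc 1 T,
        Pr.real (survivalEvent D k t q ∩ survivalEvent D l s p) /
          Pr.real (survivalEvent D l s p) * U l s p := by
    simp only [mul_sum]
    refine sum_congr rfl fun l hl => sum_congr rfl fun s _ => sum_congr rfl fun p _ => ?_
    rw [hD.measureReal_survivalEvent_succ_inter hk (mem_Icc.1 hl).2]
    ring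
  have present : ∑ s ∈ Icc 1 t, Pr.real (survivalEvent D k (t + 1) q) /
      Pr.real (survivalEvent D k s q) * U k s q =
      survivalRate Pr D k t q * ∑ s ∈ Icc 1 t, Pr.real (survivalEvent D k t q) /
        Pr.real (survivalEvent D k s q) * U k s q := by
    rw [measureReal_survivalEvent_succ, mul_sum]
    exact sum_congr rfl fun s _ => by ring
  rw [remainingCapacity, remainingCapacity, sum_Icc_succ_top (by omega), div_self_mul_of_imp hU,
    past, present, measureReal_survivalEvent_succ]
  ring

theorem IsMarkovDemand.remainingCapacity_succ_stage (hD : IsMarkovDemand Pr D K T D0)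
    {k : ℕ} (hk1 : 1 ≤ k) (hk : k + 1 ≤ K) {q : ℕ} (hq : q ∈ Icc 1 T)
    (hU : Pr.real (survivalEvent D (k + 1) 1 q) = 0 → U (k + 1) 1 q = 0) :
    remainingCapacity Pr D T c U (k + 1) 1 q + U (k + 1) 1 q =
      ∑ p ∈ Icc 1 T, (1 - survivalRate Pr D k q p) * remainingCapacity Pr D T c U k q p := by
  have past : ∑ l ∈ Icc 1 (k - 1), ∑ s ∈ Icc 1 T, ∑ p ∈ Icc 1 T,
      Pr.real (survivalEvent D (k + 1) 1 q ∩ survivalEvent D l s p) /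
        Pr.real (survivalEvent D l s p) * U l s p =
      ∑ p' ∈ Icc 1 T, (1 - survivalRate Pr D k q p') *
        ∑ l ∈ Icc 1 (k - 1), ∑ s ∈ Icc 1 T, ∑ p ∈ Icc 1 T,
          Pr.real (survivalEvent D k q p' ∩ survivalEvent D l s p) /
            Pr.real (survivalEvent D l s p) * U l s p := by
    simp only [mul_sum]
    conv_rhs => rw [sum_comm]
    refine sum_congr rfl fun l hl => ?_
    conv_rhs => rw [sum_comm]
    refine sum_congr rfl fun s _ => ?_
    conv_rhs => rw [sum_comm]
    refine sum_congr rfl fun p _ => ?_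
    rw [hD.measureReal_survivalEvent_one_inter_past hk (mem_Icc.1 hl).2, sum_div, sum_mul]
    exact sum_congr rfl fun p' _ => by ring
  have present : ∑ s ∈ Icc 1 T, ∑ p ∈ Icc 1 T,
      Pr.real (survivalEvent D (k + 1) 1 q ∩ survivalEvent D k s p) /
        Pr.real (survivalEvent D k s p) * U k s p =
      ∑ p ∈ Icc 1 T, (1 - survivalRate Pr D k q p) *
        ∑ s ∈ Icc 1 q, Pr.real (survivalEvent D k q p) / Pr.real (survivalEvent D k s p) *
          U k s p := by
    have hIcc : (Icc 1 T).filter (· ≤ q) = Icc 1 q := by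
      ext s
      simp only [mem_filter, mem_Icc]
      have := mem_Icc.1 hq
      omega
    rw [sum_comm]
    refine sum_congr rfl fun p hp => ?_
    simp only [hD.measureReal_survivalEvent_one_inter_self hk q _ hp, ite_div, zero_div,
      ite_mul, zero_mul, ← sum_filter, hIcc, mul_sum]
    exact sum_congr rfl fun s _ => by ring
  have hsplit : ∀ f : ℕ → ℝ, ∑ l ∈ Icc 1 k, f l = ∑ l ∈ Icc 1 (k - 1), f l + f k := fun f => by
    obtain ⟨k, rfl⟩ : ∃ k', k = k' + 1 := ⟨k - 1, by omega⟩
    rw [sum_Icc_succ_top (by omega), Nat.add_sub_cancel]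
  rw [remainingCapacity, Nat.add_sub_cancel, Icc_self, sum_singleton, div_self_mul_of_imp hU,
    hsplit, past, present, hD.measureReal_survivalEvent_one hk]
  simp only [remainingCapacity, mul_sub, sum_sub_distrib, sum_mul, mul_assoc]
  ring

end FiniteMeasure

variable {θ : ℕ → ℕ → ℕ → ℝ}

theorem IsMarkovDemand.isBalanced_survival [IsProbabilityMeasure Pr]
    (hD : IsMarkovDemand Pr D K T D0) (hK : 1 ≤ K)
    (hθ : ∀ k ∈ Icc 1 K, ∀ t ∈ Icc 1 T, ∀ q ∈ Icc 1 T, θ k t q = survivalRate Pr D k t q) :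
    IsBalanced K T θ (fun q => if D0 = q then 1 else 0) 0
      (fun k t q => Pr.real (survivalEvent D k t q)) where
  first q _ := by simp [hD.measureReal_survivalEvent_one_one hK]
  succ_period k hk t ht q hq := by
    obtain ⟨t, rfl⟩ : ∃ t', t = t' + 1 := ⟨t - 1, by simp at ht; omega⟩
    rw [Pi.zero_apply, Pi.zero_apply, Pi.zero_apply, add_zero, Nat.add_sub_cancel,
      hθ k hk t (by simp at ht ⊢; omega) q hq, measureReal_survivalEvent_succ]
  succ_stage k hk q hq := by
    obtain ⟨k, rfl⟩ : ∃ k', k = k' + 1 := ⟨k - 1, by simp at hk; omega⟩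
    rw [Pi.zero_apply, Pi.zero_apply, Pi.zero_apply, add_zero, Nat.add_sub_cancel,
      hD.measureReal_survivalEvent_one (mem_Icc.1 hk).2]
    exact sum_congr rfl fun p hp => by rw [hθ k (by simp at hk ⊢; omega) q hq p hp]

theorem IsMarkovDemand.isBalanced_remainingCapacity [IsProbabilityMeasure Pr]
    (hD : IsMarkovDemand Pr D K T D0) (hK : 1 ≤ K) {c : ℝ} {U : ℕ → ℕ → ℕ → ℝ}
    (hθ : ∀ k ∈ Icc 1 K, ∀ t ∈ Icc 1 T, ∀ q ∈ Icc 1 T, θ k t q = survivalRate Pr D k t q)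
    (hU : ∀ k ∈ Icc 1 K, ∀ t ∈ Icc 1 T, ∀ q ∈ Icc 1 T,
      Pr.real (survivalEvent D k t q) = 0 → U k t q = 0) :
    IsBalanced K T θ (fun q => (if D0 = q then 1 else 0) * c) U
      (remainingCapacity Pr D T c U) where
  first q hq := by
    have hT : 1 ∈ Icc 1 T := mem_Icc.2 ⟨le_rfl, (mem_Icc.1 hq).1.trans (mem_Icc.1 hq).2⟩
    rw [remainingCapacity, Icc_self, sum_singleton,
      div_self_mul_of_imp (hU 1 (mem_Icc.2 ⟨le_rfl, hK⟩) 1 hT q hq),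
      hD.measureReal_survivalEvent_one_one hK]
    simp
  succ_period k hk t ht q hq := by
    obtain ⟨t, rfl⟩ : ∃ t', t = t' + 1 := ⟨t - 1, by simp at ht; omega⟩
    rw [Nat.add_sub_cancel, hθ k hk t (by simp at ht ⊢; omega) q hq]
    exact hD.remainingCapacity_succ_period (mem_Icc.1 hk).2 t q
      (hU k hk (t + 1) (by simp at ht ⊢; omega) q hq)
  succ_stage k hk q hq := by
    obtain ⟨k, rfl⟩ : ∃ k', k = k' + 1 := ⟨k - 1, by simp at hk; omega⟩
    have hT : 1 ∈ Icc 1 T := mem_Icc.2 ⟨le_rfl, (mem_Icc.1 hq).1.trans (mem_Icc.1 hq).2⟩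
    rw [Nat.add_sub_cancel, hD.remainingCapacity_succ_stage (by simp at hk; omega)
      (mem_Icc.1 hk).2 hq (hU (k + 1) (by simp at hk ⊢; omega) 1 hT q hq)]
    exact sum_congr rfl fun p hp => by rw [hθ k (by simp at hk ⊢; omega) q hq p hp]

end MarkovDemand

theorem dual_lp_slack_identity_general
    {Ω : Type*} [MeasurableSpace Ω] (Pr : Measure Ω) [IsProbabilityMeasure Pr]
    (K T : ℕ) (hK : 1 ≤ K)
    (D0 : ℕ) (hD0 : D0 ∈ Finset.Icc 1 T)
    (D : ℕ → Ω → ℕ) (hDmeas : ∀ k, Measurable (D k))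
    (hD0as : ∀ᵐ ω ∂Pr, D 0 ω = D0)
    (hDrange : ∀ k ∈ Finset.Icc 1 K, ∀ᵐ ω ∂Pr, D k ω ∈ Finset.Icc 1 T)
    (hMarkov : ∀ d : ℕ → ℕ, d 0 = D0 → (∀ k ∈ Finset.Icc 1 K, d k ∈ Finset.Icc 1 T) →
      (Pr {ω | ∀ k ∈ Finset.Icc 1 K, D k ω = d k}).toReal =
        ∏ k ∈ Finset.Icc 1 K,
          (Pr {ω | D k ω = d k ∧ D (k - 1) ω = d (k - 1)}).toReal /
            (Pr {ω | D (k - 1) ω = d (k - 1)}).toReal)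
    (θ : ℕ → ℕ → ℕ → ℝ)
    (hθ : ∀ k ∈ Finset.Icc 1 K, ∀ t ∈ Finset.Icc 1 T, ∀ q ∈ Finset.Icc 1 T,
      θ k t q = (Pr {ω | t + 1 ≤ D k ω ∧ D (k - 1) ω = q}).toReal /
        (Pr {ω | t ≤ D k ω ∧ D (k - 1) ω = q}).toReal)
    (L J : Type*) [Fintype L] [Fintype J]
    (c : L → ℕ)
    (a : L → J → ℕ)
    (lam : J → ℕ → ℕ → ℝ)
    (y : L → ℕ → ℕ → ℕ → ℝ) (u : J → ℕ → ℕ → ℕ → ℝ) (w : ℕ → ℕ → ℕ → ℝ)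
    (hu0 : ∀ j k t q, 0 ≤ u j k t q)
    (hw1 : ∀ q ∈ Finset.Icc 1 T, w 1 1 q = if D0 = q then (1 : ℝ) else 0)
    (hw2 : ∀ k ∈ Finset.Icc 1 K, ∀ t ∈ Finset.Icc 2 T, ∀ q ∈ Finset.Icc 1 T,
      w k t q = θ k (t - 1) q * w k (t - 1) q)
    (hw3 : ∀ k ∈ Finset.Icc 2 K, ∀ q ∈ Finset.Icc 1 T,
      w k 1 q = ∑ p ∈ Finset.Icc 1 T, (1 - θ (k - 1) q p) * w (k - 1) q p)
    (hyu2 : ∀ i : L, ∀ k ∈ Finset.Icc 1 K, ∀ t ∈ Finset.Icc 2 T, ∀ q ∈ Finset.Icc 1 T,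
      y i k t q + ∑ j, (a i j : ℝ) * u j k t q = θ k (t - 1) q * y i k (t - 1) q)
    (hyu3 : ∀ i : L, ∀ k ∈ Finset.Icc 2 K, ∀ q ∈ Finset.Icc 1 T,
      y i k 1 q + ∑ j, (a i j : ℝ) * u j k 1 q =
        ∑ p ∈ Finset.Icc 1 T, (1 - θ (k - 1) q p) * y i (k - 1) q p)
    (hyu4 : ∀ i : L, ∀ q ∈ Finset.Icc 1 T,
      y i 1 1 q + ∑ j, (a i j : ℝ) * u j 1 1 q =
        (if D0 = q then (1 : ℝ) else 0) * (c i : ℝ))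
    (hu5 : ∀ j : J, ∀ k ∈ Finset.Icc 1 K, ∀ t ∈ Finset.Icc 1 T, ∀ q ∈ Finset.Icc 1 T,
      u j k t q ≤ lam j k t * w k t q) :
    ∀ i : L, ∀ k ∈ Finset.Icc 1 K, ∀ t ∈ Finset.Icc 1 T, ∀ q ∈ Finset.Icc 1 T,
      (Pr {ω | t ≤ D k ω ∧ D (k - 1) ω = q}).toReal * (c i : ℝ) -
        (∑ l ∈ Finset.Icc 1 (k - 1), ∑ s ∈ Finset.Icc 1 T, ∑ p ∈ Finset.Icc 1 T, ∑ j,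
          (a i j : ℝ) *
            ((Pr {ω | (t ≤ D k ω ∧ D (k - 1) ω = q) ∧ s ≤ D l ω ∧ D (l - 1) ω = p}).toReal /
              (Pr {ω | s ≤ D l ω ∧ D (l - 1) ω = p}).toReal) * u j l s p) -
        (∑ s ∈ Finset.Icc 1 t, ∑ j,
          (a i j : ℝ) *
            ((Pr {ω | t ≤ D k ω ∧ s ≤ D k ω ∧ D (k - 1) ω = q}).toReal /
              (Pr {ω | s ≤ D k ω ∧ D (k - 1) ω = q}).toReal) * u j k s q) =
      y i k t q := by
  have hD : IsMarkovDemand Pr D K T D0 := ⟨hDmeas, hD0, hD0as, hDrange, hMarkov⟩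
  have hθ' : ∀ k ∈ Icc 1 K, ∀ t ∈ Icc 1 T, ∀ q ∈ Icc 1 T,
      θ k t q = survivalRate Pr D k t q := hθ
  have hw : ∀ k ∈ Icc 1 K, ∀ t ∈ Icc 1 T, ∀ q ∈ Icc 1 T,
      w k t q = Pr.real (survivalEvent D k t q) :=
    IsBalanced.unique ⟨by simpa using hw1, by simpa using hw2, by simpa using hw3⟩
      (hD.isBalanced_survival hK hθ')
  intro i k hk t ht q hq
  have hU : ∀ k ∈ Icc 1 K, ∀ t ∈ Icc 1 T, ∀ q ∈ Icc 1 T,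
      Pr.real (survivalEvent D k t q) = 0 → ∑ j, (a i j : ℝ) * u j k t q = 0 := by
    intro k hk t ht q hq h0
    refine sum_eq_zero fun j _ => ?_
    have hle := hu5 j k hk t ht q hq
    rw [hw k hk t ht q hq, h0, mul_zero] at hle
    rw [le_antisymm hle (hu0 j k t q), mul_zero]
  rw [← (hD.isBalanced_remainingCapacity hK hθ' hU).unique ⟨hyu4 i, hyu2 i, hyu3 i⟩
    k hk t ht q hq]
  exact (remainingCapacity_sum_mul _ _ u k t q).symm

/-- Slack identity for feasible solutions of the dual linear program: if nonnegative `y`, `u`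
and reals `w` satisfy constraints (i)–(v), then for all `i ∈ L`, `t, q ∈ {1,…,T}` and
`k ∈ {1,…,K}`, the conditional-expected remaining capacity identity holds, where conditional
probabilities given null events are interpreted as `0`. -/
theorem dual_lp_slack_identity
    {Ω : Type*} [MeasurableSpace Ω] (Pr : Measure Ω) [IsProbabilityMeasure Pr]
    (K T : ℕ) (hK : 1 ≤ K) (hT : 1 ≤ T)
    (ε : ℝ) (hε : 0 < ε)
    (D0 : ℕ) (hD0 : D0 ∈ Finset.Icc 1 T)
    (D : ℕ → Ω → ℕ) (hDmeas : ∀ k, Measurable (D k))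
    (hD0as : ∀ᵐ ω ∂Pr, D 0 ω = D0)
    (hDrange : ∀ k ∈ Finset.Icc 1 K, ∀ᵐ ω ∂Pr, D k ω ∈ Finset.Icc 1 T)
    (hMarkov : ∀ d : ℕ → ℕ, d 0 = D0 → (∀ k ∈ Finset.Icc 1 K, d k ∈ Finset.Icc 1 T) →
      (Pr {ω | ∀ k ∈ Finset.Icc 1 K, D k ω = d k}).toReal =
        ∏ k ∈ Finset.Icc 1 K,
          (Pr {ω | D k ω = d k ∧ D (k - 1) ω = d (k - 1)}).toReal /
            (Pr {ω | D (k - 1) ω = d (k - 1)}).toReal)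
    (hLB : ∀ k < K, ∀ p ∈ Finset.Icc 1 T, ∀ q ∈ Finset.Icc 1 T,
      0 < Pr {ω | D k ω = q} →
      ε ≤ (Pr {ω | D (k + 1) ω = p ∧ D k ω = q}).toReal / (Pr {ω | D k ω = q}).toReal)
    (θ : ℕ → ℕ → ℕ → ℝ)
    (hθ : ∀ k ∈ Finset.Icc 1 K, ∀ t ∈ Finset.Icc 1 T, ∀ q ∈ Finset.Icc 1 T,
      θ k t q = (Pr {ω | t + 1 ≤ D k ω ∧ D (k - 1) ω = q}).toReal /
        (Pr {ω | t ≤ D k ω ∧ D (k - 1) ω = q}).toReal)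
    (L J : Type*) [Fintype L] [Nonempty L] [Fintype J] [Nonempty J]
    (c : L → ℕ) (hc : ∀ i, 1 ≤ c i)
    (a : L → J → ℕ) (ha : ∀ i j, a i j ≤ 1)
    (lam : J → ℕ → ℕ → ℝ)
    (hlam0 : ∀ j k t, 0 ≤ lam j k t)
    (hlam1 : ∀ k ∈ Finset.Icc 1 K, ∀ t ∈ Finset.Icc 1 T, ∑ j, lam j k t = 1)
    (y : L → ℕ → ℕ → ℕ → ℝ) (u : J → ℕ → ℕ → ℕ → ℝ) (w : ℕ → ℕ → ℕ → ℝ)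
    (hy0 : ∀ i k t q, 0 ≤ y i k t q) (hu0 : ∀ j k t q, 0 ≤ u j k t q)
    (hw1 : ∀ q ∈ Finset.Icc 1 T, w 1 1 q = if D0 = q then (1 : ℝ) else 0)
    (hw2 : ∀ k ∈ Finset.Icc 1 K, ∀ t ∈ Finset.Icc 2 T, ∀ q ∈ Finset.Icc 1 T,
      w k t q = θ k (t - 1) q * w k (t - 1) q)
    (hw3 : ∀ k ∈ Finset.Icc 2 K, ∀ q ∈ Finset.Icc 1 T,
      w k 1 q = ∑ p ∈ Finset.Icc 1 T, (1 - θ (k - 1) q p) * w (k - 1) q p)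
    (hyu2 : ∀ i : L, ∀ k ∈ Finset.Icc 1 K, ∀ t ∈ Finset.Icc 2 T, ∀ q ∈ Finset.Icc 1 T,
      y i k t q + ∑ j, (a i j : ℝ) * u j k t q = θ k (t - 1) q * y i k (t - 1) q)
    (hyu3 : ∀ i : L, ∀ k ∈ Finset.Icc 2 K, ∀ q ∈ Finset.Icc 1 T,
      y i k 1 q + ∑ j, (a i j : ℝ) * u j k 1 q =
        ∑ p ∈ Finset.Icc 1 T, (1 - θ (k - 1) q p) * y i (k - 1) q p)
    (hyu4 : ∀ i : L, ∀ q ∈ Finset.Icc 1 T,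
      y i 1 1 q + ∑ j, (a i j : ℝ) * u j 1 1 q =
        (if D0 = q then (1 : ℝ) else 0) * (c i : ℝ))
    (hu5 : ∀ j : J, ∀ k ∈ Finset.Icc 1 K, ∀ t ∈ Finset.Icc 1 T, ∀ q ∈ Finset.Icc 1 T,
      u j k t q ≤ lam j k t * w k t q) :
    ∀ i : L, ∀ k ∈ Finset.Icc 1 K, ∀ t ∈ Finset.Icc 1 T, ∀ q ∈ Finset.Icc 1 T,
      (Pr {ω | t ≤ D k ω ∧ D (k - 1) ω = q}).toReal * (c i : ℝ) -
        (∑ l ∈ Finset.Icc 1 (k - 1), ∑ s ∈ Finset.Icc 1 T, ∑ p ∈ Finset.Icc 1 T, ∑ j,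
          (a i j : ℝ) *
            ((Pr {ω | (t ≤ D k ω ∧ D (k - 1) ω = q) ∧ s ≤ D l ω ∧ D (l - 1) ω = p}).toReal /
              (Pr {ω | s ≤ D l ω ∧ D (l - 1) ω = p}).toReal) * u j l s p) -
        (∑ s ∈ Finset.Icc 1 t, ∑ j,
          (a i j : ℝ) *
            ((Pr {ω | t ≤ D k ω ∧ s ≤ D k ω ∧ D (k - 1) ω = q}).toReal /
              (Pr {ω | s ≤ D k ω ∧ D (k - 1) ω = q}).toReal) * u j k s q) =
      y i k t q :=
  dual_lp_slack_identity_general Pr K T hK D0 hD0 D hDmeas hD0as hDrange hMarkov θ hθ L J c a lam y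
    u w hu0 hw1 hw2 hw3 hyu2 hyu3 hyu4 hu5
end

section
/- Linearity of the relaxed (Lagrangian) value functions (Lemma EC.1): for every family of Lagrange multipliers μ, the relaxed value functions satisfy J̃_t^k(y,q;μ) = Σ_{i∈L} α_{it}^k(q)·y_i + β_t^k(q) for all t,q ∈ {1,…,T}, k ∈ {1,…,K} and all y ∈ ℤ^L, where α and β are the slopes and intercepts defined by the stated recursions. -/
open MeasureTheory Finset

/-!
Backward induction over the stages `k` and periods `t`. Once the continuation values
`J̃_{t+1}^k(·, q)` and `J̃_1^{k+1}(·, t)` are affine in the inventory, accepting product `j`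
shifts them by `-a_j u_j`, so the Bellman objective becomes the separable expression
`Σ_j λ_j (f_j - Σ_i a_ij α_i) u_j` plus terms independent of `u`. Its maximum over
`u ∈ {0,1}^J` is `Σ_j λ_j [f_j - Σ_i a_ij α_i]⁺`, which is exactly the new part of `β`.
-/

theorem isGreatest_weighted_sum_binary {J : Type*} [Fintype J] (w c : J → ℝ)
    (hw : ∀ j, 0 ≤ w j) (C : ℝ) :
    IsGreatest {r : ℝ | ∃ v : J → ℕ, (∀ j, v j ≤ 1) ∧ r = ∑ j, w j * (c j * (v j : ℝ)) + C}
      (∑ j, w j * max (c j) 0 + C) := by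
  refine ⟨⟨fun j => if 0 ≤ c j then 1 else 0, fun j => by dsimp only; split_ifs <;> simp, ?_⟩,
    ?_⟩
  · congr 1
    refine sum_congr rfl fun j _ => ?_
    dsimp only
    split_ifs with h
    · simp [max_eq_left h]
    · simp [max_eq_right (le_of_not_ge h)]
  · rintro r ⟨v, hv, rfl⟩
    gcongr with j _
    · exact hw j
    · rcases Nat.le_one_iff_eq_zero_or_eq_one.mp (hv j) with h | h
      · rw [h, Nat.cast_zero, mul_zero]
        exact le_max_right _ _
      · rw [h, Nat.cast_one, mul_one]
        exact le_max_left _ _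

theorem sum_mul_intCast_sub_natCast {L : Type*} [Fintype L] (c : L → ℝ) (y : L → ℤ)
    (d : L → ℕ) :
    ∑ i, c i * ((y i - d i : ℤ) : ℝ) = ∑ i, c i * (y i : ℝ) - ∑ i, c i * (d i : ℝ) := by
  rw [← sum_sub_distrib]
  refine sum_congr rfl fun i _ => ?_
  push_cast
  ring

/-- `P k t q` concerns period `t` of stage `k` with previous demand `D^{k-1} = q`; stage `k + 1`
is entered at period `1` with previous demand `t`. -/
theorem backward_induction_stage_period {P : ℕ → ℕ → ℕ → Prop} {K T : ℕ}
    (terminal_stage : ∀ q, P (K + 1) 1 q)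
    (terminal_period : ∀ k ∈ Icc 1 K, ∀ q, P k (T + 1) q)
    (step : ∀ k ∈ Icc 1 K, ∀ t ∈ Icc 1 T, ∀ q ∈ Icc 1 T,
      P k (t + 1) q → P (k + 1) 1 t → P k t q) :
    ∀ k ∈ Icc 1 K, ∀ t ∈ Icc 1 T, ∀ q ∈ Icc 1 T, P k t q := by
  have stage : ∀ k ∈ Icc 1 K, (∀ s ∈ Icc 1 T, P (k + 1) 1 s) →
      ∀ t ∈ Icc 1 T, ∀ q ∈ Icc 1 T, P k t q := by
    intro k hk hnext t ht
    rw [mem_Icc] at ht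
    refine Nat.decreasingInduction' (P := fun t => ∀ q ∈ Icc 1 T, P k t q)
      (fun s hsT hts hsucc q hq => ?_) (by omega : t ≤ T + 1)
      (fun q _ => terminal_period k hk q)
    have hs : s ∈ Icc 1 T := mem_Icc.2 ⟨by omega, by omega⟩
    exact step k hk s hs q hq (hsucc q hq) (hnext s hs)
  have first_period : ∀ k, 1 ≤ k → k ≤ K + 1 → ∀ s ∈ Icc 1 T, P k 1 s := by
    intro k hk1 hkK
    refine Nat.decreasingInduction' (fun j hjK hkj hsucc s hs => ?_) hkK
      (fun s _ => terminal_stage s)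
    have hT : 1 ∈ Icc 1 T := mem_Icc.2 ⟨le_rfl, (mem_Icc.1 hs).1.trans (mem_Icc.1 hs).2⟩
    exact stage j (mem_Icc.2 ⟨by omega, by omega⟩) hsucc 1 hT s hs
  intro k hk
  exact stage k hk (first_period (k + 1) (by omega) (by have := mem_Icc.1 hk; omega))

section BellmanStep

variable {L J : Type*} [Fintype L] [Fintype J] (lam f : J → ℝ) (a : L → J → ℕ) (m : L → ℝ)
  (θ : ℝ) (V W : (L → ℤ) → ℝ) (α αV αW : L → ℝ) (βV βW : ℝ)

theorem bellman_objective_eq_of_affine (hlam : ∑ j, lam j = 1)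
    (hV : ∀ z, V z = ∑ i, αV i * (z i : ℝ) + βV) (hW : ∀ z, W z = ∑ i, αW i * (z i : ℝ) + βW)
    (hα : ∀ i, α i = m i + θ * αV i + (1 - θ) * αW i) (y : L → ℤ) (v : J → ℕ) :
    (∑ j, lam j *
        ((f j - ∑ i, (a i j : ℝ) * m i) * (v j : ℝ) +
          θ * V (fun i => y i - (a i j * v j : ℕ)) +
          (1 - θ) * W (fun i => y i - (a i j * v j : ℕ)))) + ∑ i, m i * (y i : ℝ) =
      ∑ j, lam j * ((f j - ∑ i, (a i j : ℝ) * α i) * (v j : ℝ)) +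
        (∑ i, α i * (y i : ℝ) + θ * βV + (1 - θ) * βW) := by
  have hαsum : ∀ x : L → ℝ, ∑ i, x i * α i =
      ∑ i, x i * m i + θ * ∑ i, x i * αV i + (1 - θ) * ∑ i, x i * αW i := by
    intro x
    simp only [hα, mul_sum, ← sum_add_distrib]
    exact sum_congr rfl fun i _ => by ring
  have hshift : ∀ (j : J) (c : L → ℝ),
      ∑ i, c i * ((a i j * v j : ℕ) : ℝ) = (∑ i, (a i j : ℝ) * c i) * (v j : ℝ) := by
    intro j c
    rw [sum_mul]
    push_cast
    exact sum_congr rfl fun i _ => by ring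
  have hbracket : ∀ j, (f j - ∑ i, (a i j : ℝ) * m i) * (v j : ℝ) +
        θ * V (fun i => y i - (a i j * v j : ℕ)) + (1 - θ) * W (fun i => y i - (a i j * v j : ℕ)) =
      (f j - ∑ i, (a i j : ℝ) * α i) * (v j : ℝ) +
        (θ * (∑ i, αV i * (y i : ℝ) + βV) + (1 - θ) * (∑ i, αW i * (y i : ℝ) + βW)) := by
    intro j
    rw [hV, hW, sum_mul_intCast_sub_natCast, sum_mul_intCast_sub_natCast, hshift, hshift,
      hαsum]
    ring
  have hαy : ∑ i, α i * (y i : ℝ) =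
      ∑ i, m i * (y i : ℝ) + θ * ∑ i, αV i * (y i : ℝ) + (1 - θ) * ∑ i, αW i * (y i : ℝ) := by
    simpa only [mul_comm (y _ : ℝ)] using hαsum (fun i => (y i : ℝ))
  simp only [hbracket, mul_add, sum_add_distrib, ← sum_mul, hlam, one_mul]
  linear_combination -hαy

theorem bellman_value_eq_of_affine (hlam0 : ∀ j, 0 ≤ lam j) (hlam : ∑ j, lam j = 1)
    (hV : ∀ z, V z = ∑ i, αV i * (z i : ℝ) + βV) (hW : ∀ z, W z = ∑ i, αW i * (z i : ℝ) + βW)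
    (hα : ∀ i, α i = m i + θ * αV i + (1 - θ) * αW i) (β : ℝ)
    (hβ : β = ∑ j, lam j * max (f j - ∑ i, (a i j : ℝ) * α i) 0 + θ * βV + (1 - θ) * βW)
    (y : L → ℤ) (x : ℝ)
    (hx : IsGreatest
      {r : ℝ | ∃ v : J → ℕ, (∀ j, v j ≤ 1) ∧
        r = (∑ j, lam j *
          ((f j - ∑ i, (a i j : ℝ) * m i) * (v j : ℝ) +
            θ * V (fun i => y i - (a i j * v j : ℕ)) +
            (1 - θ) * W (fun i => y i - (a i j * v j : ℕ)))) + ∑ i, m i * (y i : ℝ)} x) :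
    x = ∑ i, α i * (y i : ℝ) + β := by
  simp only [bellman_objective_eq_of_affine lam f a m θ V W α αV αW βV βW hlam hV hW hα] at hx
  rw [hx.unique (isGreatest_weighted_sum_binary _ _ hlam0 _), hβ]
  ring

end BellmanStep

theorem lagrangian_value_function_linear_general
    (K T : ℕ)
    (θ : ℕ → ℕ → ℕ → ℝ)
    (L J : Type*) [Fintype L] [Fintype J]
    (f : J → ℝ)
    (a : L → J → ℕ)
    (lam : J → ℕ → ℕ → ℝ)
    (hlam0 : ∀ j k t, 0 ≤ lam j k t)
    (hlam1 : ∀ k ∈ Finset.Icc 1 K, ∀ t ∈ Finset.Icc 1 T, ∑ j, lam j k t = 1)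
    (mul : L → ℕ → ℕ → ℕ → ℝ)
    (Jt : ℕ → ℕ → (L → ℤ) → ℕ → ℝ)
    (hJtbd1 : ∀ y q, Jt (K + 1) 1 y q = 0)
    (hJtbd2 : ∀ k ∈ Finset.Icc 1 K, ∀ y q, Jt k (T + 1) y q = 0)
    (hJtrec : ∀ k ∈ Finset.Icc 1 K, ∀ t ∈ Finset.Icc 1 T, ∀ y : L → ℤ, ∀ q ∈ Finset.Icc 1 T,
      IsGreatest
        {r : ℝ | ∃ v : J → ℕ, (∀ j, v j ≤ 1) ∧
          r = (∑ j, lam j k t *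
            ((f j - ∑ i, (a i j : ℝ) * mul i k t q) * (v j : ℝ) +
              θ k t q * Jt k (t + 1) (fun i => y i - (a i j * v j : ℕ)) q +
              (1 - θ k t q) * Jt (k + 1) 1 (fun i => y i - (a i j * v j : ℕ)) t)) +
            ∑ i, mul i k t q * (y i : ℝ)}
        (Jt k t y q))
    (α : L → ℕ → ℕ → ℕ → ℝ) (β : ℕ → ℕ → ℕ → ℝ)
    (hαbd1 : ∀ i q, α i (K + 1) 1 q = 0)
    (hαbd2 : ∀ i, ∀ k ∈ Finset.Icc 1 K, ∀ q, α i k (T + 1) q = 0)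
    (hβbd1 : ∀ q, β (K + 1) 1 q = 0)
    (hβbd2 : ∀ k ∈ Finset.Icc 1 K, ∀ q, β k (T + 1) q = 0)
    (hαrec : ∀ i, ∀ k ∈ Finset.Icc 1 K, ∀ t ∈ Finset.Icc 1 T, ∀ q ∈ Finset.Icc 1 T,
      α i k t q = mul i k t q + θ k t q * α i k (t + 1) q + (1 - θ k t q) * α i (k + 1) 1 t)
    (hβrec : ∀ k ∈ Finset.Icc 1 K, ∀ t ∈ Finset.Icc 1 T, ∀ q ∈ Finset.Icc 1 T,
      β k t q = (∑ j, lam j k t * max (f j - ∑ i, (a i j : ℝ) * α i k t q) 0) +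
        θ k t q * β k (t + 1) q + (1 - θ k t q) * β (k + 1) 1 t) :
    ∀ k ∈ Finset.Icc 1 K, ∀ t ∈ Finset.Icc 1 T, ∀ q ∈ Finset.Icc 1 T, ∀ y : L → ℤ,
      Jt k t y q = (∑ i, α i k t q * (y i : ℝ)) + β k t q := by
  refine backward_induction_stage_period (P := fun k t q => ∀ y : L → ℤ,
      Jt k t y q = (∑ i, α i k t q * (y i : ℝ)) + β k t q) ?_ ?_ ?_
  · intro q y
    simp [hJtbd1, hαbd1, hβbd1]
  · intro k hk q y
    simp [hJtbd2 k hk, hαbd2 _ k hk, hβbd2 k hk]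
  · intro k hk t ht q hq hperiod hstage y
    exact bellman_value_eq_of_affine (fun j => lam j k t) f a (fun i => mul i k t q) (θ k t q)
      (fun z => Jt k (t + 1) z q) (fun z => Jt (k + 1) 1 z t) (fun i => α i k t q)
      (fun i => α i k (t + 1) q) (fun i => α i (k + 1) 1 t) (β k (t + 1) q) (β (k + 1) 1 t)
      (fun j => hlam0 j k t) (hlam1 k hk t ht) hperiod hstage
      (fun i => hαrec i k hk t ht q hq) (β k t q) (hβrec k hk t ht q hq) y _
      (hJtrec k hk t ht y q hq)

/-- Linearity of the relaxed (Lagrangian) value functions: for any family of Lagrange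
multipliers `μ`, the relaxed value functions satisfy
`J̃_t^k(y,q;μ) = Σ_{i∈L} α_{it}^k(q) y_i + β_t^k(q)` where `α` and `β` are the slopes and
intercepts computed by the stated backward recursions. -/
theorem lagrangian_value_function_linear
    {Ω : Type*} [MeasurableSpace Ω] (Pr : Measure Ω) [IsProbabilityMeasure Pr]
    (K T : ℕ) (hK : 1 ≤ K) (hT : 1 ≤ T)
    (ε : ℝ) (hε : 0 < ε)
    (D0 : ℕ) (hD0 : D0 ∈ Finset.Icc 1 T)
    (D : ℕ → Ω → ℕ) (hDmeas : ∀ k, Measurable (D k))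
    (hD0as : ∀ᵐ ω ∂Pr, D 0 ω = D0)
    (hDrange : ∀ k ∈ Finset.Icc 1 K, ∀ᵐ ω ∂Pr, D k ω ∈ Finset.Icc 1 T)
    (hMarkov : ∀ d : ℕ → ℕ, d 0 = D0 → (∀ k ∈ Finset.Icc 1 K, d k ∈ Finset.Icc 1 T) →
      (Pr {ω | ∀ k ∈ Finset.Icc 1 K, D k ω = d k}).toReal =
        ∏ k ∈ Finset.Icc 1 K,
          (Pr {ω | D k ω = d k ∧ D (k - 1) ω = d (k - 1)}).toReal /
            (Pr {ω | D (k - 1) ω = d (k - 1)}).toReal)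
    (hLB : ∀ k < K, ∀ p ∈ Finset.Icc 1 T, ∀ q ∈ Finset.Icc 1 T,
      0 < Pr {ω | D k ω = q} →
      ε ≤ (Pr {ω | D (k + 1) ω = p ∧ D k ω = q}).toReal / (Pr {ω | D k ω = q}).toReal)
    (θ : ℕ → ℕ → ℕ → ℝ)
    (hθ : ∀ k ∈ Finset.Icc 1 K, ∀ t ∈ Finset.Icc 1 T, ∀ q ∈ Finset.Icc 1 T,
      θ k t q = (Pr {ω | t + 1 ≤ D k ω ∧ D (k - 1) ω = q}).toReal /
        (Pr {ω | t ≤ D k ω ∧ D (k - 1) ω = q}).toReal)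
    (L J : Type*) [Fintype L] [Nonempty L] [Fintype J] [Nonempty J]
    (f : J → ℝ) (hf : ∀ j, 0 ≤ f j)
    (a : L → J → ℕ) (ha : ∀ i j, a i j ≤ 1)
    (lam : J → ℕ → ℕ → ℝ)
    (hlam0 : ∀ j k t, 0 ≤ lam j k t)
    (hlam1 : ∀ k ∈ Finset.Icc 1 K, ∀ t ∈ Finset.Icc 1 T, ∑ j, lam j k t = 1)
    (mul : L → ℕ → ℕ → ℕ → ℝ)
    (Jt : ℕ → ℕ → (L → ℤ) → ℕ → ℝ)
    (hJtbd1 : ∀ y q, Jt (K + 1) 1 y q = 0)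
    (hJtbd2 : ∀ k ∈ Finset.Icc 1 K, ∀ y q, Jt k (T + 1) y q = 0)
    (hJtrec : ∀ k ∈ Finset.Icc 1 K, ∀ t ∈ Finset.Icc 1 T, ∀ y : L → ℤ, ∀ q ∈ Finset.Icc 1 T,
      IsGreatest
        {r : ℝ | ∃ v : J → ℕ, (∀ j, v j ≤ 1) ∧
          r = (∑ j, lam j k t *
            ((f j - ∑ i, (a i j : ℝ) * mul i k t q) * (v j : ℝ) +
              θ k t q * Jt k (t + 1) (fun i => y i - (a i j * v j : ℕ)) q +
              (1 - θ k t q) * Jt (k + 1) 1 (fun i => y i - (a i j * v j : ℕ)) t)) +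
            ∑ i, mul i k t q * (y i : ℝ)}
        (Jt k t y q))
    (α : L → ℕ → ℕ → ℕ → ℝ) (β : ℕ → ℕ → ℕ → ℝ)
    (hαbd1 : ∀ i q, α i (K + 1) 1 q = 0)
    (hαbd2 : ∀ i, ∀ k ∈ Finset.Icc 1 K, ∀ q, α i k (T + 1) q = 0)
    (hβbd1 : ∀ q, β (K + 1) 1 q = 0)
    (hβbd2 : ∀ k ∈ Finset.Icc 1 K, ∀ q, β k (T + 1) q = 0)
    (hαrec : ∀ i, ∀ k ∈ Finset.Icc 1 K, ∀ t ∈ Finset.Icc 1 T, ∀ q ∈ Finset.Icc 1 T,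
      α i k t q = mul i k t q + θ k t q * α i k (t + 1) q + (1 - θ k t q) * α i (k + 1) 1 t)
    (hβrec : ∀ k ∈ Finset.Icc 1 K, ∀ t ∈ Finset.Icc 1 T, ∀ q ∈ Finset.Icc 1 T,
      β k t q = (∑ j, lam j k t * max (f j - ∑ i, (a i j : ℝ) * α i k t q) 0) +
        θ k t q * β k (t + 1) q + (1 - θ k t q) * β (k + 1) 1 t) :
    ∀ k ∈ Finset.Icc 1 K, ∀ t ∈ Finset.Icc 1 T, ∀ q ∈ Finset.Icc 1 T, ∀ y : L → ℤ,
      Jt k t y q = (∑ i, α i k t q * (y i : ℝ)) + β k t q :=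
  lagrangian_value_function_linear_general K T θ L J f a lam hlam0 hlam1 mul Jt hJtbd1 hJtbd2 hJtrec
    α β hαbd1 hαbd2 hβbd1 hβbd2 hαrec hβrec
end

section
/- MGF of the squared deviation (Lemma EC.6): for every λ ∈ ℝ with |λ| ≤ 2/σ, E[e^{λ²(D−μ)²}] ≤ e^{(σ²/4)λ²}. -/
open MeasureTheory

/-- MGF of the squared deviation: if `D` has mean `μ` and satisfies the sub-Gaussian bound
`E[exp (λ (D − μ))] ≤ exp ((σ²/200) λ²)` for all real `λ`, then for every `λ` with `|λ| ≤ 2/σ`,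
`E[exp (λ² (D − μ)²)] ≤ exp ((σ²/4) λ²)`. -/
theorem mgf_squared_deviation
    {Ω : Type*} [MeasurableSpace Ω] (Pr : Measure Ω) [IsProbabilityMeasure Pr]
    (σ : ℝ) (hσ : 0 < σ)
    (D : Ω → ℝ) (hDmeas : Measurable D) (hDint : Integrable D Pr)
    (μ : ℝ) (hμ : μ = ∫ ω, D ω ∂Pr)
    (hsub : ∀ lam : ℝ,
      ∫⁻ ω, ENNReal.ofReal (Real.exp (lam * (D ω - μ))) ∂Pr ≤
        ENNReal.ofReal (Real.exp (σ ^ 2 / 200 * lam ^ 2))) :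
    ∀ lam : ℝ, |lam| ≤ 2 / σ →
      ∫⁻ ω, ENNReal.ofReal (Real.exp (lam ^ 2 * (D ω - μ) ^ 2)) ∂Pr ≤
        ENNReal.ofReal (Real.exp (σ ^ 2 / 4 * lam ^ 2)) := by
  intro lam hlam
  rcases eq_or_ne lam 0 with rfl | hlam0
  · simp
  have hσ2 : (0:ℝ) < σ ^ 2 := by positivity
  set s : ℝ := lam ^ 2 with hs
  have hspos : 0 < s := by positivity
  have hsle : σ ^ 2 * s ≤ 4 := by
    have h1 : |lam| ^ 2 ≤ (2 / σ) ^ 2 := pow_le_pow_left₀ (abs_nonneg _) hlam 2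
    rw [sq_abs] at h1
    have h2 : (2 / σ) ^ 2 = 4 / σ ^ 2 := by field_simp; ring
    rw [h2] at h1
    calc σ ^ 2 * s ≤ σ ^ 2 * (4 / σ ^ 2) := by
          exact mul_le_mul_of_nonneg_left h1 hσ2.le
      _ = 4 := by field_simp
  set c : ℝ := 1 / (4 * s) with hc
  have hcpos : 0 < c := by positivity
  set k : ℝ := σ ^ 2 / 200 with hk
  have hkpos : 0 < k := by positivity
  have hck : k < c := by
    rw [hk, hc, div_lt_div_iff₀ (by norm_num) (by positivity)]
    nlinarith
  have hc' : 4 * s * c = 1 := by rw [hc]; field_simp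
  -- pointwise gaussian rewrite
  have hEq : ∀ x : ℝ, (fun t : ℝ => Real.exp (-c * t ^ 2 + t * x)) =
      fun t => Real.exp (s * x ^ 2) * Real.exp (-c * (t - 2 * s * x) ^ 2) := by
    intro x
    funext t
    rw [← Real.exp_add]
    congr 1
    have hs0 : s ≠ 0 := hspos.ne'
    rw [hc]
    field_simp
    ring
  have hint : ∀ x : ℝ, Integrable (fun t : ℝ => Real.exp (-c * t ^ 2 + t * x)) := by
    intro x
    rw [hEq x]
    exact ((integrable_exp_neg_mul_sq hcpos).comp_sub_right (2 * s * x)).const_mul _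
  have hgauss : ∀ x : ℝ, ∫ t : ℝ, Real.exp (-c * t ^ 2 + t * x) =
      Real.sqrt (Real.pi / c) * Real.exp (s * x ^ 2) := by
    intro x
    rw [hEq x, integral_const_mul]
    have h3 : ∫ t : ℝ, Real.exp (-c * (t - 2 * s * x) ^ 2) =
        ∫ t : ℝ, Real.exp (-c * t ^ 2) :=
      integral_sub_right_eq_self (fun t => Real.exp (-c * t ^ 2)) (2 * s * x)
    rw [h3, integral_gaussian]
    ring
  have hmeas1 : Measurable fun ω => ENNReal.ofReal (Real.exp (s * (D ω - μ) ^ 2)) :=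
    (Real.measurable_exp.comp (((hDmeas.sub_const μ).pow_const 2).const_mul s)).ennreal_ofReal
  have hm0 : Measurable fun p : Ω × ℝ => -c * p.2 ^ 2 + p.2 * (D p.1 - μ) :=
    ((measurable_snd.pow_const 2).const_mul (-c)).add
      (measurable_snd.mul ((hDmeas.comp measurable_fst).sub_const μ))
  have hmeas2 : Measurable fun p : Ω × ℝ =>
      ENNReal.ofReal (Real.exp (-c * p.2 ^ 2 + p.2 * (D p.1 - μ))) :=
    (Real.measurable_exp.comp hm0).ennreal_ofReal
  have hmeas3 : ∀ t : ℝ, Measurable fun ω => ENNReal.ofReal (Real.exp (t * (D ω - μ))) :=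
    fun t => (Real.measurable_exp.comp ((hDmeas.sub_const μ).const_mul t)).ennreal_ofReal
  set A : ℝ := Real.sqrt (Real.pi / c) with hA
  have hApos : 0 < A := Real.sqrt_pos.2 (by positivity)
  have main :
      ENNReal.ofReal A * ∫⁻ ω, ENNReal.ofReal (Real.exp (s * (D ω - μ) ^ 2)) ∂Pr ≤
        ENNReal.ofReal (Real.sqrt (Real.pi / (c - k))) := by
    calc ENNReal.ofReal A * ∫⁻ ω, ENNReal.ofReal (Real.exp (s * (D ω - μ) ^ 2)) ∂Pr
        = ∫⁻ ω, ENNReal.ofReal A * ENNReal.ofReal (Real.exp (s * (D ω - μ) ^ 2)) ∂Pr :=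
          (lintegral_const_mul _ hmeas1).symm
      _ = ∫⁻ ω, (∫⁻ t : ℝ, ENNReal.ofReal (Real.exp (-c * t ^ 2 + t * (D ω - μ)))) ∂Pr := by
          refine lintegral_congr fun ω => ?_
          rw [← ENNReal.ofReal_mul (Real.sqrt_nonneg _), ← hgauss (D ω - μ),
            ofReal_integral_eq_lintegral_ofReal (hint _)
              (Filter.Eventually.of_forall fun t => (Real.exp_pos _).le)]
      _ = ∫⁻ t : ℝ, (∫⁻ ω, ENNReal.ofReal (Real.exp (-c * t ^ 2 + t * (D ω - μ))) ∂Pr) :=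
          lintegral_lintegral_swap hmeas2.aemeasurable
      _ = ∫⁻ t : ℝ, ENNReal.ofReal (Real.exp (-c * t ^ 2)) *
            (∫⁻ ω, ENNReal.ofReal (Real.exp (t * (D ω - μ))) ∂Pr) := by
          refine lintegral_congr fun t => ?_
          rw [← lintegral_const_mul _ (hmeas3 t)]
          refine lintegral_congr fun ω => ?_
          rw [← ENNReal.ofReal_mul (Real.exp_pos _).le, ← Real.exp_add]
      _ ≤ ∫⁻ t : ℝ, ENNReal.ofReal (Real.exp (-c * t ^ 2)) *
            ENNReal.ofReal (Real.exp (k * t ^ 2)) := by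
          refine lintegral_mono fun t => mul_le_mul_right ?_ _
          simpa [hk] using hsub t
      _ = ∫⁻ t : ℝ, ENNReal.ofReal (Real.exp (-(c - k) * t ^ 2)) := by
          refine lintegral_congr fun t => ?_
          rw [← ENNReal.ofReal_mul (Real.exp_pos _).le, ← Real.exp_add]
          ring_nf
      _ = ENNReal.ofReal (Real.sqrt (Real.pi / (c - k))) := by
          rw [← integral_gaussian,
            ofReal_integral_eq_lintegral_ofReal (integrable_exp_neg_mul_sq (sub_pos.2 hck))
              (Filter.Eventually.of_forall fun t => (Real.exp_pos _).le)]
  have hx : ∫⁻ ω, ENNReal.ofReal (Real.exp (s * (D ω - μ) ^ 2)) ∂Pr ≤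
      (ENNReal.ofReal A)⁻¹ * ENNReal.ofReal (Real.sqrt (Real.pi / (c - k))) := by
    have h1 := mul_le_mul_right main (ENNReal.ofReal A)⁻¹
    rwa [← mul_assoc, ENNReal.inv_mul_cancel (by simpa using hApos) ENNReal.ofReal_ne_top,
      one_mul] at h1
  have hreal : A⁻¹ * Real.sqrt (Real.pi / (c - k)) ≤ Real.exp (σ ^ 2 / 4 * s) := by
    rw [hA, ← Real.sqrt_inv, ← Real.sqrt_mul (by positivity)]
    have h2 : (Real.pi / c)⁻¹ * (Real.pi / (c - k)) = c / (c - k) := by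
      rw [inv_div]
      field_simp [hcpos.ne', (sub_pos.2 hck).ne', Real.pi_ne_zero]
    rw [h2]
    have hexp2 : Real.exp (σ ^ 2 / 4 * s) ^ 2 = Real.exp (σ ^ 2 * s / 2) := by
      rw [sq, ← Real.exp_add]; ring_nf
    have h3 : c / (c - k) ≤ Real.exp (σ ^ 2 / 4 * s) ^ 2 := by
      rw [div_le_iff₀ (sub_pos.2 hck), hexp2]
      have he := Real.add_one_le_exp (σ ^ 2 * s / 2)
      have he' := mul_le_mul_of_nonneg_right he (sub_pos.2 hck).le
      nlinarith [hσ2, hspos, hsle, hc', hkpos]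
    calc Real.sqrt (c / (c - k)) ≤ Real.sqrt (Real.exp (σ ^ 2 / 4 * s) ^ 2) :=
          Real.sqrt_le_sqrt h3
      _ = Real.exp (σ ^ 2 / 4 * s) := Real.sqrt_sq (Real.exp_pos _).le
  calc ∫⁻ ω, ENNReal.ofReal (Real.exp (lam ^ 2 * (D ω - μ) ^ 2)) ∂Pr
      ≤ (ENNReal.ofReal A)⁻¹ * ENNReal.ofReal (Real.sqrt (Real.pi / (c - k))) := hx
    _ = ENNReal.ofReal (A⁻¹ * Real.sqrt (Real.pi / (c - k))) := by
        rw [ENNReal.ofReal_mul (inv_nonneg.2 hApos.le), ENNReal.ofReal_inv_of_pos hApos]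
    _ ≤ ENNReal.ofReal (Real.exp (σ ^ 2 / 4 * lam ^ 2)) := ENNReal.ofReal_le_ofReal hreal
end

section
/- MGF bound for the expected capacity consumption (Lemma EC.7): for every λ ∈ ℝ, E[ e^{λ·Σ_{s=1}^T n_s·1(D ≥ s)} ] ≤ e^{σ²λ² + λ·Σ_{s=1}^T n_s·P(D ≥ s)}. -/
open MeasureTheory Finset

/-!
Write `X = g(D)` with `g(d) = Σ_{s ≤ T} n_s 1(s ≤ d)`; as `0 ≤ n_s ≤ 1`, `g` is `1`-Lipschitz.
For an independent copy `(X', D')`, `cosh (λ(X - X')) ≤ cosh (λ(D - D'))` pointwise, and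
integrating gives `E[e^{λX}] E[e^{-λX}] ≤ E[e^{λ(D - ED)}] E[e^{-λ(D - ED)}] ≤ e^{σ²λ²/100}`.
Jensen's inequality `E[e^{-λX}] ≥ e^{-λ EX}` then isolates `E[e^{λX}]`.
-/

namespace ProbabilityTheory

open Real

variable {Ω : Type*} [MeasurableSpace Ω] {μ : Measure Ω} {X Y : Ω → ℝ}

lemma exp_mul_integral_le_mgf [IsProbabilityMeasure μ] {t : ℝ} (hX : Integrable X μ)
    (h_int : Integrable (fun ω => exp (t * X ω)) μ) :
    exp (t * ∫ ω, X ω ∂μ) ≤ mgf X μ t := by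
  rw [← integral_const_mul]
  exact convexOn_exp.map_integral_le continuousOn_exp isClosed_univ
    (ae_of_all _ fun _ => Set.mem_univ _) (hX.const_mul t) h_int

lemma ofReal_mgf_eq_lintegral {t : ℝ} (h_int : Integrable (fun ω => exp (t * X ω)) μ) :
    ENNReal.ofReal (mgf X μ t) = ∫⁻ ω, ENNReal.ofReal (exp (t * X ω)) ∂μ :=
  ofReal_integral_eq_lintegral_ofReal h_int (ae_of_all _ fun _ => (exp_pos _).le)

lemma cosh_mul_sub_eq (t a b : ℝ) :
    cosh (t * (a - b)) = (exp (t * a) * exp (-t * b) + exp (-t * a) * exp (-(-t) * b)) / 2 := by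
  rw [cosh_eq, ← exp_add, ← exp_add]
  ring_nf

lemma integrable_cosh_mul_sub_prod {t : ℝ} (h_pos : Integrable (fun ω => exp (t * X ω)) μ)
    (h_neg : Integrable (fun ω => exp (-t * X ω)) μ) :
    Integrable (fun z : Ω × Ω => cosh (t * (X z.1 - X z.2))) (μ.prod μ) := by
  simp_rw [cosh_mul_sub_eq, neg_neg]
  exact ((h_pos.mul_prod h_neg).add (h_neg.mul_prod h_pos)).div_const 2

variable [SFinite μ]

lemma integral_cosh_mul_sub_prod {t : ℝ} (h_pos : Integrable (fun ω => exp (t * X ω)) μ)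
    (h_neg : Integrable (fun ω => exp (-t * X ω)) μ) :
    ∫ z : Ω × Ω, cosh (t * (X z.1 - X z.2)) ∂(μ.prod μ) = mgf X μ t * mgf X μ (-t) := by
  simp_rw [cosh_mul_sub_eq]
  have h_pos' : Integrable (fun ω => exp (-(-t) * X ω)) μ := by simpa using h_pos
  rw [integral_div, integral_add (h_pos.mul_prod h_neg) (h_neg.mul_prod h_pos'),
    integral_prod_mul (fun ω => exp (t * X ω)) (fun ω => exp (-t * X ω)),
    integral_prod_mul (fun ω => exp (-t * X ω)) (fun ω => exp (-(-t) * X ω)), mgf, mgf]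
  simp only [neg_mul, neg_neg]
  ring

lemma mgf_mul_mgf_neg_le_of_abs_sub_le
    (hX : ∀ t, Integrable (fun ω => exp (t * X ω)) μ)
    (hY : ∀ t, Integrable (fun ω => exp (t * Y ω)) μ)
    (hXY : ∀ ω ω', |X ω - X ω'| ≤ |Y ω - Y ω'|) (t : ℝ) :
    mgf X μ t * mgf X μ (-t) ≤ mgf Y μ t * mgf Y μ (-t) := by
  rw [← integral_cosh_mul_sub_prod (hX _) (hX _), ← integral_cosh_mul_sub_prod (hY _) (hY _)]
  refine integral_mono (integrable_cosh_mul_sub_prod (hX _) (hX _))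
    (integrable_cosh_mul_sub_prod (hY _) (hY _)) fun z => ?_
  rw [cosh_le_cosh, abs_mul, abs_mul]
  exact mul_le_mul_of_nonneg_left (hXY _ _) (abs_nonneg t)

lemma mgf_le_exp_mul_integral_mul_of_abs_sub_le [IsProbabilityMeasure μ] (hX_int : Integrable X μ)
    (hX : ∀ t, Integrable (fun ω => exp (t * X ω)) μ)
    (hY : ∀ t, Integrable (fun ω => exp (t * Y ω)) μ)
    (hXY : ∀ ω ω', |X ω - X ω'| ≤ |Y ω - Y ω'|) (t : ℝ) :
    mgf X μ t ≤ exp (t * ∫ ω, X ω ∂μ) * (mgf Y μ t * mgf Y μ (-t)) := by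
  have h_jensen : exp (-t * ∫ ω, X ω ∂μ) * mgf X μ t ≤ mgf X μ t * mgf X μ (-t) := by
    rw [mul_comm (mgf X μ t)]
    exact mul_le_mul_of_nonneg_right (exp_mul_integral_le_mgf hX_int (hX _)) mgf_nonneg
  calc mgf X μ t = exp (t * ∫ ω, X ω ∂μ) * (exp (-t * ∫ ω, X ω ∂μ) * mgf X μ t) := by
        rw [← mul_assoc, ← exp_add, neg_mul, add_neg_cancel, exp_zero, one_mul]
    _ ≤ exp (t * ∫ ω, X ω ∂μ) * (mgf Y μ t * mgf Y μ (-t)) :=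
        mul_le_mul_of_nonneg_left
          (h_jensen.trans (mgf_mul_mgf_neg_le_of_abs_sub_le hX hY hXY t)) (exp_pos _).le

end ProbabilityTheory

lemma MeasureTheory.integrable_comp_of_forall_mem_finset {Ω α : Type*} [MeasurableSpace Ω]
    [MeasurableSpace α] [MeasurableSingletonClass α] [Countable α]
    {μ : Measure Ω} [IsFiniteMeasure μ] {D : Ω → α} (hD : Measurable D) {S : Finset α} (hS : ∀ ω, D ω ∈ S) (h : α → ℝ) :
    Integrable (fun ω => h (D ω)) μ :=
  Integrable.of_bound ((measurable_of_countable h).comp hD).aestronglyMeasurable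
    (∑ a ∈ S, ‖h a‖) (ae_of_all _ fun ω =>
      single_le_sum (f := fun a => ‖h a‖) (fun _ _ => norm_nonneg _) (hS ω))

lemma abs_sub_le_abs_natCast_sub_of_increment_mem_Icc {f : ℕ → ℝ}
    (hf : ∀ d, f (d + 1) - f d ∈ Set.Icc 0 1) (a b : ℕ) : |f a - f b| ≤ |(a : ℝ) - b| := by
  have h_mono : ∀ a b, a ≤ b → f a ≤ f b ∧ f b - f a ≤ (b : ℝ) - a := by
    intro a b hab
    induction b, hab using Nat.le_induction with
    | base => simp
    | succ b _ ih =>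
      obtain ⟨h_lower, h_upper⟩ := hf b
      push_cast
      constructor <;> linarith
  rcases le_total a b with hab | hab
  · obtain ⟨h_le, h_sub⟩ := h_mono a b hab
    rw [abs_sub_comm, abs_sub_comm (a : ℝ)]
    exact abs_le_abs h_sub (by linarith [(Nat.cast_le (α := ℝ)).2 hab])
  · obtain ⟨h_le, h_sub⟩ := h_mono b a hab
    exact abs_le_abs h_sub (by linarith [(Nat.cast_le (α := ℝ)).2 hab])

def capacityConsumption (T : ℕ) (n : ℕ → ℝ) (d : ℕ) : ℝ :=
  ∑ s ∈ Icc 1 T, n s * if s ≤ d then 1 else 0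

section capacityConsumption

variable {T : ℕ} {n : ℕ → ℝ}

lemma capacityConsumption_succ_sub (d : ℕ) :
    capacityConsumption T n (d + 1) - capacityConsumption T n d =
      if d + 1 ∈ Icc 1 T then n (d + 1) else 0 := by
  rw [capacityConsumption, capacityConsumption, ← sum_sub_distrib, ← sum_ite_eq' (Icc 1 T)]
  refine sum_congr rfl fun s _ => ?_
  by_cases hs : s ≤ d
  · simp [hs, Nat.le_succ_of_le hs, show s ≠ d + 1 by omega]
  · by_cases hs' : s = d + 1 <;> simp [hs, hs', Nat.le_succ_iff]

lemma abs_capacityConsumption_sub_le (hn : ∀ s, n s ∈ Set.Icc (0 : ℝ) 1) (a b : ℕ) :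
    |capacityConsumption T n a - capacityConsumption T n b| ≤ |(a : ℝ) - b| := by
  refine abs_sub_le_abs_natCast_sub_of_increment_mem_Icc (fun d => ?_) a b
  rw [capacityConsumption_succ_sub]
  split_ifs
  · exact hn _
  · simp

lemma integral_capacityConsumption_comp {Ω : Type*} [MeasurableSpace Ω] {μ : Measure Ω} [IsFiniteMeasure μ]
    {D : Ω → ℕ} (hD : Measurable D) :
    ∫ ω, capacityConsumption T n (D ω) ∂μ = ∑ s ∈ Icc 1 T, n s * μ.real {ω | s ≤ D ω} := by
  have h_indicator (s : ℕ) (ω : Ω) :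
      (if s ≤ D ω then (1 : ℝ) else 0) = {ω | s ≤ D ω}.indicator 1 ω := by
    simp [Set.indicator_apply]
  have h_meas (s : ℕ) : MeasurableSet {ω | s ≤ D ω} := hD measurableSet_Ici
  simp only [capacityConsumption, h_indicator]
  rw [integral_finsetSum _ fun s _ => ((integrable_const 1).indicator (h_meas s)).const_mul _]
  simp_rw [integral_const_mul, integral_indicator_one (h_meas _)]

end capacityConsumption

open ProbabilityTheory Real in
theorem mgf_expected_capacity_consumption_general
    {Ω : Type*} [MeasurableSpace Ω] (Pr : Measure Ω) [IsProbabilityMeasure Pr]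
    (σ : ℝ) (T : ℕ)
    (D : Ω → ℕ) (hDmeas : Measurable D) (hDrange : ∀ ω, D ω ∈ Finset.Icc 1 T)
    (hsub : ∀ lam : ℝ,
      ∫⁻ ω, ENNReal.ofReal (Real.exp (lam * ((D ω : ℝ) - ∫ ω', (D ω' : ℝ) ∂Pr))) ∂Pr ≤
        ENNReal.ofReal (Real.exp (σ ^ 2 / 200 * lam ^ 2)))
    (n : ℕ → ℝ) (hn : ∀ s, n s ∈ Set.Icc (0 : ℝ) 1) :
    ∀ lam : ℝ,
      ∫⁻ ω, ENNReal.ofReal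
          (Real.exp (lam * ∑ s ∈ Finset.Icc 1 T, n s * (if s ≤ D ω then (1 : ℝ) else 0))) ∂Pr ≤
        ENNReal.ofReal
          (Real.exp (σ ^ 2 * lam ^ 2 +
            lam * ∑ s ∈ Finset.Icc 1 T, n s * (Pr {ω | s ≤ D ω}).toReal)) := by
  intro t
  set m := ∫ ω, (D ω : ℝ) ∂Pr
  have h_int (h : ℕ → ℝ) : Integrable (fun ω => h (D ω)) Pr :=
    integrable_comp_of_forall_mem_finset hDmeas hDrange h
  have h_subG (t : ℝ) : mgf (fun ω => (D ω : ℝ) - m) Pr t ≤ exp (σ ^ 2 / 200 * t ^ 2) := by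
    have := hsub t
    rwa [← ofReal_mgf_eq_lintegral (h_int fun d => exp (t * (d - m))),
      ENNReal.ofReal_le_ofReal_iff (exp_pos _).le] at this
  have h_mgf := mgf_le_exp_mul_integral_mul_of_abs_sub_le (μ := Pr)
    (X := fun ω => capacityConsumption T n (D ω)) (Y := fun ω => (D ω : ℝ) - m)
    (h_int _) (fun t => h_int fun d => exp (t * capacityConsumption T n d))
    (fun t => h_int fun d => exp (t * (d - m)))
    (fun ω ω' => by simpa using abs_capacityConsumption_sub_le hn (D ω) (D ω')) t
  rw [integral_capacityConsumption_comp hDmeas] at h_mgf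
  change ∫⁻ ω, ENNReal.ofReal (exp (t * capacityConsumption T n (D ω))) ∂Pr ≤ _
  rw [← ofReal_mgf_eq_lintegral (h_int fun d => exp (t * capacityConsumption T n d))]
  refine ENNReal.ofReal_le_ofReal (h_mgf.trans ?_)
  calc _ ≤ exp (t * ∑ s ∈ Icc 1 T, n s * Pr.real {ω | s ≤ D ω}) *
        (exp (σ ^ 2 / 200 * t ^ 2) * exp (σ ^ 2 / 200 * (-t) ^ 2)) := by
        gcongr
        exacts [mgf_nonneg, h_subG t, h_subG (-t)]
    _ ≤ _ := by
        rw [← exp_add, ← exp_add, exp_le_exp, neg_sq]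
        simp only [Measure.real]
        nlinarith [sq_nonneg (σ * t)]

/-- MGF bound for the expected capacity consumption: if the `{1,…,T}`-valued demand `D` is
sub-Gaussian with variance proxy `σ²/200` and `n₁,…,n_T ∈ [0,1]`, then for every real `λ`,
`E[exp (λ Σ_{s=1}^T n_s 1(D ≥ s))] ≤ exp (σ² λ² + λ Σ_{s=1}^T n_s P(D ≥ s))`. -/
theorem mgf_expected_capacity_consumption
    {Ω : Type*} [MeasurableSpace Ω] (Pr : Measure Ω) [IsProbabilityMeasure Pr]
    (σ : ℝ) (hσ : 0 < σ) (T : ℕ) (hT : 1 ≤ T)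
    (D : Ω → ℕ) (hDmeas : Measurable D) (hDrange : ∀ ω, D ω ∈ Finset.Icc 1 T)
    (hsub : ∀ lam : ℝ,
      ∫⁻ ω, ENNReal.ofReal (Real.exp (lam * ((D ω : ℝ) - ∫ ω', (D ω' : ℝ) ∂Pr))) ∂Pr ≤
        ENNReal.ofReal (Real.exp (σ ^ 2 / 200 * lam ^ 2)))
    (n : ℕ → ℝ) (hn : ∀ s, n s ∈ Set.Icc (0 : ℝ) 1) :
    ∀ lam : ℝ,
      ∫⁻ ω, ENNReal.ofReal
          (Real.exp (lam * ∑ s ∈ Finset.Icc 1 T, n s * (if s ≤ D ω then (1 : ℝ) else 0))) ∂Pr ≤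
        ENNReal.ofReal
          (Real.exp (σ ^ 2 * lam ^ 2 +
            lam * ∑ s ∈ Finset.Icc 1 T, n s * (Pr {ω | s ≤ D ω}).toReal)) :=
  mgf_expected_capacity_consumption_general Pr σ T D hDmeas hDrange hsub n hn
end

section
/- From sub-Gaussian MGF to MGF of the square (Lemma EC.11): if E[e^{λZ}] ≤ e^{M²λ²} for all λ ∈ ℝ, then for every θ ∈ ℝ with |θ| ≤ 1/(7M): E[e^{θ²Z²}] ≤ e^{49 M² θ²} (equivalently e^{(7Mθ)²}). -/
open MeasureTheory

/-- From a sub-Gaussian MGF bound to an MGF bound for the square: if `Z` is mean-zero and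
`E[exp (λ Z)] ≤ exp (M² λ²)` for all real `λ`, then for every `θ` with `|θ| ≤ 1/(7M)`,
`E[exp (θ² Z²)] ≤ exp (49 M² θ²)`. -/
theorem mgf_square_of_subgaussian_mgf
    {Ω : Type*} [MeasurableSpace Ω] (Pr : Measure Ω) [IsProbabilityMeasure Pr]
    (M : ℝ) (hM : 0 < M)
    (Z : Ω → ℝ) (hZmeas : Measurable Z) (hZint : Integrable Z Pr)
    (hZmean : ∫ ω, Z ω ∂Pr = 0)
    (hmgf : ∀ lam : ℝ,
      ∫⁻ ω, ENNReal.ofReal (Real.exp (lam * Z ω)) ∂Pr ≤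
        ENNReal.ofReal (Real.exp (M ^ 2 * lam ^ 2))) :
    ∀ θ : ℝ, |θ| ≤ 1 / (7 * M) →
      ∫⁻ ω, ENNReal.ofReal (Real.exp (θ ^ 2 * Z ω ^ 2)) ∂Pr ≤
        ENNReal.ofReal (Real.exp (49 * M ^ 2 * θ ^ 2)) := by
  intro θ hθ
  have pi_pos := Real.pi_pos
  set s : ℝ := |θ| with hs
  have hs0 : 0 ≤ s := abs_nonneg θ
  have hθ2 : θ ^ 2 = s ^ 2 := (sq_abs θ).symm
  have hu : 4 * s ^ 2 * M ^ 2 ≤ 4 / 49 := by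
    have h1 : s * (7 * M) ≤ 1 := by
      rw [← le_div_iff₀ (by positivity)]; exact hθ
    have h2 : s * (7 * M) * (s * (7 * M)) ≤ 1 :=
      mul_le_one₀ h1 (by positivity) h1
    nlinarith [h2]
  set c : ℝ := 1 - 4 * s ^ 2 * M ^ 2 with hcdef
  have hcpos : 0 < c := by
    have : (4 : ℝ) / 49 < 1 := by norm_num
    simp only [hcdef]; linarith
  -- pointwise Gaussian identity
  have key : ∀ z : ℝ,
      (∫⁻ t : ℝ, ENNReal.ofReal (Real.exp (-t ^ 2 + 2 * s * z * t))) =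
        ENNReal.ofReal (Real.sqrt Real.pi) * ENNReal.ofReal (Real.exp (s ^ 2 * z ^ 2)) := by
    intro z
    have hre : ∀ t : ℝ, Real.exp (-t ^ 2 + 2 * s * z * t)
        = Real.exp (s ^ 2 * z ^ 2) * Real.exp (-1 * (t - s * z) ^ 2) := by
      intro t; rw [← Real.exp_add]; ring_nf
    have hint : Integrable (fun t : ℝ => Real.exp (-1 * (t - s * z) ^ 2)) :=
      (integrable_exp_neg_mul_sq one_pos).comp_sub_right (s * z)
    calc (∫⁻ t : ℝ, ENNReal.ofReal (Real.exp (-t ^ 2 + 2 * s * z * t)))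
        = ∫⁻ t : ℝ, ENNReal.ofReal (Real.exp (s ^ 2 * z ^ 2)) *
            ENNReal.ofReal (Real.exp (-1 * (t - s * z) ^ 2)) := by
          simp_rw [hre, ENNReal.ofReal_mul (Real.exp_nonneg _)]
      _ = ENNReal.ofReal (Real.exp (s ^ 2 * z ^ 2)) *
            ∫⁻ t : ℝ, ENNReal.ofReal (Real.exp (-1 * (t - s * z) ^ 2)) :=
          lintegral_const_mul' _ _ ENNReal.ofReal_ne_top
      _ = ENNReal.ofReal (Real.exp (s ^ 2 * z ^ 2)) * ENNReal.ofReal (Real.sqrt Real.pi) := by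
          rw [← ofReal_integral_eq_lintegral_ofReal hint
            (Filter.Eventually.of_forall fun t => Real.exp_nonneg _)]
          congr 1
          rw [integral_sub_right_eq_self (fun t : ℝ => Real.exp (-1 * t ^ 2)) (s * z),
            integral_gaussian]
          norm_num
      _ = _ := mul_comm _ _
  -- measurability for Tonelli
  have hmeas : AEMeasurable (Function.uncurry fun (ω : Ω) (t : ℝ) =>
      ENNReal.ofReal (Real.exp (-t ^ 2 + 2 * s * Z ω * t))) (Pr.prod volume) := by
    apply Measurable.aemeasurable
    apply Measurable.ennreal_ofReal
    apply Real.measurable_exp.comp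
    fun_prop
  have hswap := lintegral_lintegral_swap hmeas
  -- inner bound from the MGF hypothesis
  have hinner : ∀ t : ℝ,
      (∫⁻ ω, ENNReal.ofReal (Real.exp (-t ^ 2 + 2 * s * Z ω * t)) ∂Pr) ≤
        ENNReal.ofReal (Real.exp (-(c * t ^ 2))) := by
    intro t
    have hre : ∀ ω, Real.exp (-t ^ 2 + 2 * s * Z ω * t)
        = Real.exp (-t ^ 2) * Real.exp ((2 * s * t) * Z ω) := by
      intro ω; rw [← Real.exp_add]; ring_nf
    calc (∫⁻ ω, ENNReal.ofReal (Real.exp (-t ^ 2 + 2 * s * Z ω * t)) ∂Pr)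
        = ENNReal.ofReal (Real.exp (-t ^ 2)) *
            ∫⁻ ω, ENNReal.ofReal (Real.exp ((2 * s * t) * Z ω)) ∂Pr := by
          simp_rw [hre, ENNReal.ofReal_mul (Real.exp_nonneg _)]
          exact lintegral_const_mul' _ _ ENNReal.ofReal_ne_top
      _ ≤ ENNReal.ofReal (Real.exp (-t ^ 2)) *
            ENNReal.ofReal (Real.exp (M ^ 2 * (2 * s * t) ^ 2)) :=
          mul_le_mul_right (hmgf (2 * s * t)) _
      _ = ENNReal.ofReal (Real.exp (-(c * t ^ 2))) := by
          rw [← ENNReal.ofReal_mul (Real.exp_nonneg _), ← Real.exp_add]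
          congr 2
          simp only [hcdef]; ring
  -- bound the outer t-integral
  have houter : (∫⁻ t : ℝ, ∫⁻ ω, ENNReal.ofReal (Real.exp (-t ^ 2 + 2 * s * Z ω * t)) ∂Pr) ≤
      ENNReal.ofReal (Real.sqrt (Real.pi / c)) := by
    calc (∫⁻ t : ℝ, ∫⁻ ω, ENNReal.ofReal (Real.exp (-t ^ 2 + 2 * s * Z ω * t)) ∂Pr)
        ≤ ∫⁻ t : ℝ, ENNReal.ofReal (Real.exp (-(c * t ^ 2))) := lintegral_mono hinner
      _ = ENNReal.ofReal (∫ t : ℝ, Real.exp (-(c * t ^ 2))) := by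
          rw [ofReal_integral_eq_lintegral_ofReal]
          · have := integrable_exp_neg_mul_sq hcpos
            simpa [neg_mul] using this
          · exact Filter.Eventually.of_forall fun t => Real.exp_nonneg _
      _ = ENNReal.ofReal (Real.sqrt (Real.pi / c)) := by
          congr 1
          simp_rw [← neg_mul]
          exact integral_gaussian c
  -- combine
  have hLHS : (∫⁻ ω, (∫⁻ t : ℝ, ENNReal.ofReal (Real.exp (-t ^ 2 + 2 * s * Z ω * t))) ∂Pr)
      = ENNReal.ofReal (Real.sqrt Real.pi) *
        ∫⁻ ω, ENNReal.ofReal (Real.exp (s ^ 2 * Z ω ^ 2)) ∂Pr := by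
    rw [lintegral_congr fun ω => key (Z ω)]
    exact lintegral_const_mul' _ _ ENNReal.ofReal_ne_top
  -- the real-number inequality
  have hsqrtc : (0 : ℝ) < Real.sqrt c := Real.sqrt_pos.mpr hcpos
  have hone : 1 ≤ Real.sqrt c * Real.exp (49 * M ^ 2 * s ^ 2) := by
    have hexp2 : Real.exp (49 * M ^ 2 * s ^ 2) ^ 2 = Real.exp (98 * M ^ 2 * s ^ 2) := by
      rw [sq, ← Real.exp_add]; ring_nf
    have hle : 1 + 98 * M ^ 2 * s ^ 2 ≤ Real.exp (98 * M ^ 2 * s ^ 2) := by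
      have := Real.add_one_le_exp (98 * M ^ 2 * s ^ 2); linarith
    have hc1 : 1 ≤ c * (1 + 98 * M ^ 2 * s ^ 2) := by
      have hsm : 0 ≤ s ^ 2 * M ^ 2 := mul_nonneg (sq_nonneg s) (sq_nonneg M)
      have hu' : s ^ 2 * M ^ 2 ≤ 1 / 49 := by linarith
      simp only [hcdef]
      nlinarith [mul_nonneg (by linarith : (0:ℝ) ≤ 1 / 49 - s ^ 2 * M ^ 2) hsm]
    have h2 : 1 ≤ c * Real.exp (49 * M ^ 2 * s ^ 2) ^ 2 := by
      rw [hexp2]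
      calc (1 : ℝ) ≤ c * (1 + 98 * M ^ 2 * s ^ 2) := hc1
        _ ≤ c * Real.exp (98 * M ^ 2 * s ^ 2) := by
            exact mul_le_mul_of_nonneg_left hle hcpos.le
    calc (1 : ℝ) = Real.sqrt 1 := (Real.sqrt_one).symm
      _ ≤ Real.sqrt (c * Real.exp (49 * M ^ 2 * s ^ 2) ^ 2) := Real.sqrt_le_sqrt h2
      _ = Real.sqrt c * Real.exp (49 * M ^ 2 * s ^ 2) := by
          rw [Real.sqrt_mul hcpos.le, Real.sqrt_sq (Real.exp_nonneg _)]
  have hreal : Real.sqrt (Real.pi / c) ≤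
      Real.sqrt Real.pi * Real.exp (49 * M ^ 2 * θ ^ 2) := by
    rw [hθ2, Real.sqrt_div Real.pi_pos.le, div_le_iff₀ hsqrtc]
    calc Real.sqrt Real.pi = Real.sqrt Real.pi * 1 := (mul_one _).symm
      _ ≤ Real.sqrt Real.pi * (Real.sqrt c * Real.exp (49 * M ^ 2 * s ^ 2)) :=
          mul_le_mul_of_nonneg_left hone (Real.sqrt_nonneg _)
      _ = Real.sqrt Real.pi * Real.exp (49 * M ^ 2 * s ^ 2) * Real.sqrt c := by ring
  -- put everything together
  have hπne : ENNReal.ofReal (Real.sqrt Real.pi) ≠ 0 :=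
    (ENNReal.ofReal_pos.mpr (Real.sqrt_pos.mpr pi_pos)).ne'
  have hmain : ENNReal.ofReal (Real.sqrt Real.pi) *
      (∫⁻ ω, ENNReal.ofReal (Real.exp (θ ^ 2 * Z ω ^ 2)) ∂Pr) ≤
      ENNReal.ofReal (Real.sqrt Real.pi) *
        ENNReal.ofReal (Real.exp (49 * M ^ 2 * θ ^ 2)) := by
    simp_rw [hθ2]
    calc ENNReal.ofReal (Real.sqrt Real.pi) *
        (∫⁻ ω, ENNReal.ofReal (Real.exp (s ^ 2 * Z ω ^ 2)) ∂Pr)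
        = ∫⁻ ω, (∫⁻ t : ℝ, ENNReal.ofReal (Real.exp (-t ^ 2 + 2 * s * Z ω * t))) ∂Pr :=
          hLHS.symm
      _ = ∫⁻ t : ℝ, ∫⁻ ω, ENNReal.ofReal (Real.exp (-t ^ 2 + 2 * s * Z ω * t)) ∂Pr := hswap
      _ ≤ ENNReal.ofReal (Real.sqrt (Real.pi / c)) := houter
      _ ≤ ENNReal.ofReal (Real.sqrt Real.pi * Real.exp (49 * M ^ 2 * s ^ 2)) :=
          ENNReal.ofReal_le_ofReal (by rw [hθ2] at hreal; exact hreal)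
      _ = ENNReal.ofReal (Real.sqrt Real.pi) * ENNReal.ofReal (Real.exp (49 * M ^ 2 * s ^ 2)) :=
          ENNReal.ofReal_mul (Real.sqrt_nonneg _)
  exact (ENNReal.mul_le_mul_iff_right hπne ENNReal.ofReal_ne_top).mp hmain
end

section
/- From MGF of the square to sub-Gaussian MGF (Lemma EC.12): if E[e^{λ²Z²}] ≤ e^{M²λ²} for all λ ∈ ℝ with |λ| ≤ 1/M, then for every θ ∈ ℝ: E[e^{θZ}] ≤ e^{M²θ²}. -/
open MeasureTheory

lemma exp_le_add_exp_sq (x : ℝ) : Real.exp x ≤ x + Real.exp (x ^ 2) := by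
  have hadd : 1 + x ^ 2 ≤ Real.exp (x ^ 2) := by
    have := Real.add_one_le_exp (x ^ 2); linarith
  rcases le_or_gt |x| 1 with h | h
  · have hb := Real.exp_bound h (n := 2) (by norm_num)
    have hs : ∑ m ∈ Finset.range 2, x ^ m / m.factorial = 1 + x := by
      simp [Finset.sum_range_succ]
    rw [hs] at hb
    have h2 := (abs_le.mp hb).2
    have hsq : |x| ^ 2 = x ^ 2 := sq_abs x
    rw [hsq] at h2
    norm_num [Nat.factorial] at h2
    nlinarith
  · rcases le_or_gt 0 x with hx | hx
    · have hxx : x ≤ x ^ 2 := by nlinarith [abs_of_nonneg hx]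
      have := Real.exp_le_exp.mpr hxx
      linarith
    · have h1 : Real.exp x ≤ 1 := Real.exp_le_one_iff.mpr hx.le
      have hxx : -x ≤ x ^ 2 := by nlinarith [abs_of_neg hx]
      linarith

/-- From an MGF bound for the square to a sub-Gaussian MGF bound: if `Z` is mean-zero and
`E[exp (λ² Z²)] ≤ exp (M² λ²)` for all real `λ` with `|λ| ≤ 1/M`, then for every real `θ`,
`E[exp (θ Z)] ≤ exp (M² θ²)`. -/
theorem subgaussian_mgf_of_mgf_square
    {Ω : Type*} [MeasurableSpace Ω] (Pr : Measure Ω) [IsProbabilityMeasure Pr]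
    (M : ℝ) (hM : 0 < M)
    (Z : Ω → ℝ) (hZmeas : Measurable Z) (hZint : Integrable Z Pr)
    (hZmean : ∫ ω, Z ω ∂Pr = 0)
    (hmgfsq : ∀ lam : ℝ, |lam| ≤ 1 / M →
      ∫⁻ ω, ENNReal.ofReal (Real.exp (lam ^ 2 * Z ω ^ 2)) ∂Pr ≤
        ENNReal.ofReal (Real.exp (M ^ 2 * lam ^ 2))) :
    ∀ θ : ℝ,
      ∫⁻ ω, ENNReal.ofReal (Real.exp (θ * Z ω)) ∂Pr ≤
        ENNReal.ofReal (Real.exp (M ^ 2 * θ ^ 2)) := by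
  intro θ
  rcases le_or_gt |θ| (1 / M) with hθ | hθ
  · -- small θ: use exp t ≤ t + exp t²
    have hmeas1 : Measurable fun ω => Real.exp (θ ^ 2 * Z ω ^ 2) := by
      exact (Real.measurable_exp.comp ((hZmeas.pow_const 2).const_mul _))
    have hfin : ∫⁻ ω, ENNReal.ofReal (Real.exp (θ ^ 2 * Z ω ^ 2)) ∂Pr < ⊤ :=
      lt_of_le_of_lt (hmgfsq θ hθ) ENNReal.ofReal_lt_top
    have hint1 : Integrable (fun ω => Real.exp (θ ^ 2 * Z ω ^ 2)) Pr := by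
      refine ⟨hmeas1.aestronglyMeasurable, ?_⟩
      rw [hasFiniteIntegral_iff_ofReal (ae_of_all _ fun ω => (Real.exp_pos _).le)]
      exact hfin
    have hptw : ∀ ω, Real.exp (θ * Z ω) ≤ θ * Z ω + Real.exp (θ ^ 2 * Z ω ^ 2) := by
      intro ω
      have h := exp_le_add_exp_sq (θ * Z ω)
      rwa [mul_pow] at h
    have hintg : Integrable (fun ω => θ * Z ω + Real.exp (θ ^ 2 * Z ω ^ 2)) Pr :=
      (hZint.const_mul θ).add hint1
    have hint2 : Integrable (fun ω => Real.exp (θ * Z ω)) Pr := by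
      refine Integrable.mono' hintg
        (Real.measurable_exp.comp (hZmeas.const_mul θ)).aestronglyMeasurable ?_
      filter_upwards with ω
      rw [Real.norm_eq_abs, abs_of_pos (Real.exp_pos _)]
      exact hptw ω
    rw [← ofReal_integral_eq_lintegral_ofReal hint2 (ae_of_all _ fun ω => (Real.exp_pos _).le)]
    apply ENNReal.ofReal_le_ofReal
    have hI : ∫ ω, Real.exp (θ * Z ω) ∂Pr
        ≤ ∫ ω, (θ * Z ω + Real.exp (θ ^ 2 * Z ω ^ 2)) ∂Pr :=
      integral_mono hint2 hintg hptw
    have hsum : ∫ ω, (θ * Z ω + Real.exp (θ ^ 2 * Z ω ^ 2)) ∂Pr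
        = ∫ ω, Real.exp (θ ^ 2 * Z ω ^ 2) ∂Pr := by
      rw [integral_add (hZint.const_mul θ) hint1, integral_const_mul, hZmean]
      ring
    have hto : ∫ ω, Real.exp (θ ^ 2 * Z ω ^ 2) ∂Pr ≤ Real.exp (M ^ 2 * θ ^ 2) := by
      have h := hmgfsq θ hθ
      rw [← ofReal_integral_eq_lintegral_ofReal hint1
        (ae_of_all _ fun ω => (Real.exp_pos _).le)] at h
      exact (ENNReal.ofReal_le_ofReal_iff (Real.exp_pos _).le).mp h
    linarith
  · -- large θ
    set lam : ℝ := 1 / (M * Real.sqrt 2) with hlamdef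
    have hs2 : (0:ℝ) < Real.sqrt 2 := Real.sqrt_pos.mpr (by norm_num)
    have hlampos : 0 < lam := by positivity
    have hlam : |lam| ≤ 1 / M := by
      rw [abs_of_pos hlampos, hlamdef]
      apply div_le_div_of_nonneg_left one_pos.le hM
      nlinarith [Real.one_le_sqrt.mpr (by norm_num : (1:ℝ) ≤ 2)]
    have hlamsq : lam ^ 2 = 1 / (2 * M ^ 2) := by
      rw [hlamdef]
      rw [div_pow, mul_pow, Real.sq_sqrt (by norm_num : (0:ℝ) ≤ 2)]
      ring_nf
    have hθsq : 1 ≤ M ^ 2 * θ ^ 2 := by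
      have h1 : 1 / M < |θ| := hθ
      have : 1 < M * |θ| := by
        rw [div_lt_iff₀ hM] at h1; nlinarith
      nlinarith [sq_abs θ, abs_nonneg θ]
    have hptw : ∀ ω, Real.exp (θ * Z ω)
        ≤ Real.exp (M ^ 2 * θ ^ 2 / 2) * Real.exp (lam ^ 2 * Z ω ^ 2) := by
      intro ω
      rw [← Real.exp_add]
      apply Real.exp_le_exp.mpr
      rw [hlamsq, ← sub_nonneg]
      have heq : M ^ 2 * θ ^ 2 / 2 + 1 / (2 * M ^ 2) * Z ω ^ 2 - θ * Z ω
          = (M ^ 2 * θ - Z ω) ^ 2 / (2 * M ^ 2) := by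
        field_simp
        ring
      rw [heq]
      positivity
    calc ∫⁻ ω, ENNReal.ofReal (Real.exp (θ * Z ω)) ∂Pr
        ≤ ∫⁻ ω, ENNReal.ofReal (Real.exp (M ^ 2 * θ ^ 2 / 2))
            * ENNReal.ofReal (Real.exp (lam ^ 2 * Z ω ^ 2)) ∂Pr := by
          apply lintegral_mono
          intro ω
          dsimp only
          rw [← ENNReal.ofReal_mul (Real.exp_pos _).le]
          exact ENNReal.ofReal_le_ofReal (hptw ω)
      _ = ENNReal.ofReal (Real.exp (M ^ 2 * θ ^ 2 / 2))
            * ∫⁻ ω, ENNReal.ofReal (Real.exp (lam ^ 2 * Z ω ^ 2)) ∂Pr :=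
          lintegral_const_mul _ (by
            exact (Real.measurable_exp.comp ((hZmeas.pow_const 2).const_mul _)).ennreal_ofReal)
      _ ≤ ENNReal.ofReal (Real.exp (M ^ 2 * θ ^ 2 / 2))
            * ENNReal.ofReal (Real.exp (M ^ 2 * lam ^ 2)) :=
          mul_le_mul_right (hmgfsq lam hlam) _
      _ ≤ ENNReal.ofReal (Real.exp (M ^ 2 * θ ^ 2)) := by
          rw [← ENNReal.ofReal_mul (Real.exp_pos _).le, ← Real.exp_add]
          apply ENNReal.ofReal_le_ofReal
          apply Real.exp_le_exp.mpr
          have : M ^ 2 * lam ^ 2 = 1 / 2 := by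
            rw [hlamsq]; field_simp
          rw [this]
          linarith
end

section
/- Asymptotic tightness is the best possible (binomial instance, Extended Results EC.6): let K be an integer with K ≥ 72π and let B₁,…,B_K be i.i.d. random variables with P(B_k = 1) = P(B_k = 0) = 1/2. Then E[ min( Σ_{k=1}^K B_k , K/2 ) ] ≤ (K/2)·(1 − 1/√(26K)). -/
/-!
On each of the `2^K` atoms where the bits spell out a fixed pattern `T ⊆ {1,…,K}` the integrand
is `min(#T, K/2)`, and independence gives every atom probability `2^{-K}`; so the expectation is
`K/2 - E[(K/2 - S)⁺]` with `S ∼ Bin(K, 1/2)`. Writing `n = ⌊K/2⌋`, the identity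
`(K - 2j) C(K,j) = (j+1) C(K,j+1) - j C(K,j)` telescopes this shortfall to
`(n+1) C(K,n+1) / 2^{K+1}`, which is `n C(2n,n)/(2·4^n)` or `(2n+1) C(2n,n)/4^{n+1}` by parity.
The Wallis-type bound `16^n ≤ (4n+1) C(2n,n)²` then makes its square at least
`K/104 = ((K/2)/√(26K))²`.
-/

open MeasureTheory Finset

section FairBits

variable {Ω ι : Type*} [DecidableEq ι] {B : ι → Ω → ℕ} {I T : Finset ι} {ω : Ω}

def bitPatternSet (B : ι → Ω → ℕ) (I T : Finset ι) : Set Ω :=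
  {ω | ∀ k ∈ I, B k ω = if k ∈ T then 1 else 0}

theorem sum_eq_card_of_mem_bitPatternSet (hT : T ⊆ I) (hω : ω ∈ bitPatternSet B I T) :
    ∑ k ∈ I, B k ω = #T := by
  rw [sum_congr rfl hω, sum_boole, filter_mem_eq_inter, inter_eq_right.2 hT, Nat.cast_id]

theorem mem_bitPatternSet_filter (h01 : ∀ k ∈ I, B k ω ≤ 1) :
    ω ∈ bitPatternSet B I {k ∈ I | B k ω = 1} := by
  intro k hk
  have := h01 k hk
  split_ifs with h <;> simp only [mem_filter, hk, true_and] at h <;> omega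

theorem eq_filter_of_mem_bitPatternSet (hT : T ⊆ I) (hω : ω ∈ bitPatternSet B I T) :
    T = {k ∈ I | B k ω = 1} := by
  ext k
  rw [mem_filter]
  refine ⟨fun hk => ⟨hT hk, by simpa [hk] using hω k (hT hk)⟩, fun ⟨hkI, hk⟩ => ?_⟩
  by_contra hkT
  simpa [hkT, hk] using hω k hkI

theorem comp_sum_eq_sum_indicator_bitPatternSet (h01 : ∀ k ∈ I, B k ω ≤ 1) (g : ℕ → ℝ) :
    g (∑ k ∈ I, B k ω) =
      ∑ T ∈ I.powerset, (bitPatternSet B I T).indicator (fun _ => g #T) ω := by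
  have hmem := mem_bitPatternSet_filter h01
  rw [sum_eq_single_of_mem _ (mem_powerset.2 (filter_subset _ I)) fun T hT hne =>
      Set.indicator_of_notMem (fun hω => hne (eq_filter_of_mem_bitPatternSet
        (mem_powerset.1 hT) hω)) _,
    Set.indicator_of_mem hmem, sum_eq_card_of_mem_bitPatternSet (filter_subset _ I) hmem]

variable [MeasurableSpace Ω] {μ : Measure Ω}

theorem measurableSet_bitPatternSet (hB : ∀ k ∈ I, Measurable (B k)) :
    MeasurableSet (bitPatternSet B I T) := by
  have h : bitPatternSet B I T = ⋂ k ∈ I, B k ⁻¹' {if k ∈ T then 1 else 0} := by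
    ext; simp [bitPatternSet]
  rw [h]
  exact Finset.measurableSet_biInter I fun k hk => hB k hk (measurableSet_singleton _)

theorem measure_bitPatternSet (hone : ∀ k ∈ I, μ {ω | B k ω = 1} = 1 / 2)
    (hzero : ∀ k ∈ I, μ {ω | B k ω = 0} = 1 / 2)
    (hindep : ∀ v : ι → ℕ, μ {ω | ∀ k ∈ I, B k ω = v k} = ∏ k ∈ I, μ {ω | B k ω = v k}) :
    μ (bitPatternSet B I T) = (1 / 2) ^ #I := by
  rw [bitPatternSet, hindep, ← prod_const]
  refine prod_congr rfl fun k hk => ?_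
  split_ifs
  exacts [hone k hk, hzero k hk]

theorem integral_comp_sum_of_fair_bits [IsFiniteMeasure μ] (hB : ∀ k ∈ I, Measurable (B k))
    (h01 : ∀ k ∈ I, ∀ ω, B k ω ≤ 1) (hone : ∀ k ∈ I, μ {ω | B k ω = 1} = 1 / 2)
    (hzero : ∀ k ∈ I, μ {ω | B k ω = 0} = 1 / 2)
    (hindep : ∀ v : ι → ℕ, μ {ω | ∀ k ∈ I, B k ω = v k} = ∏ k ∈ I, μ {ω | B k ω = v k})
    (g : ℕ → ℝ) :
    ∫ ω, g (∑ k ∈ I, B k ω) ∂μ =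
      (1 / 2) ^ #I * ∑ j ∈ range (#I + 1), ((#I).choose j : ℝ) * g j := by
  simp_rw [fun ω => comp_sum_eq_sum_indicator_bitPatternSet (fun k hk => h01 k hk ω) g]
  rw [integral_finsetSum _ fun T _ =>
      (integrable_const _).indicator (measurableSet_bitPatternSet hB)]
  simp_rw [integral_indicator_const _ (measurableSet_bitPatternSet hB), Measure.real,
    measure_bitPatternSet hone hzero hindep, smul_eq_mul, ← mul_sum]
  rw [sum_powerset_apply_card (fun j => g j)]
  simp [nsmul_eq_mul, ENNReal.toReal_pow]

end FairBits

namespace Nat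

theorem cast_succ_mul_choose_succ (K j : ℕ) :
    ((j + 1) * K.choose (j + 1) : ℝ) = (K - j) * K.choose j := by
  rcases le_or_gt j K with hj | hj
  · have h := congrArg (Nat.cast (R := ℝ)) (K.choose_succ_right_eq j)
    push_cast [Nat.cast_sub hj] at h
    linarith
  · simp [Nat.choose_eq_zero_of_lt hj, Nat.choose_eq_zero_of_lt (hj.trans (lt_add_one j))]

theorem sum_range_sub_two_mul_mul_choose (K m : ℕ) :
    ∑ j ∈ range (m + 1), ((K : ℝ) - 2 * j) * K.choose j = (m + 1) * K.choose (m + 1) := by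
  have h := Finset.sum_range_sub (fun j : ℕ => (j * K.choose j : ℝ)) (m + 1)
  push_cast at h
  rw [zero_mul, sub_zero] at h
  rw [← h]
  refine sum_congr rfl fun j _ => ?_
  rw [cast_succ_mul_choose_succ]
  ring

theorem sum_choose_mul_tsub (K : ℕ) :
    ∑ j ∈ range (K + 1), (K.choose j : ℝ) * ((K - 2 * j : ℕ) : ℝ) =
      (K / 2 + 1 : ℕ) * K.choose (K / 2 + 1) := by
  rw [← sum_subset (range_subset_range.2 (by omega : K / 2 + 1 ≤ K + 1)) fun j _ hj => by
      rw [mem_range] at hj; simp [Nat.sub_eq_zero_of_le (by omega : K ≤ 2 * j)]]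
  push_cast
  rw [← sum_range_sub_two_mul_mul_choose]
  refine sum_congr rfl fun j hj => ?_
  rw [Nat.cast_sub (by rw [mem_range] at hj; omega)]
  push_cast
  ring

theorem sixteen_pow_le_mul_centralBinom_sq (n : ℕ) :
    16 ^ n ≤ (4 * n + 1) * n.centralBinom ^ 2 := by
  induction n with
  | zero => simp
  | succ n ih =>
    have hrec := Nat.succ_mul_centralBinom_succ n
    refine Nat.le_of_mul_le_mul_left (c := (n + 1) ^ 2) ?_ (by positivity)
    calc (n + 1) ^ 2 * 16 ^ (n + 1) = 16 * (n + 1) ^ 2 * 16 ^ n := by ring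
      _ ≤ 16 * (n + 1) ^ 2 * ((4 * n + 1) * n.centralBinom ^ 2) := by gcongr
      _ = 16 * (n + 1) ^ 2 * (4 * n + 1) * n.centralBinom ^ 2 := by ring
      _ ≤ 4 * (4 * (n + 1) + 1) * (2 * n + 1) ^ 2 * n.centralBinom ^ 2 :=
        Nat.mul_le_mul_right _ (by nlinarith)
      _ = (4 * (n + 1) + 1) * ((n + 1) * (n + 1).centralBinom) ^ 2 := by rw [hrec]; ring
      _ = (n + 1) ^ 2 * ((4 * (n + 1) + 1) * (n + 1).centralBinom ^ 2) := by ring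

end Nat

-- `K - 2 * j` is truncated subtraction, i.e. the positive part of `K - 2j`.
theorem min_natCast_half_eq (K j : ℕ) :
    min (j : ℝ) (K / 2) = K / 2 - ((K - 2 * j : ℕ) : ℝ) / 2 := by
  rcases le_or_gt (2 * j) K with h | h
  · rw [min_eq_left (by rw [le_div_iff₀ two_pos]; exact_mod_cast (by omega : j * 2 ≤ K)),
      Nat.cast_sub h]
    push_cast
    ring
  · rw [min_eq_right (by rw [div_le_iff₀ two_pos]; exact_mod_cast (by omega : K ≤ j * 2)),
      Nat.sub_eq_zero_of_le h.le]
    simp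

/-- `E[(K/2 - S)⁺]` for `S ∼ Bin(K, 1/2)`. -/
noncomputable def binomialShortfall (K : ℕ) : ℝ :=
  ((K / 2 + 1) * K.choose (K / 2 + 1) : ℕ) / 2 ^ (K + 1)

theorem half_pow_mul_sum_choose_mul_min (K : ℕ) :
    (1 / 2 : ℝ) ^ K * ∑ j ∈ range (K + 1), (K.choose j : ℝ) * min (j : ℝ) (K / 2) =
      K / 2 - binomialShortfall K := by
  have hsum : ∑ j ∈ range (K + 1), (K.choose j : ℝ) = 2 ^ K := by
    exact_mod_cast K.sum_range_choose
  have hsplit : ∑ j ∈ range (K + 1), (K.choose j : ℝ) * min (j : ℝ) (K / 2) =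
      2 ^ K * (K / 2) - ((K / 2 + 1 : ℕ) * K.choose (K / 2 + 1) : ℝ) / 2 := by
    simp_rw [min_natCast_half_eq, mul_sub, sum_sub_distrib, ← sum_mul, hsum, mul_div, ← sum_div,
      Nat.sum_choose_mul_tsub]
  rw [hsplit, binomialShortfall, pow_succ, Nat.cast_mul, one_div, inv_pow]
  field_simp

theorem div_le_sq_binomialShortfall (K : ℕ) : (K : ℝ) / 104 ≤ binomialShortfall K ^ 2 := by
  have hcb (n : ℕ) : (16 : ℝ) ^ n ≤ (4 * n + 1) * n.centralBinom ^ 2 := by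
    exact_mod_cast n.sixteen_pow_le_mul_centralBinom_sq
  have h4 (n : ℕ) : ((2 : ℝ) ^ (2 * n + 1)) ^ 2 = 4 * 16 ^ n := by
    rw [← pow_mul, show (2 * n + 1) * 2 = 4 * n + 2 by ring, pow_add, pow_mul]
    norm_num
    ring
  obtain ⟨n, rfl | rfl⟩ := K.even_or_odd'
  · have h : (n + 1) * (2 * n).choose (n + 1) = n * n.centralBinom := by
      have := (2 * n).choose_succ_right_eq n
      rw [show 2 * n - n = n by omega] at this
      rw [Nat.centralBinom_eq_two_mul_choose]
      linarith
    rw [binomialShortfall, show 2 * n / 2 = n by omega, h, div_pow, le_div_iff₀ (by positivity),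
      h4]
    push_cast
    have hc : (0 : ℝ) ≤ n.centralBinom ^ 2 := by positivity
    have hn : (n : ℝ) ≤ n ^ 2 := by exact_mod_cast Nat.le_self_pow two_ne_zero n
    nlinarith [mul_le_mul_of_nonneg_left (hcb n) n.cast_nonneg, mul_le_mul_of_nonneg_right hn hc]
  · have h : (n + 1) * (2 * n + 1).choose (n + 1) = (2 * n + 1) * n.centralBinom := by
      rw [Nat.centralBinom_eq_two_mul_choose, Nat.add_one_mul_choose_eq]
      ring
    rw [binomialShortfall, show (2 * n + 1) / 2 = n by omega, h, div_pow,
      le_div_iff₀ (by positivity), pow_succ _ (2 * n + 1), mul_pow, h4]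
    push_cast
    have hc : (0 : ℝ) ≤ n.centralBinom ^ 2 := by positivity
    nlinarith [mul_le_mul_of_nonneg_left (hcb n) (by positivity : (0 : ℝ) ≤ 2 * n + 1)]

theorem binomial_min_capacity_bound_general
    {Ω : Type*} [MeasurableSpace Ω] (Pr : Measure Ω) [IsProbabilityMeasure Pr]
    (K : ℕ)
    (B : ℕ → Ω → ℕ) (hBmeas : ∀ k, Measurable (B k))
    (hB01 : ∀ k ∈ Finset.Icc 1 K, ∀ ω, B k ω ≤ 1)
    (hBone : ∀ k ∈ Finset.Icc 1 K, Pr {ω | B k ω = 1} = 1 / 2)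
    (hBzero : ∀ k ∈ Finset.Icc 1 K, Pr {ω | B k ω = 0} = 1 / 2)
    (hBindep : ∀ v : ℕ → ℕ,
      Pr {ω | ∀ k ∈ Finset.Icc 1 K, B k ω = v k} =
        ∏ k ∈ Finset.Icc 1 K, Pr {ω | B k ω = v k}) :
    ∫ ω, min (∑ k ∈ Finset.Icc 1 K, (B k ω : ℝ)) ((K : ℝ) / 2) ∂Pr ≤
      ((K : ℝ) / 2) * (1 - 1 / Real.sqrt (26 * K)) := by
  have hlaw := integral_comp_sum_of_fair_bits (fun k _ => hBmeas k) hB01 hBone hBzero hBindep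
    fun s => min (s : ℝ) (K / 2)
  simp only [Nat.card_Icc, add_tsub_cancel_right, Nat.cast_sum] at hlaw
  rw [hlaw, half_pow_mul_sum_choose_mul_min, mul_one_sub, sub_le_sub_iff_left]
  have hsq : ((K : ℝ) / 2 * (1 / Real.sqrt (26 * K))) ^ 2 = K / 104 := by
    rcases K.eq_zero_or_pos with rfl | hK
    · simp
    rw [mul_pow, div_pow, one_div, inv_pow, Real.sq_sqrt (by positivity)]
    field_simp
    ring
  have hnonneg : 0 ≤ binomialShortfall K := by unfold binomialShortfall; positivity
  exact (pow_le_pow_iff_left₀ (by positivity) hnonneg two_ne_zero).1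
    (hsq ▸ div_le_sq_binomialShortfall K)

/-- Binomial instance showing the asymptotic tightness is best possible: for `K ≥ 72π` and
i.i.d. Bernoulli(1/2) random variables `B₁,…,B_K`,
`E[min (Σ_{k=1}^K B_k, K/2)] ≤ (K/2) (1 − 1/√(26 K))`. -/
theorem binomial_min_capacity_bound
    {Ω : Type*} [MeasurableSpace Ω] (Pr : Measure Ω) [IsProbabilityMeasure Pr]
    (K : ℕ) (hK : 72 * Real.pi ≤ (K : ℝ))
    (B : ℕ → Ω → ℕ) (hBmeas : ∀ k, Measurable (B k))
    (hB01 : ∀ k ∈ Finset.Icc 1 K, ∀ ω, B k ω ≤ 1)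
    (hBone : ∀ k ∈ Finset.Icc 1 K, Pr {ω | B k ω = 1} = 1 / 2)
    (hBzero : ∀ k ∈ Finset.Icc 1 K, Pr {ω | B k ω = 0} = 1 / 2)
    (hBindep : ∀ v : ℕ → ℕ,
      Pr {ω | ∀ k ∈ Finset.Icc 1 K, B k ω = v k} =
        ∏ k ∈ Finset.Icc 1 K, Pr {ω | B k ω = v k}) :
    ∫ ω, min (∑ k ∈ Finset.Icc 1 K, (B k ω : ℝ)) ((K : ℝ) / 2) ∂Pr ≤
      ((K : ℝ) / 2) * (1 - 1 / Real.sqrt (26 * K)) :=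
  binomial_min_capacity_bound_general Pr K B hBmeas hB01 hBone hBzero hBindep
end
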